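/- arXiv:2204.10257 — 8 statements merged into one kernel-verified Lean document; each statement's English description precedes it below -/
import Mathlib

section
/- Let g_1, ..., g_n be smooth real-valued functions on an open interval J such that g_1 never vanishes on J, and set f_i = g_i / g_1 for 2 ≤ i ≤ n. Then for any points t_1, ..., t_l in J (with l = n), the determinant of the n×n matrix with entries g_i(t_j) equals the product of g_1(t_i) over i = 1, ..., l, times the iterated integral from t_1 to t_2, ..., from t_{l-1} to t_l, of the determinant of the (l-1)×(l-1) matrix with entries f'_i(s_j) for 2 ≤ i ≤ n, integrated in ds_1 ... ds_{l-1}. -/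
open MeasureTheory

/-- Iterated integral: `iterInt m F t = ∫_{t_0}^{t_1} ⋯ ∫_{t_{m-1}}^{t_m} F(s) ds`. -/
noncomputable def iterInt : (m : ℕ) → ((Fin m → ℝ) → ℝ) → (Fin (m + 1) → ℝ) → ℝ
  | 0, F, _ => F ![]
  | m + 1, F, t =>
      ∫ s in (t 0)..(t 1), iterInt m (fun u => F (Fin.cons s u)) (fun i => t i.succ)

lemma iterInt_zero (F : (Fin 0 → ℝ) → ℝ) (t : Fin 1 → ℝ) : iterInt 0 F t = F ![] := rfl

lemma iterInt_succ (m : ℕ) (F : (Fin (m+1) → ℝ) → ℝ) (t : Fin (m+2) → ℝ) :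
    iterInt (m+1) F t =
      ∫ s in (t 0)..(t 1), iterInt m (fun u => F (Fin.cons s u)) (fun i => t i.succ) := rfl

lemma continuous_finCons (m : ℕ) :
    Continuous (fun p : ℝ × (Fin m → ℝ) => (Fin.cons p.1 p.2 : Fin (m+1) → ℝ)) := by
  apply continuous_pi
  intro i
  refine Fin.cases ?_ ?_ i
  · simpa using continuous_fst
  · intro j
    simpa using (continuous_apply j).comp' continuous_snd

lemma iterInt_continuous :
    ∀ (m : ℕ) {X : Type} [TopologicalSpace X] (G : X → (Fin m → ℝ) → ℝ),
      Continuous (fun p : X × (Fin m → ℝ) => G p.1 p.2) →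
      ∀ (t : Fin (m + 1) → ℝ), Continuous fun x => iterInt m (G x) t := by
  intro m
  induction m with
  | zero =>
      intro X _ G hG t
      simp only [iterInt_zero]
      exact hG.comp (continuous_id.prodMk continuous_const)
  | succ m IH =>
      intro X _ G hG t
      simp only [iterInt_succ]
      have hmap : Continuous (fun q : (X × ℝ) × (Fin m → ℝ) =>
          (q.1.1, (Fin.cons q.1.2 q.2 : Fin (m+1) → ℝ))) :=
        (continuous_fst.fst).prodMk
          ((continuous_finCons m).comp ((continuous_fst.snd).prodMk continuous_snd))
      have key := IH (fun p : X × ℝ => fun u => G p.1 (Fin.cons p.2 u))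
        (hG.comp hmap) (fun i => t i.succ)
      exact intervalIntegral.continuous_parametric_intervalIntegral_of_continuous'
        (f := fun x s => iterInt m (fun u => G x (Fin.cons s u)) (fun i => t i.succ))
        key (t 0) (t 1)

lemma iterInt_congr :
    ∀ (m : ℕ) (F F' : (Fin m → ℝ) → ℝ) (t : Fin (m + 1) → ℝ),
      (∀ u : Fin m → ℝ, (∀ j : Fin m, u j ∈ Set.uIcc (t j.castSucc) (t j.succ)) → F u = F' u) →
      iterInt m F t = iterInt m F' t := by
  intro m
  induction m with
  | zero =>
      intro F F' t h
      simp only [iterInt_zero]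
      exact h ![] (fun j => j.elim0)
  | succ m IH =>
      intro F F' t h
      simp only [iterInt_succ]
      apply intervalIntegral.integral_congr
      intro s hs
      apply IH
      intro u hu
      apply h
      intro k
      refine Fin.cases ?_ ?_ k
      · simpa using hs
      · intro j
        have := hu j
        simpa only [Fin.cons_succ, Fin.succ_castSucc] using this

lemma iterInt_sum_mul :
    ∀ (m : ℕ) {ι : Type} [Fintype ι] (c : ι → ℝ) (F : ι → (Fin m → ℝ) → ℝ),
      (∀ i, Continuous (F i)) → ∀ (t : Fin (m + 1) → ℝ),
      iterInt m (fun u => ∑ i, c i * F i u) t = ∑ i, c i * iterInt m (F i) t := by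
  intro m
  induction m with
  | zero =>
      intro ι _ c F hF t
      simp [iterInt_zero]
  | succ m IH =>
      intro ι _ c F hF t
      simp only [iterInt_succ]
      have hcont : ∀ i, Continuous fun s =>
            iterInt m (fun u => F i (Fin.cons s u)) (fun k => t k.succ) := by
        intro i
        exact iterInt_continuous m (fun s u => F i (Fin.cons s u))
          ((hF i).comp (continuous_finCons m)) _
      calc (∫ s in (t 0)..(t 1),
              iterInt m (fun u => ∑ i, c i * F i (Fin.cons s u)) (fun k => t k.succ))
          = ∫ s in (t 0)..(t 1),
              ∑ i, c i * iterInt m (fun u => F i (Fin.cons s u)) (fun k => t k.succ) := by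
            apply intervalIntegral.integral_congr
            intro s _
            exact IH c (fun i u => F i (Fin.cons s u))
              (fun i => (hF i).comp ((continuous_finCons m).comp
                (continuous_const.prodMk continuous_id))) _
        _ = ∑ i, ∫ s in (t 0)..(t 1),
              c i * iterInt m (fun u => F i (Fin.cons s u)) (fun k => t k.succ) := by
            apply intervalIntegral.integral_finset_sum
            intro i _
            exact ((continuous_const.mul (hcont i)).intervalIntegrable _ _)
        _ = ∑ i, c i * iterInt (m+1) (F i) t := by
            refine Finset.sum_congr rfl fun i _ => ?_
            rw [intervalIntegral.integral_const_mul, iterInt_succ]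

lemma key :
    ∀ (m : ℕ) (h : Fin m → ℝ → ℝ), (∀ i, Continuous (h i)) → ∀ (t : Fin (m + 1) → ℝ),
      Matrix.det (Matrix.of fun i j : Fin m => ∫ u in (t 0)..(t j.succ), h i u) =
      iterInt m (fun s => Matrix.det (Matrix.of fun i j : Fin m => h i (s j))) t := by
  intro m
  induction m with
  | zero =>
      intro h hh t
      simp [iterInt_zero]
  | succ m IH =>
      intro h hh t
      set t' : Fin (m + 1) → ℝ := fun k => t k.succ with ht'
      set N : Matrix (Fin (m+1)) (Fin (m+1)) ℝ := Matrix.of fun i j =>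
        Fin.cases (motive := fun _ => ℝ) (∫ u in (t 0)..(t 1), h i u)
          (fun j' => ∫ u in (t 1)..(t j'.succ.succ), h i u) j with hN
      set Ψ : Fin (m+1) → (Fin m → ℝ) → ℝ := fun i u =>
        Matrix.det (Matrix.of fun k j : Fin m => h (i.succAbove k) (u j)) with hΨ
      have hΨcont : ∀ i, Continuous (Ψ i) := by
        intro i
        apply Continuous.matrix_det
        exact continuous_matrix fun k j => (hh _).comp (continuous_apply j)
      -- the column-operation matrix
      set A : Matrix (Fin (m+1)) (Fin (m+1)) ℝ := 1 +
        Matrix.replicateCol Unit (fun k => if k = 0 then (1:ℝ) else 0) *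
          Matrix.replicateRow Unit (Fin.cases 0 fun _ => (1:ℝ)) with hA
      have hdetA : A.det = 1 := by
        rw [hA, Matrix.det_one_add_replicateCol_mul_replicateRow]
        rw [dotProduct]
        simp
      have hNA : ∀ i j, (N * A) i j = N i j + N i 0 * (Fin.cases (motive := fun _ => ℝ) 0 (fun _ => 1) j) := by
        intro i j
        rw [Matrix.mul_apply]
        have : ∀ k, N i k * A k j =
            (if k = j then N i k else 0) +
              (if k = 0 then N i k * (Fin.cases (motive := fun _ => ℝ) 0 (fun _ => 1) j) else 0) := by
          intro k
          rw [hA]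
          simp only [Matrix.add_apply, Matrix.one_apply, Matrix.mul_apply, Finset.univ_unique,
            Matrix.replicateCol_apply, Matrix.replicateRow_apply, Finset.sum_singleton]
          by_cases hk : k = j <;> by_cases hk0 : k = 0 <;> simp [hk, hk0, mul_add]
        rw [Finset.sum_congr rfl fun k _ => this k, Finset.sum_add_distrib,
          Finset.sum_ite_eq' Finset.univ j (fun k => N i k),
          Finset.sum_ite_eq' Finset.univ (0 : Fin (m+1)) (fun k => N i k * _)]
        simp
      have hD : (Matrix.of fun i j : Fin (m+1) => ∫ u in (t 0)..(t j.succ), h i u) = N * A := by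
        ext i j
        rw [hNA i j]
        refine Fin.cases ?_ ?_ j
        · simp [hN]
        · intro j'
          simp only [hN, Matrix.of_apply, Fin.cases_succ, Fin.cases_zero, mul_one,
            Matrix.of_apply]
          have h1 : IntervalIntegrable (h i) MeasureTheory.volume (t 0) (t 1) :=
            (hh i).intervalIntegrable _ _
          have h2 : IntervalIntegrable (h i) MeasureTheory.volume (t 1) (t j'.succ.succ) :=
            (hh i).intervalIntegrable _ _
          have := intervalIntegral.integral_add_adjacent_intervals h1 h2
          linarith
      have hsub : ∀ i : Fin (m+1),
          (N.submatrix i.succAbove Fin.succ).det = iterInt m (Ψ i) t' := by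
        intro i
        have h1 : N.submatrix i.succAbove Fin.succ =
            Matrix.of fun k j : Fin m => ∫ u in (t' 0)..(t' j.succ), h (i.succAbove k) u := by
          ext k j
          simp [hN, ht', Fin.succ_zero_eq_one]
        rw [h1]
        exact IH (fun k => h (i.succAbove k)) (fun k => hh _) t'
      -- LHS
      rw [hD, Matrix.det_mul, hdetA, mul_one, Matrix.det_succ_column_zero]
      -- RHS
      rw [iterInt_succ]
      have hinner : ∀ s : ℝ,
          iterInt m (fun u =>
            Matrix.det (Matrix.of fun i j : Fin (m+1) => h i ((Fin.cons s u : Fin (m+1) → ℝ) j))) t' =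
          ∑ i : Fin (m+1), ((-1) ^ (i : ℕ) * h i s) * iterInt m (Ψ i) t' := by
        intro s
        have hexp : ∀ u : Fin m → ℝ,
            Matrix.det (Matrix.of fun i j : Fin (m+1) => h i ((Fin.cons s u : Fin (m+1) → ℝ) j)) =
            ∑ i : Fin (m+1), ((-1) ^ (i : ℕ) * h i s) * Ψ i u := by
          intro u
          rw [Matrix.det_succ_column_zero]
          refine Finset.sum_congr rfl fun i _ => ?_
          have h2 : (Matrix.of fun i j : Fin (m+1) => h i ((Fin.cons s u : Fin (m+1) → ℝ) j)).submatrix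
              i.succAbove Fin.succ = Matrix.of fun k j : Fin m => h (i.succAbove k) (u j) := by
            ext k j
            simp
          rw [h2]
          simp only [Matrix.of_apply, Fin.cons_zero, hΨ]
        rw [iterInt_congr m _ _ t' (fun u _ => hexp u)]
        exact iterInt_sum_mul m _ Ψ hΨcont t'
      rw [intervalIntegral.integral_congr (g := fun s =>
        ∑ i : Fin (m+1), ((-1) ^ (i : ℕ) * h i s) * iterInt m (Ψ i) t')
        (fun s _ => hinner s)]
      rw [intervalIntegral.integral_finset_sum (f := fun (i : Fin (m+1)) s =>
          ((-1) ^ (i : ℕ) * h i s) * iterInt m (Ψ i) t') (fun (i : Fin (m+1)) _ =>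
        (((continuous_const.mul (hh i)).mul continuous_const : Continuous fun s =>
          ((-1) ^ (i : ℕ) * h i s) * iterInt m (Ψ i) t').intervalIntegrable _ _))]
      refine Finset.sum_congr rfl fun i _ => ?_
      have : (fun s => ((-1) ^ (i : ℕ) * h i s) * iterInt m (Ψ i) t') =
          fun s => ((-1) ^ (i : ℕ) * iterInt m (Ψ i) t') * h i s := by
        funext s; ring
      rw [this, intervalIntegral.integral_const_mul, hsub i]
      have hN0 : N i 0 = ∫ u in (t 0)..(t 1), h i u := by simp [hN]
      rw [hN0]
      ring

lemma key2 (m : ℕ) (h : Fin m → ℝ → ℝ) (hh : ∀ i, Continuous (h i)) (c : Fin m → ℝ)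
    (t : Fin (m + 1) → ℝ) :
    Matrix.det (Matrix.of fun i j : Fin (m+1) =>
      Fin.cases (motive := fun _ => ℝ) 1 (fun i' => c i' + ∫ u in (t 0)..(t j), h i' u) i) =
    iterInt m (fun s => Matrix.det (Matrix.of fun i j : Fin m => h i (s j))) t := by
  set B : Matrix (Fin (m+1)) (Fin (m+1)) ℝ := Matrix.of fun i j =>
    Fin.cases (motive := fun _ => ℝ) 1 (fun i' => ∫ u in (t 0)..(t j), h i' u) i with hB
  set A : Matrix (Fin (m+1)) (Fin (m+1)) ℝ := 1 +
    Matrix.replicateCol Unit (Fin.cases 0 c) * Matrix.replicateRow Unit (fun j => if j = 0 then (1:ℝ) else 0)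
    with hA
  have hdetA : A.det = 1 := by
    rw [hA, Matrix.det_one_add_replicateCol_mul_replicateRow, dotProduct]
    simp
  have hAB : ∀ i j, (A * B) i j = B i j + (Fin.cases (motive := fun _ => ℝ) 0 c i) * B 0 j := by
    intro i j
    rw [Matrix.mul_apply]
    have : ∀ k, A i k * B k j =
        (if k = i then B k j else 0) +
          (if k = 0 then (Fin.cases (motive := fun _ => ℝ) 0 c i) * B k j else 0) := by
      intro k
      rw [hA]
      simp only [Matrix.add_apply, Matrix.one_apply, Matrix.mul_apply, Finset.univ_unique,
        Matrix.replicateCol_apply, Matrix.replicateRow_apply, Finset.sum_singleton]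
      by_cases hk : i = k <;> by_cases hk0 : k = 0 <;>
        simp [hk, hk0, eq_comm, add_mul]
    rw [Finset.sum_congr rfl fun k _ => this k, Finset.sum_add_distrib,
      Finset.sum_ite_eq' Finset.univ i (fun k => B k j),
      Finset.sum_ite_eq' Finset.univ (0 : Fin (m+1)) (fun k => _ * B k j)]
    simp
  have hM : (Matrix.of fun i j : Fin (m+1) =>
      Fin.cases (motive := fun _ => ℝ) 1 (fun i' => c i' + ∫ u in (t 0)..(t j), h i' u) i)
      = A * B := by
    ext i j
    rw [hAB i j]
    refine Fin.cases ?_ ?_ i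
    · simp [hB]
    · intro i'
      simp only [hB, Matrix.of_apply, Fin.cases_succ, Fin.cases_zero, mul_one]
      ring
  rw [hM, Matrix.det_mul, hdetA, one_mul, Matrix.det_succ_column_zero]
  have hB0 : ∀ i : Fin (m+1), B i 0 =
      Fin.cases (motive := fun _ => ℝ) 1 (fun _ => 0) i := by
    intro i
    refine Fin.cases ?_ ?_ i
    · simp [hB]
    · intro i'
      simp [hB, intervalIntegral.integral_same]
  rw [Finset.sum_eq_single (0 : Fin (m+1))]
  · rw [hB0 0]
    simp only [Fin.cases_zero, Fin.val_zero, pow_zero, one_mul, Fin.succAbove_zero]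
    have : B.submatrix Fin.succ Fin.succ =
        Matrix.of fun k j : Fin m => ∫ u in (t 0)..(t j.succ), h k u := by
      ext k j
      simp [hB]
    rw [this]
    exact key m h hh t
  · intro i _ hi
    obtain ⟨i', rfl⟩ := Fin.exists_succ_eq.mpr (by simpa using hi)
    rw [hB0]
    simp
  · simp

/-- Dendrinos–Wright Lemma 5.1: the determinant of `(g_i(t_j))` equals the product of
`g_1(t_i)` times the iterated integral of the determinant of `(f_i'(s_j))`,
where `f_i = g_i / g_1`. -/
theorem statement0 (m : ℕ) (J : Set ℝ) (hJopen : IsOpen J) (hJconv : Convex ℝ J)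
    (g : Fin (m + 1) → ℝ → ℝ) (hg : ∀ i, ContDiffOn ℝ (⊤ : ℕ∞) (g i) J)
    (hg1 : ∀ t ∈ J, g 0 t ≠ 0)
    (f : Fin (m + 1) → ℝ → ℝ) (hf : ∀ i t, f i t = g i t / g 0 t)
    (t : Fin (m + 1) → ℝ) (ht : ∀ i, t i ∈ J) :
    Matrix.det (Matrix.of fun i j => g i (t j)) =
      (∏ i, g 0 (t i)) *
        iterInt m
          (fun s => Matrix.det (Matrix.of fun i j : Fin m => deriv (f i.succ) (s j))) t := by
  have hne : (Finset.univ : Finset (Fin (m + 1))).Nonempty := Finset.univ_nonempty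
  set a : ℝ := Finset.univ.inf' hne t with ha
  set b : ℝ := Finset.univ.sup' hne t with hb
  have hta : ∀ j, t j ∈ Set.Icc a b := fun j =>
    ⟨Finset.inf'_le _ (Finset.mem_univ j), Finset.le_sup' _ (Finset.mem_univ j)⟩
  have hab : a ≤ b := le_trans (hta 0).1 (hta 0).2
  have haJ : a ∈ J := by
    obtain ⟨i0, -, h0⟩ := Finset.exists_mem_eq_inf' hne t
    rw [ha, h0]; exact ht i0
  have hbJ : b ∈ J := by
    obtain ⟨i0, -, h0⟩ := Finset.exists_mem_eq_sup' hne t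
    rw [hb, h0]; exact ht i0
  have hIccJ : Set.Icc a b ⊆ J := hJconv.ordConnected.out haJ hbJ
  -- smoothness of f
  have hfC : ∀ i, ContDiffOn ℝ (⊤ : ℕ∞) (f i) J := by
    intro i
    have hfi : f i = fun x => g i x / g 0 x := funext (hf i)
    rw [hfi]
    exact (hg i).div (hg 0) hg1
  have hderivC : ∀ i : Fin m, ContinuousOn (deriv (f i.succ)) J := fun i =>
    (hfC i.succ).continuousOn_deriv_of_isOpen hJopen (by simp)
  have hdiff : ∀ (i : Fin m), ∀ x ∈ J, DifferentiableAt ℝ (f i.succ) x := by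
    intro i x hx
    exact ((hfC i.succ).differentiableOn (by simp)).differentiableAt (hJopen.mem_nhds hx)
  -- clamped derivative functions
  set cl : ℝ → ℝ := fun x => min (max x a) b with hcl
  have hclmem : ∀ x, cl x ∈ Set.Icc a b := fun x =>
    ⟨le_min (le_max_right x a) hab, min_le_right _ _⟩
  have hclid : ∀ x ∈ Set.Icc a b, cl x = x := by
    intro x hx
    rw [hcl]
    simp only [max_eq_left hx.1, min_eq_left hx.2]
  have hclcont : Continuous cl := (continuous_id.max continuous_const).min continuous_const
  set H : Fin m → ℝ → ℝ := fun i x => deriv (f i.succ) (cl x) with hH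
  have hHcont : ∀ i, Continuous (H i) := fun i =>
    ContinuousOn.comp_continuous ((hderivC i).mono hIccJ) hclcont hclmem
  have hHeq : ∀ (i : Fin m), ∀ x ∈ Set.Icc a b, H i x = deriv (f i.succ) x := by
    intro i x hx
    rw [hH]; simp only [hclid x hx]
  -- FTC
  have hftc : ∀ (i : Fin m) (x y : ℝ), x ∈ Set.Icc a b → y ∈ Set.Icc a b →
      (∫ u in x..y, H i u) = f i.succ y - f i.succ x := by
    intro i x y hx hy
    have hsub : Set.uIcc x y ⊆ Set.Icc a b := Set.uIcc_subset_Icc hx hy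
    rw [intervalIntegral.integral_congr (g := deriv (f i.succ)) (fun u hu => hHeq i u (hsub hu))]
    exact intervalIntegral.integral_deriv_eq_sub (fun u hu => hdiff i u (hIccJ (hsub hu)))
      (((hderivC i).mono (fun u hu => hIccJ (hsub hu))).intervalIntegrable)
  -- step A: pull out g 0
  have stepA : Matrix.det (Matrix.of fun i j => g i (t j)) =
      (∏ j, g 0 (t j)) * Matrix.det (Matrix.of fun i j => f i (t j)) := by
    have : (Matrix.of fun i j => g i (t j)) =
        (Matrix.of fun i j : Fin (m+1) =>
          (fun j => g 0 (t j)) j * (Matrix.of fun i j => f i (t j)) i j) := by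
      ext i j
      simp only [Matrix.of_apply]
      rw [hf i (t j), mul_div_cancel₀ _ (hg1 _ (ht j))]
    rw [this, Matrix.det_mul_row]
  -- step B: f-matrix in key2 form
  have stepB : (Matrix.of fun i j => f i (t j)) =
      Matrix.of fun i j : Fin (m+1) =>
        Fin.cases (motive := fun _ => ℝ) 1
          (fun i' => f i'.succ (t 0) + ∫ u in (t 0)..(t j), H i' u) i := by
    ext i j
    refine Fin.cases ?_ ?_ i
    · simp only [Matrix.of_apply, Fin.cases_zero]
      rw [hf 0 (t j)]
      exact div_self (hg1 _ (ht j))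
    · intro i'
      simp only [Matrix.of_apply, Fin.cases_succ]
      rw [hftc i' (t 0) (t j) (hta 0) (hta j)]
      ring
  -- step C: replace H by deriv f inside iterInt
  have stepC : iterInt m (fun s => Matrix.det (Matrix.of fun i j : Fin m => H i (s j))) t =
      iterInt m (fun s => Matrix.det (Matrix.of fun i j : Fin m => deriv (f i.succ) (s j))) t := by
    apply iterInt_congr
    intro u hu
    congr 1
    ext i j
    have hmem : u j ∈ Set.Icc a b :=
      Set.uIcc_subset_Icc (hta j.castSucc) (hta j.succ) (hu j)
    simp only [Matrix.of_apply]
    exact hHeq i (u j) hmem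
  rw [stepA, stepB, key2 m H hHcont (fun i' => f i'.succ (t 0)) t, stepC]
end

section
/- Let v(t_1, ..., t_m) = ∏_{1 ≤ i < j ≤ m} (t_j - t_i) denote the Vandermonde determinant. Then there is a constant c_m > 0 (depending only on m) such that for all real t_1, ..., t_m, the iterated integral ∫_{t_1}^{t_2} ... ∫_{t_{m-1}}^{t_m} v(s_1, ..., s_{m-1}) ds_1 ... ds_{m-1} equals c_m · v(t_1, ..., t_m). -/
open MeasureTheory

/-- The Vandermonde polynomial `v(t_1, ..., t_m) = ∏_{i < j} (t_j - t_i)`. -/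
def vmd (m : ℕ) (t : Fin m → ℝ) : ℝ := ∏ p : Fin m, ∏ q ∈ Finset.Ioi p, (t q - t p)

/-!
Writing `vmd m s = det (s_j ^ i)` as a signed sum over permutations of products of one-variable
monomials, the iterated integral factorises and equals the determinant of the matrix of single
integrals `∫_{t_j}^{t_{j+1}} y ^ i dy = (t_{j+1} ^ (i+1) - t_j ^ (i+1)) / (i + 1)`. Pulling out the
factors `1 / (i + 1)` leaves a matrix that arises from the Vandermonde matrix of `t` by subtracting
consecutive rows, so `c_m = ∏_{i < m} 1 / (i + 1) = 1 / m!`.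
-/

open Matrix

theorem iterInt_sum_prod (m : ℕ) {ι : Type*} (A : Finset ι) (c : ι → ℝ)
    (f : ι → Fin m → ℝ → ℝ) (hf : ∀ x i, Continuous (f x i)) (t : Fin (m + 1) → ℝ) :
    iterInt m (fun s => ∑ x ∈ A, c x * ∏ i, f x i (s i)) t
      = ∑ x ∈ A, c x * ∏ i, ∫ y in (t i.castSucc)..(t i.succ), f x i y := by
  induction m generalizing c with
  | zero => simp [iterInt]
  | succ m ih =>
    have hcons : ∀ (s : ℝ) (u : Fin m → ℝ),
        ∑ x ∈ A, c x * ∏ i, f x i ((Fin.cons s u : Fin (m + 1) → ℝ) i)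
          = ∑ x ∈ A, (c x * f x 0 s) * ∏ i : Fin m, f x i.succ (u i) := fun s u =>
      Finset.sum_congr rfl fun x _ => by rw [Fin.prod_univ_succ]; simp [mul_assoc]
    simp only [iterInt, hcons]
    simp only [ih _ (fun x i => f x i.succ) (fun x i => hf x i.succ), Fin.succ_castSucc]
    rw [intervalIntegral.integral_finsetSum fun x _ => by
      apply Continuous.intervalIntegrable; fun_prop]
    refine Finset.sum_congr rfl fun x _ => ?_
    rw [intervalIntegral.integral_mul_const, intervalIntegral.integral_const_mul,
      Fin.prod_univ_succ, Fin.castSucc_zero, Fin.succ_zero_eq_one]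
    ring

theorem iterInt_det (m : ℕ) (f : Fin m → ℝ → ℝ) (hf : ∀ i, Continuous (f i))
    (t : Fin (m + 1) → ℝ) :
    iterInt m (fun s => (of fun i j => f i (s j)).det) t
      = (of fun i j => ∫ y in (t j.castSucc)..(t j.succ), f i y).det := by
  simp only [det_apply']
  exact iterInt_sum_prod m _ _ (fun (σ : Equiv.Perm (Fin m)) i => f (σ i))
    (fun σ i => hf (σ i)) t

theorem vmd_eq_det_vandermonde (m : ℕ) (t : Fin m → ℝ) : vmd m t = (vandermonde t).det :=
  (det_vandermonde t).symm

theorem det_of_pow_succ_sub_eq_det_vandermonde {R : Type*} [CommRing R] (m : ℕ)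
    (t : Fin (m + 1) → R) :
    (of fun i j : Fin m => t i.succ ^ ((j : ℕ) + 1) - t i.castSucc ^ ((j : ℕ) + 1)).det
      = (vandermonde t).det := by
  let B : Matrix (Fin (m + 1)) (Fin (m + 1)) R :=
    of (Fin.cons (fun j => t 0 ^ (j : ℕ)) fun i j => t i.succ ^ (j : ℕ) - t i.castSucc ^ (j : ℕ))
  have hB : (vandermonde t).det = B.det :=
    det_eq_of_forall_row_eq_smul_add_pred (fun _ => 1) (fun j => rfl)
      fun i j => by simp [B, vandermonde_apply]
  rw [hB, det_succ_column_zero, Fin.sum_univ_succ]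
  simp only [B, of_apply, Fin.cons_zero, Fin.cons_succ, Fin.val_zero, pow_zero, sub_self,
    mul_zero, zero_mul, Finset.sum_const_zero, add_zero, one_mul, Fin.succAbove_zero]
  rfl

/-- The iterated integral of the Vandermonde determinant in `m` variables is a positive
constant multiple of the Vandermonde determinant in `m + 1` variables. -/
theorem statement1 (m : ℕ) :
    ∃ c : ℝ, 0 < c ∧ ∀ t : Fin (m + 1) → ℝ, iterInt m (vmd m) t = c * vmd (m + 1) t := by
  refine ⟨∏ i : Fin m, ((i : ℝ) + 1)⁻¹, by positivity, fun t => ?_⟩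
  have hvmd : vmd m = fun s => (of fun i j : Fin m => s j ^ (i : ℕ)).det := by
    ext s
    rw [vmd_eq_det_vandermonde, ← det_transpose]
    rfl
  calc iterInt m (vmd m) t
      = (of fun i j : Fin m => ∫ y in (t j.castSucc)..(t j.succ), y ^ (i : ℕ)).det := by
        rw [hvmd]
        exact iterInt_det m _ (fun i => continuous_pow _) t
    _ = (of fun i j : Fin m => ((i : ℝ) + 1)⁻¹ *
          (t j.succ ^ ((i : ℕ) + 1) - t j.castSucc ^ ((i : ℕ) + 1))).det := by
        simp only [integral_pow, div_eq_inv_mul, mul_comm]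
    _ = (∏ i : Fin m, ((i : ℝ) + 1)⁻¹) * (of fun i j : Fin m =>
          t j.succ ^ ((i : ℕ) + 1) - t j.castSucc ^ ((i : ℕ) + 1)).det := det_mul_column _ _
    _ = _ := by
        rw [vmd_eq_det_vandermonde, ← det_of_pow_succ_sub_eq_det_vandermonde, ← det_transpose]
        rfl
end

section
/- Let γ : I → ℝ^d be C^d on a compact interval I, and for a permutation σ ∈ S_d and 1 ≤ j ≤ d let L_{σ,j}(t) be the determinant of the j×j matrix whose (i,l) entry is γ_{σ(i)}^{(l)}(t). Then for every t ∈ I there exists a permutation σ such that for all 1 ≤ j ≤ d, |L_{σ,j}(t)| ≥ (j!/(d! · M^{d-j})) · |L_d(t)|, where M = max over I and over 1 ≤ i ≤ d of the sup norms of the derivatives γ^{(i)} (i.e., M = ‖γ‖_{C^d}). -/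
/-!
Expanding `det D` along its last column gives a row `i₀` with `|det D| ≤ d · M · |det D'|`, where
`D'` is `D` without row `i₀` and without its last column. By induction on `d`, `D'` has a row
permutation `τ` controlling its leading minors; listing the rows of `D` as `τ` dictates on `D'`
and then `i₀` last, the leading minors of `D` of order `j < d` are those of `D'`, and each step
down in the order costs a factor `d · M`, whence `j! / (d! M^(d-j))`.
-/

/-- The minor `L_{σ,j}(t)`: determinant of the `j × j` matrix whose `(i, l)` entry is the
`(l+1)`-st derivative of the `σ(i)`-th coordinate of `γ` at `t`. -/
noncomputable def minorL (d : ℕ) (γ : Fin d → ℝ → ℝ) (σ : Equiv.Perm (Fin d))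
    (j : ℕ) (hj : j ≤ d) (t : ℝ) : ℝ :=
  Matrix.det (Matrix.of fun i l : Fin j =>
    iteratedDeriv ((l : ℕ) + 1) (γ (σ (Fin.castLE hj i))) t)

namespace Matrix

open Nat

section CommRing

variable {R : Type*} [CommRing R]

def leadingMinor {d : ℕ} (D : Matrix (Fin d) (Fin d) R) (σ : Equiv.Perm (Fin d))
    (j : ℕ) (hj : j ≤ d) : R :=
  (D.submatrix (fun i => σ (Fin.castLE hj i)) (Fin.castLE hj)).det

-- The permutation sends `castSucc k ↦ i₀.succAbove (τ k)` and `last n ↦ i₀`.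
theorem leadingMinor_submatrix_succAbove_castSucc {n : ℕ}
    (D : Matrix (Fin (n + 1)) (Fin (n + 1)) R) (i₀ : Fin (n + 1)) (τ : Equiv.Perm (Fin n))
    {j : ℕ} (hj : j ≤ n) :
    (D.submatrix i₀.succAbove Fin.castSucc).leadingMinor τ j hj =
      D.leadingMinor (finSuccEquivLast.trans (τ.optionCongr.trans (finSuccEquiv' i₀).symm)) j
        (hj.trans n.le_succ) := by
  have hcast (k : Fin j) : Fin.castLE (hj.trans n.le_succ) k = (Fin.castLE hj k).castSucc := rfl
  simp only [leadingMinor, hcast, Equiv.trans_apply, finSuccEquivLast_castSucc,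
    Equiv.optionCongr_apply, Option.map_some, finSuccEquiv'_symm_some]
  rfl

end CommRing

section Ordered

variable {R : Type*} [CommRing R] [LinearOrder R] [IsStrictOrderedRing R]

theorem abs_leadingMinor_self {d : ℕ} (D : Matrix (Fin d) (Fin d) R) (σ : Equiv.Perm (Fin d)) :
    |D.leadingMinor σ d le_rfl| = |D.det| := by
  simpa [leadingMinor] using abs_det_submatrix_equiv_equiv σ (Equiv.refl _) D

theorem exists_abs_det_le_mul_abs_det_submatrix_castSucc {n : ℕ}
    (B : Matrix (Fin (n + 1)) (Fin (n + 1)) R) {M : R} (hM : ∀ i, |B i (Fin.last n)| ≤ M) :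
    ∃ i₀ : Fin (n + 1),
      |B.det| ≤ (n + 1) * M * |(B.submatrix i₀.succAbove Fin.castSucc).det| := by
  obtain ⟨i₀, -, hmax⟩ := Finset.exists_max_image Finset.univ
    (fun i : Fin (n + 1) => |(B.submatrix i.succAbove Fin.castSucc).det|) ⟨0, Finset.mem_univ 0⟩
  refine ⟨i₀, ?_⟩
  rw [det_succ_column B (Fin.last n)]
  calc _ ≤ ∑ i : Fin (n + 1), |(-1) ^ ((i : ℕ) + (Fin.last n : ℕ)) * B i (Fin.last n) *
          (B.submatrix i.succAbove (Fin.last n).succAbove).det| :=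
        Finset.abs_sum_le_sum_abs _ _
    _ ≤ ∑ _i : Fin (n + 1), M * |(B.submatrix i₀.succAbove Fin.castSucc).det| := by
        gcongr with i
        rw [abs_mul, abs_mul, abs_pow, abs_neg, abs_one, one_pow, one_mul, Fin.succAbove_last]
        exact mul_le_mul (hM i) (hmax i (Finset.mem_univ i)) (abs_nonneg _)
          ((abs_nonneg _).trans (hM i))
    _ = (n + 1) * M * |(B.submatrix i₀.succAbove Fin.castSucc).det| := by simp [mul_assoc]

end Ordered

variable {R : Type*} [Field R] [LinearOrder R] [IsStrictOrderedRing R]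

theorem exists_perm_factorial_div_mul_abs_det_le_abs_leadingMinor {d : ℕ}
    (D : Matrix (Fin d) (Fin d) R) {M : R} (hM : ∀ i l, |D i l| ≤ M) :
    ∃ σ : Equiv.Perm (Fin d), ∀ (j : ℕ) (hj : j ≤ d),
      (j ! : R) / (d ! * M ^ (d - j)) * |D.det| ≤ |D.leadingMinor σ j hj| := by
  induction d with
  | zero =>
    refine ⟨1, fun j hj => ?_⟩
    obtain rfl : j = 0 := by omega
    simp [leadingMinor]
  | succ n ih =>
    obtain ⟨i₀, hdet⟩ := exists_abs_det_le_mul_abs_det_submatrix_castSucc D (fun i => hM i _)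
    set D' := D.submatrix i₀.succAbove Fin.castSucc
    obtain ⟨τ, hτ⟩ := ih D' (fun i l => hM _ _)
    refine ⟨finSuccEquivLast.trans (τ.optionCongr.trans (finSuccEquiv' i₀).symm), fun j hj => ?_⟩
    obtain hjn | rfl := hj.lt_or_eq
    · rw [← leadingMinor_submatrix_succAbove_castSucc D i₀ τ (Nat.le_of_lt_succ hjn)]
      refine le_trans ?_ (hτ j _)
      have hM0 : 0 ≤ M := (abs_nonneg _).trans (hM 0 0)
      obtain rfl | hMpos := hM0.eq_or_lt
      -- for `M = 0` the left side is a division by `0 ^ (n + 1 - j) = 0`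
      · rw [zero_pow (by omega), mul_zero, div_zero, zero_mul]
        positivity
      calc (j ! : R) / ((n + 1)! * M ^ (n + 1 - j)) * |D.det|
          ≤ (j ! : R) / ((n + 1)! * M ^ (n + 1 - j)) * ((n + 1) * M * |D'.det|) := by gcongr
        _ = (j ! : R) / (n ! * M ^ (n - j)) * |D'.det| := by
          rw [show n + 1 - j = n - j + 1 by omega, Nat.factorial_succ]
          push_cast
          field_simp
          ring
    · simp [abs_leadingMinor_self, Nat.factorial_ne_zero]

end Matrix

theorem statement2_general (d : ℕ) (a b : ℝ)
    (γ : Fin d → ℝ → ℝ)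
    (M : ℝ)
    (hM : ∀ t ∈ Set.Icc a b, ∀ c : Fin d, ∀ i ≤ d, |iteratedDeriv i (γ c) t| ≤ M)
    (t : ℝ) (ht : t ∈ Set.Icc a b) :
    ∃ σ : Equiv.Perm (Fin d), ∀ (j : ℕ) (hj : j ≤ d), 1 ≤ j →
      (j.factorial : ℝ) / (d.factorial * M ^ (d - j)) * |minorL d γ 1 d le_rfl t| ≤
        |minorL d γ σ j hj t| := by
  let D : Matrix (Fin d) (Fin d) ℝ := .of fun c l => iteratedDeriv ((l : ℕ) + 1) (γ c) t
  have hminor (σ : Equiv.Perm (Fin d)) (j : ℕ) (hj : j ≤ d) :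
      minorL d γ σ j hj t = D.leadingMinor σ j hj := rfl
  obtain ⟨σ, hσ⟩ := D.exists_perm_factorial_div_mul_abs_det_le_abs_leadingMinor
    (fun c l => hM t ht c _ l.isLt)
  refine ⟨σ, fun j hj _ => ?_⟩
  rw [hminor, hminor, D.abs_leadingMinor_self]
  exact hσ j hj

/-- For every `t` there is a permutation `σ` such that
`|L_{σ,j}(t)| ≥ (j!/(d!·M^{d-j}))·|L_d(t)|` for all `1 ≤ j ≤ d`. -/
theorem statement2 (d : ℕ) (hd : 1 ≤ d) (a b : ℝ) (hab : a ≤ b)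
    (γ : Fin d → ℝ → ℝ) (hγ : ∀ c, ContDiff ℝ d (γ c))
    (M : ℝ)
    (hM : ∀ t ∈ Set.Icc a b, ∀ c : Fin d, ∀ i ≤ d, |iteratedDeriv i (γ c) t| ≤ M)
    (t : ℝ) (ht : t ∈ Set.Icc a b) :
    ∃ σ : Equiv.Perm (Fin d), ∀ (j : ℕ) (hj : j ≤ d), 1 ≤ j →
      (j.factorial : ℝ) / (d.factorial * M ^ (d - j)) * |minorL d γ 1 d le_rfl t| ≤
        |minorL d γ σ j hj t| :=
  statement2_general d a b γ M hM t ht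
end

section
/- If a_1, ..., a_d and b_1, ..., b_d are real numbers with a_1 < a_2 < ... < a_d, b_1 < b_2 < ... < b_d, and {a_1,...,a_d} ≠ {b_1,...,b_d}, then one can write the formal difference δ_{a_1}+...+δ_{a_d} − δ_{b_1}−...−δ_{b_d} as ∑_{j=1}^m ε_j δ_{u_j} for some even integer m with 2 ≤ m ≤ 2d, strictly increasing u_1 < ... < u_m, signs ε_j ∈ {−1,+1} with ∑_j ε_j = 0, and such that the sequence of partial sums α_l = ∑_{j=1}^l ε_j changes sign at most d−1 times. -/
/-!
Put `A = {a_i}`, `B = {b_i}`, let `u_0 < ⋯ < u_{m-1}` enumerate the symmetric difference `A ∆ B`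
and let `ε_j = ±1` according as `u_j ∈ A` or `u_j ∈ B`; as `|A| = |B|`, `m = 2 |A \ B| ≤ 2d`.
The partial sums `α_l` form a `±1` walk, so `α_l ≡ l + 1 (mod 2)` and adjacent values differ by
one. Hence a sign change crosses exactly one zero, `α_{l+1} = 0`, with `l` even and `l + 2 < m`,
which leaves room for at most `(m - 1) / 2 = |A \ B| - 1` sign changes.
-/

open Finset
open scoped symmDiff

namespace Finset

variable {α M : Type*}

theorem sum_sub_sum_eq_sum_symmDiff [DecidableEq α] [AddCommGroup M] (s t : Finset α)
    (f : α → M) :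
    ∑ x ∈ s, f x - ∑ x ∈ t, f x = ∑ x ∈ s ∆ t, (if x ∈ s then 1 else -1 : ℤ) • f x := by
  have hst : ∑ x ∈ s \ t, (if x ∈ s then 1 else -1 : ℤ) • f x = ∑ x ∈ s \ t, f x :=
    sum_congr rfl fun x hx => by rw [if_pos (mem_sdiff.1 hx).1, one_zsmul]
  have hts : ∑ x ∈ t \ s, (if x ∈ s then 1 else -1 : ℤ) • f x = -∑ x ∈ t \ s, f x := by
    rw [← sum_neg_distrib]
    exact sum_congr rfl fun x hx => by rw [if_neg (mem_sdiff.1 hx).2, neg_one_zsmul]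
  rw [Finset.symmDiff_def, sum_union disjoint_sdiff_sdiff, hst, hts, ← sub_eq_add_neg,
    sum_sdiff_sub_sum_sdiff]

theorem card_symmDiff_of_card_eq [DecidableEq α] {s t : Finset α} (h : #s = #t) :
    #(s ∆ t) = 2 * #(s \ t) := by
  rw [Finset.symmDiff_def, card_union_of_disjoint disjoint_sdiff_sdiff, ← card_sdiff_comm h,
    two_mul]

theorem sum_orderEmbOfFin [LinearOrder α] [AddCommMonoid M] (s : Finset α) {k : ℕ}
    (h : #s = k) (f : α → M) : ∑ i, f (s.orderEmbOfFin h i) = ∑ x ∈ s, f x := by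
  rw [← sum_image fun _ _ _ _ e => (s.orderEmbOfFin h).injective e, image_orderEmbOfFin_univ]

end Finset

section SignChanges

variable {m : ℕ}

def partialSum {M : Type*} [AddCommMonoid M] (σ : Fin m → M) (l : Fin m) : M :=
  ∑ j ∈ Iic l, σ j

def signChanges {R : Type*} [MulZeroClass R] [LT R] (α : Fin m → R) : Set (Fin m × Fin m) :=
  {p | p.1 < p.2 ∧ α p.1 * α p.2 < 0 ∧ ∀ l, p.1 < l → l < p.2 → α l = 0}

theorem partialSum_intCast {R : Type*} [Ring R] (σ : Fin m → ℤ) :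
    partialSum (fun j => (σ j : R)) = fun l => ((partialSum σ l : ℤ) : R) := by
  ext l
  simp only [partialSum, Int.cast_sum]

theorem signChanges_intCast {R : Type*} [Ring R] [LinearOrder R] [IsStrictOrderedRing R]
    (α : Fin m → ℤ) : signChanges (fun l => (α l : R)) = signChanges α := by
  ext p
  simp only [signChanges, Set.mem_ofPred_eq, ← Int.cast_mul, Int.cast_lt_zero, Int.cast_eq_zero]

theorem partialSum_eq_add_sum_Ioc {M : Type*} [AddCommMonoid M] (σ : Fin m → M) {i j : Fin m}
    (hij : i ≤ j) : partialSum σ j = partialSum σ i + ∑ k ∈ Ioc i j, σ k := by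
  rw [partialSum, partialSum, ← Iic_union_Ioc_eq_Iic hij, sum_union (Iic_disjoint_Ioc le_rfl)]

theorem partialSum_of_val_eq_add_one {M : Type*} [AddCommMonoid M] (σ : Fin m → M)
    {i j : Fin m} (h : (j : ℕ) = i + 1) : partialSum σ j = partialSum σ i + σ j := by
  have hIoc : Ioc i j = {j} := by
    ext k
    simp only [mem_Ioc, mem_singleton, Fin.lt_def, Fin.le_def, Fin.ext_iff]
    omega
  rw [partialSum_eq_add_sum_Ioc σ (show i ≤ j from Fin.le_def.2 (by omega)), hIoc, sum_singleton]

variable {σ : Fin m → ℤ}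

theorem even_partialSum_iff (hσ : ∀ j, σ j = 1 ∨ σ j = -1) (l : Fin m) :
    Even (partialSum σ l) ↔ Odd (l : ℕ) := by
  have hσ_mod_two : ∀ j, (σ j : ZMod 2) = 1 := fun j => by
    rcases hσ j with h | h <;> simp [h]
  rw [← ZMod.intCast_eq_zero_iff_even, partialSum, Int.cast_sum, sum_congr rfl fun j _ => hσ_mod_two j,
    sum_const, Fin.card_Iic, nsmul_one, ZMod.natCast_eq_zero_iff_even, Nat.even_add_one,
    Nat.not_even_iff_odd]

theorem val_eq_add_two_of_mem_signChanges (hσ : ∀ j, σ j = 1 ∨ σ j = -1)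
    {p : Fin m × Fin m} (hp : p ∈ signChanges (partialSum σ)) :
    (p.2 : ℕ) = p.1 + 2 ∧ Even (p.1 : ℕ) := by
  obtain ⟨hlt, hmul, hzero⟩ := hp
  replace hlt : (p.1 : ℕ) < p.2 := hlt
  have odd_of_between : ∀ k, (p.1 : ℕ) < k → k < p.2 → Odd k := fun k h1 h2 => by
    have hk : k < m := h2.trans p.2.2
    simpa using (even_partialSum_iff hσ ⟨k, hk⟩).1 (by rw [hzero ⟨k, hk⟩ h1 h2]; exact .zero)
  rcases Nat.lt_or_ge (p.2 : ℕ) (p.1 + 2) with h | h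
  · -- adjacent values differ by one, so they cannot have opposite signs
    have hstep := partialSum_of_val_eq_add_one σ (i := p.1) (j := p.2) (by omega)
    rcases hσ p.2 with h1 | h1 <;> rw [hstep, h1] at hmul <;>
      rcases mul_neg_iff.1 hmul with h2 | h2 <;> omega
  · have h1 := Nat.odd_iff.1 (odd_of_between (p.1 + 1) (by omega) (by omega))
    rcases Nat.lt_or_ge (p.2 : ℕ) (p.1 + 3) with h' | h'
    · exact ⟨by omega, Nat.even_iff.2 (by omega)⟩
    · -- two adjacent zeros would have different parities
      have h2 := Nat.odd_iff.1 (odd_of_between (p.1 + 2) (by omega) (by omega))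
      omega

theorem ncard_signChanges_partialSum_le (hσ : ∀ j, σ j = 1 ∨ σ j = -1) :
    (signChanges (partialSum σ)).ncard ≤ (m - 1) / 2 := by
  have key := fun p (hp : p ∈ signChanges (partialSum σ)) =>
    val_eq_add_two_of_mem_signChanges hσ hp
  calc (signChanges (partialSum σ)).ncard
      ≤ (range ((m - 1) / 2) : Set ℕ).ncard := by
        refine Set.ncard_le_ncard_of_injOn (fun p => (p.1 : ℕ) / 2) (fun p hp => ?_)
          (fun p hp q hq hpq => ?_)
        · obtain ⟨h2, he⟩ := key p hp
          have hm := p.2.2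
          simp only [coe_range, Set.mem_Iio]
          rw [Nat.even_iff] at he
          omega
        · obtain ⟨hp2, hpe⟩ := key p hp
          obtain ⟨hq2, hqe⟩ := key q hq
          rw [Nat.even_iff] at hpe hqe
          replace hpq : (p.1 : ℕ) / 2 = q.1 / 2 := hpq
          exact Prod.ext (Fin.ext (by omega)) (Fin.ext (by omega))
    _ = (m - 1) / 2 := by rw [Set.ncard_coe_finset, card_range]

end SignChanges

theorem statement5_general (d : ℕ) (a b : Fin d → ℝ)
    (ha : StrictMono a) (hb : StrictMono b) (hne : Set.range a ≠ Set.range b) :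
    ∃ (m : ℕ) (u : Fin m → ℝ) (ε : Fin m → ℝ),
      Even m ∧ 2 ≤ m ∧ m ≤ 2 * d ∧ StrictMono u ∧
      (∀ j, ε j = 1 ∨ ε j = -1) ∧ (∑ j, ε j = 0) ∧
      (∀ f : ℝ → ℝ, ∑ i, f (a i) - ∑ i, f (b i) = ∑ j, ε j * f (u j)) ∧
      (let α : Fin m → ℝ := fun l => ∑ j ∈ Finset.Iic l, ε j
       Set.ncard {p : Fin m × Fin m |
          p.1 < p.2 ∧ α p.1 * α p.2 < 0 ∧ ∀ l, p.1 < l → l < p.2 → α l = 0} ≤ d - 1) := by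
  classical
  set A := univ.image a
  set B := univ.image b
  have hA : #A = d := by rw [card_image_of_injective _ ha.injective, card_univ, Fintype.card_fin]
  have hB : #B = d := by rw [card_image_of_injective _ hb.injective, card_univ, Fintype.card_fin]
  have hAB : A ≠ B := fun h => hne (by simpa [A, B] using congrArg ((↑) : Finset ℝ → Set ℝ) h)
  have hcard : #(A ∆ B) = 2 * #(A \ B) := card_symmDiff_of_card_eq (hA.trans hB.symm)
  have hpos : 0 < #(A ∆ B) := card_pos.2 (symmDiff_nonempty.2 hAB)
  have hle : #(A \ B) ≤ d := hA ▸ card_le_card sdiff_subset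
  set u := (A ∆ B).orderEmbOfFin rfl
  set σ : Fin #(A ∆ B) → ℤ := fun j => if u j ∈ A then 1 else -1
  have hσ : ∀ j, σ j = 1 ∨ σ j = -1 := fun j => by by_cases h : u j ∈ A <;> simp [σ, h]
  have hsum : ∀ f : ℝ → ℝ, ∑ i, f (a i) - ∑ i, f (b i) = ∑ j, (σ j : ℝ) * f (u j) := by
    intro f
    rw [← sum_image fun _ _ _ _ h => ha.injective h, ← sum_image fun _ _ _ _ h => hb.injective h,
      sum_sub_sum_eq_sum_symmDiff, ← sum_orderEmbOfFin _ rfl]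
    simp only [zsmul_eq_mul]
    rfl
  refine ⟨#(A ∆ B), u, fun j => σ j, hcard ▸ even_two_mul _, by omega, by omega, u.strictMono,
    fun j => by rcases hσ j with h | h <;> simp [h], by simpa using (hsum 1).symm, hsum, ?_⟩
  show (signChanges (partialSum fun j => (σ j : ℝ))).ncard ≤ d - 1
  rw [partialSum_intCast, signChanges_intCast]
  have := ncard_signChanges_partialSum_le hσ
  omega

/-- Combinatorial lemma underlying Steinig's argument: two distinct increasing `d`-tuples
give rise to a signed sum `∑ ε_j δ_{u_j}` with an even number `2 ≤ m ≤ 2d` of strictly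
increasing atoms, signs `±1` summing to zero, whose sequence of partial sums changes sign
at most `d - 1` times. -/
theorem statement5 (d : ℕ) (hd : 1 ≤ d) (a b : Fin d → ℝ)
    (ha : StrictMono a) (hb : StrictMono b) (hne : Set.range a ≠ Set.range b) :
    ∃ (m : ℕ) (u : Fin m → ℝ) (ε : Fin m → ℝ),
      Even m ∧ 2 ≤ m ∧ m ≤ 2 * d ∧ StrictMono u ∧
      (∀ j, ε j = 1 ∨ ε j = -1) ∧ (∑ j, ε j = 0) ∧
      (∀ f : ℝ → ℝ, ∑ i, f (a i) - ∑ i, f (b i) = ∑ j, ε j * f (u j)) ∧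
      (let α : Fin m → ℝ := fun l => ∑ j ∈ Finset.Iic l, ε j
       Set.ncard {p : Fin m × Fin m |
          p.1 < p.2 ∧ α p.1 * α p.2 < 0 ∧ ∀ l, p.1 < l → l < p.2 → α l = 0} ≤ d - 1) :=
  statement5_general d a b ha hb hne
end

section
/- Let A be an (j+1)×(j+1) real matrix, and for index sets denote by [r_1,...,r_p ; c_1,...,c_p] the determinant of the matrix obtained from A by deleting rows r_1,...,r_p and columns c_1,...,c_p. Then (Sylvester's determinant identity, 2×2 case): [j, j+1 ; j, j+1] · det A = [j+1 ; j+1] · [j ; j] − [j+1 ; j] · [j ; j+1]. -/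
/-!
Let `B` agree with the identity except in its last two columns, which are those of `adj A`.
Since `A * adj A = det A • 1`, the product `A * B` is block lower triangular with diagonal blocks
the central minor and `det A • 1₂`, so `det A * det (adj A)₂₂ = central minor * (det A)²`.
Cancelling `det A` is legitimate for the generic matrix over `ℤ[x_ij]`, a domain, and the identity
then specialises to every matrix. The entries of `(adj A)₂₂` are the four corner minors up to
cofactor signs, which cancel in pairs in the `2 × 2` determinant.
-/

namespace Matrix

variable {n o R : Type*} [Fintype n] [Fintype o] [DecidableEq n] [DecidableEq o] [CommRing R]

theorem det_mul_det_adjugate_toBlocks₂₂ (M : Matrix (n ⊕ o) (n ⊕ o) R) :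
    M.det * (adjugate M).toBlocks₂₂.det = M.toBlocks₁₁.det * M.det ^ Fintype.card o := by
  set N := adjugate M
  have hblocks : fromBlocks (M.toBlocks₁₁ * N.toBlocks₁₁ + M.toBlocks₁₂ * N.toBlocks₂₁)
      (M.toBlocks₁₁ * N.toBlocks₁₂ + M.toBlocks₁₂ * N.toBlocks₂₂)
      (M.toBlocks₂₁ * N.toBlocks₁₁ + M.toBlocks₂₂ * N.toBlocks₂₁)
      (M.toBlocks₂₁ * N.toBlocks₁₂ + M.toBlocks₂₂ * N.toBlocks₂₂) =
      fromBlocks (M.det • 1) 0 0 (M.det • 1) := by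
    rw [← fromBlocks_multiply, fromBlocks_toBlocks, fromBlocks_toBlocks, mul_adjugate,
      ← fromBlocks_one, fromBlocks_smul]
    simp only [smul_zero]
  obtain ⟨-, h₁₂, -, h₂₂⟩ := fromBlocks_inj.mp hblocks
  have hprod : M * fromBlocks 1 N.toBlocks₁₂ 0 N.toBlocks₂₂ =
      fromBlocks M.toBlocks₁₁ 0 M.toBlocks₂₁ (M.det • 1) := by
    conv_lhs => rw [← fromBlocks_toBlocks M]
    rw [fromBlocks_multiply, h₁₂, h₂₂]
    simp only [mul_one, Matrix.mul_zero, add_zero, Matrix.mul_one]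
  have hdet := congrArg det hprod
  rwa [det_mul, det_fromBlocks_zero₂₁, det_fromBlocks_zero₁₂, det_one, one_mul, det_smul,
    det_one, mul_one] at hdet

theorem det_adjugate_toBlocks₂₂ [Nonempty o] (M : Matrix (n ⊕ o) (n ⊕ o) R) :
    (adjugate M).toBlocks₂₂.det = M.toBlocks₁₁.det * M.det ^ (Fintype.card o - 1) := by
  let X := mvPolynomialX (n ⊕ o) (n ⊕ o) ℤ
  suffices (adjugate X).toBlocks₂₂.det = X.toBlocks₁₁.det * X.det ^ (Fintype.card o - 1) by
    let f : MvPolynomial ((n ⊕ o) × (n ⊕ o)) ℤ →ₐ[ℤ] R := MvPolynomial.aeval fun p => M p.1 p.2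
    have hmap := congrArg f this
    rw [map_mul, map_pow, AlgHom.map_det, AlgHom.map_det, AlgHom.map_det] at hmap
    change (f.mapMatrix (adjugate X)).toBlocks₂₂.det =
      (f.mapMatrix X).toBlocks₁₁.det * (f.mapMatrix X).det ^ _ at hmap
    rwa [AlgHom.map_adjugate, mvPolynomialX_mapMatrix_aeval] at hmap
  apply mul_left_cancel₀ (det_mvPolynomialX_ne_zero (n ⊕ o) ℤ)
  rw [det_mul_det_adjugate_toBlocks₂₂, mul_left_comm, ← pow_succ',
    Nat.sub_add_cancel Fintype.card_pos]

theorem det_submatrix_castSucc_castSucc_mul_det {m : ℕ}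
    (A : Matrix (Fin (m + 2)) (Fin (m + 2)) R) :
    (A.submatrix (fun i : Fin m => i.castSucc.castSucc)
        (fun i : Fin m => i.castSucc.castSucc)).det * A.det =
      adjugate A ⟨m, by omega⟩ ⟨m, by omega⟩ * adjugate A (Fin.last (m + 1)) (Fin.last (m + 1)) -
        adjugate A ⟨m, by omega⟩ (Fin.last (m + 1)) *
          adjugate A (Fin.last (m + 1)) ⟨m, by omega⟩ := by
  have h := det_adjugate_toBlocks₂₂ (A.submatrix finSumFinEquiv finSumFinEquiv)
  rw [adjugate_submatrix_equiv_self, det_submatrix_equiv_self, det_fin_two, Fintype.card_fin,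
    Nat.add_one_sub_one, pow_one] at h
  -- `finSumFinEquiv` sends `inl i` to `i.castSucc.castSucc` and `inr 0`, `inr 1` to `m`, `m + 1`
  -- definitionally.
  exact h.symm

end Matrix

open Matrix in
/-- Sylvester's determinant identity (2×2 case) for a square matrix `A` of size `m + 2`
(so `j = m + 1`, rows/columns indexed `1, ..., j+1`): with `[r; c]` denoting the minor
obtained by deleting rows `r` and columns `c` (here the last two indices play the roles of
`j` and `j+1`),
`[j, j+1; j, j+1] · det A = [j+1; j+1] · [j; j] − [j+1; j] · [j; j+1]`. -/
theorem statement8 {R : Type*} [CommRing R] (m : ℕ)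
    (A : Matrix (Fin (m + 2)) (Fin (m + 2)) R) :
    (A.submatrix (fun i : Fin m => i.castSucc.castSucc)
        (fun i : Fin m => i.castSucc.castSucc)).det * A.det =
      (A.submatrix Fin.castSucc Fin.castSucc).det *
          (A.submatrix (Fin.succAbove ⟨m, by omega⟩) (Fin.succAbove ⟨m, by omega⟩)).det -
        (A.submatrix Fin.castSucc (Fin.succAbove ⟨m, by omega⟩)).det *
          (A.submatrix (Fin.succAbove ⟨m, by omega⟩) Fin.castSucc).det := by
  rw [det_submatrix_castSucc_castSucc_mul_det]
  simp only [adjugate_fin_succ_eq_det_submatrix, Fin.succAbove_last, Fin.val_last]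
  rw [Even.neg_one_pow ⟨m, rfl⟩, Even.neg_one_pow ⟨m + 1, rfl⟩, Odd.neg_one_pow ⟨m, by ring⟩,
    Odd.neg_one_pow ⟨m, by ring⟩]
  ring
end

section
/- Fix n ≥ 1 and set, for a smooth ζ : I → ℝ^n with minors L_j (and L_0 = L_{−1} ≡ 1), the iterated integrals 𝔍_1(t_1) = L_{n−2}(t_1)L_n(t_1)/L_{n−1}(t_1)², and for 2 ≤ m ≤ n, 𝔍_m(t_1,...,t_m) = (∏_{j=1}^m L_{n−m−1}(t_j)L_{n−m+1}(t_j)/L_{n−m}(t_j)²) · ∫_{t_1}^{t_2}⋯∫_{t_{m−1}}^{t_m} 𝔍_{m−1}(s_1,...,s_{m−1}) ds_1⋯ds_{m−1}. If all L_j (1 ≤ j ≤ n) are nonvanishing on I, then 𝔍_n(t_1,...,t_n) = det[ζ'(t_1), ..., ζ'(t_n)] for all (t_1,...,t_n) ∈ I^n. -/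
open MeasureTheory

/-- `Lf n ζ j t` is the minor `L_j(t) = det[(ζ_i^{(l)}(t))_{1 ≤ i, l ≤ j}]` when `j ≤ n`
(in particular `L_0 = 1`, the empty determinant), and junk `0` otherwise. -/
noncomputable def Lf (n : ℕ) (ζ : Fin n → ℝ → ℝ) (j : ℕ) (t : ℝ) : ℝ :=
  if h : j ≤ n then
    Matrix.det (Matrix.of fun p q : Fin j =>
      iteratedDeriv ((q : ℕ) + 1) (ζ (Fin.castLE h p)) t)
  else 0

/-- The iterated integrals `𝔍_m` of the paper: `Jit n ζ m` is `𝔍_{m+1}`, defined by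
`𝔍_1 = L_{n-2} L_n / L_{n-1}²` and
`𝔍_M(t) = (∏_{j=1}^M L_{n-M-1}(t_j) L_{n-M+1}(t_j) / L_{n-M}(t_j)²) ·
  ∫_{t_1}^{t_2} ⋯ ∫_{t_{M-1}}^{t_M} 𝔍_{M-1}` (with `L_0 = L_{-1} ≡ 1`). -/
noncomputable def Jit (n : ℕ) (ζ : Fin n → ℝ → ℝ) : (m : ℕ) → (Fin (m + 1) → ℝ) → ℝ
  | 0, t => Lf n ζ (n - 2) (t 0) * Lf n ζ n (t 0) / (Lf n ζ (n - 1) (t 0)) ^ 2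
  | m + 1, t =>
      (∏ j : Fin (m + 2),
        Lf n ζ (n - (m + 2) - 1) (t j) * Lf n ζ (n - (m + 2) + 1) (t j) /
          (Lf n ζ (n - (m + 2)) (t j)) ^ 2) *
      iterInt (m + 1) (Jit n ζ m) t

lemma uIcc_subset_of_mem {I : Set ℝ} (hI : Convex ℝ I) {a b : ℝ} (ha : a ∈ I) (hb : b ∈ I) :
    Set.uIcc a b ⊆ I :=
  Set.OrdConnected.uIcc_subset hI.ordConnected ha hb

lemma iterInt_congr_s11 {I : Set ℝ} (hI : Convex ℝ I) :
    ∀ (m : ℕ) (F G : (Fin m → ℝ) → ℝ) (t : Fin (m+1) → ℝ),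
    (∀ q, t q ∈ I) → (∀ s : Fin m → ℝ, (∀ q, s q ∈ I) → F s = G s) →
    iterInt m F t = iterInt m G t
  | 0, F, G, t, ht, h => h ![] (fun q => q.elim0)
  | m + 1, F, G, t, ht, h => by
    rw [iterInt_succ, iterInt_succ]
    apply intervalIntegral.integral_congr
    intro s hs
    have hsI : s ∈ I := uIcc_subset_of_mem hI (ht 0) (ht 1) hs
    exact iterInt_congr_s11 hI m _ _ _ (fun q => ht q.succ)
      (fun u hu => h (Fin.cons s u) (fun q => q.cases hsI hu))

/-- Key interchange: iterated integral of a finite sum of products. -/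
lemma iterInt_sum_prod_s11 {α : Type*} {I : Set ℝ} (hI : Convex ℝ I) :
    ∀ (m : ℕ) (S : Finset α) (c : α → ℝ)
    (h : α → Fin m → ℝ → ℝ) (t : Fin (m+1) → ℝ), (∀ q, t q ∈ I) →
    (∀ a ∈ S, ∀ q, ContinuousOn (h a q) I) →
    iterInt m (fun s => ∑ a ∈ S, c a * ∏ q, h a q (s q)) t
      = ∑ a ∈ S, c a * ∏ q : Fin m, ∫ s in (t q.castSucc)..(t q.succ), h a q s
  | 0, S, c, h, t, ht, hc => by
      rw [iterInt_zero]; simp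
  | m + 1, S, c, h, t, ht, hc => by
    rw [iterInt_succ]
    have key : ∀ s ∈ Set.uIcc (t 0) (t 1),
        iterInt m (fun u => ∑ a ∈ S, c a * ∏ q, h a q ((Fin.cons s u : Fin _ → ℝ) q)) (fun i => t i.succ)
          = ∑ a ∈ S, (c a * h a 0 s) *
              ∏ q : Fin m, ∫ x in (t q.succ.castSucc)..(t q.succ.succ), h a q.succ x := by
      intro s hs
      have e1 : (fun u : Fin m → ℝ => ∑ a ∈ S, c a * ∏ q, h a q ((Fin.cons s u : Fin _ → ℝ) q))
          = fun u => ∑ a ∈ S, (c a * h a 0 s) * ∏ q : Fin m, h a q.succ (u q) := by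
        funext u
        refine Finset.sum_congr rfl (fun a _ => ?_)
        rw [Fin.prod_univ_succ]
        simp [mul_assoc]
      rw [e1, iterInt_sum_prod_s11 hI m S (fun a => c a * h a 0 s) (fun a q => h a q.succ)
        (fun i => t i.succ) (fun q => ht q.succ) (fun a ha q => hc a ha q.succ)]
      simp only [Fin.succ_castSucc]
    rw [intervalIntegral.integral_congr key]
    rw [intervalIntegral.integral_finset_sum]
    · refine Finset.sum_congr rfl (fun a ha => ?_)
      rw [Fin.prod_univ_succ]
      have e2 : ∀ x : ℝ, c a * h a 0 x * ∏ q : Fin m,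
          (∫ u in (t q.succ.castSucc)..(t q.succ.succ), h a q.succ u)
          = (c a * ∏ q : Fin m, ∫ u in (t q.succ.castSucc)..(t q.succ.succ), h a q.succ u)
            * h a 0 x := by intro x; ring
      simp only [e2]
      rw [intervalIntegral.integral_const_mul]
      have h0 : (0 : Fin (m+1)).castSucc = 0 := rfl
      have h1 : (0 : Fin (m+1)).succ = 1 := rfl
      rw [h0, h1]; ring
    · intro a ha
      apply ContinuousOn.intervalIntegrable
      have hc0 : ContinuousOn (h a 0) (Set.uIcc (t 0) (t 1)) :=
        (hc a ha 0).mono (uIcc_subset_of_mem hI (ht 0) (ht 1))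
      exact (continuousOn_const.mul hc0).mul continuousOn_const

lemma det_intervalIntegral {I : Set ℝ} (hI : Convex ℝ I) (m : ℕ) (h : Fin m → ℝ → ℝ)
    (t : Fin (m+1) → ℝ) (ht : ∀ q, t q ∈ I) (hc : ∀ i, ContinuousOn (h i) I) :
    Matrix.det (Matrix.of fun i q : Fin m => ∫ s in (t q.castSucc)..(t q.succ), h i s)
      = iterInt m (fun s => Matrix.det (Matrix.of fun i q : Fin m => h i (s q))) t := by
  have e2 : (fun s : Fin m → ℝ => Matrix.det (Matrix.of fun i q : Fin m => h i (s q)))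
      = fun s => ∑ σ ∈ (Finset.univ : Finset (Equiv.Perm (Fin m))),
          ((Equiv.Perm.sign σ : ℤ) : ℝ) * ∏ q, h (σ q) (s q) := by
    funext s
    rw [Matrix.det_apply]
    refine Finset.sum_congr rfl (fun σ _ => ?_)
    simp [Units.smul_def, zsmul_eq_mul]
  have e3 := iterInt_sum_prod_s11 hI m (Finset.univ : Finset (Equiv.Perm (Fin m)))
    (fun σ => ((Equiv.Perm.sign σ : ℤ) : ℝ)) (fun σ q => h (σ q)) t ht
    (fun σ _ q => hc (σ q))
  rw [congrArg (fun F => iterInt m F t) e2]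
  refine Eq.trans ?_ e3.symm
  rw [Matrix.det_apply]
  refine Finset.sum_congr rfl (fun σ _ => ?_)
  simp [Units.smul_def, zsmul_eq_mul]
lemma jacobi_block {p : ℕ} (B : Matrix (Fin p) (Fin p) ℝ) (hB : B.det ≠ 0)
    (C : Matrix (Fin p) (Fin 2) ℝ) (R : Matrix (Fin 2) (Fin p) ℝ)
    (D : Matrix (Fin 2) (Fin 2) ℝ) :
    (Matrix.fromBlocks B C R D).det * B.det =
      (Matrix.fromBlocks B (C.submatrix id (fun _ : Fin 1 => 0))
          (R.submatrix (fun _ : Fin 1 => 0) id)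
          (D.submatrix (fun _ : Fin 1 => 0) (fun _ : Fin 1 => 0))).det *
      (Matrix.fromBlocks B (C.submatrix id (fun _ : Fin 1 => 1))
          (R.submatrix (fun _ : Fin 1 => 1) id)
          (D.submatrix (fun _ : Fin 1 => 1) (fun _ : Fin 1 => 1))).det -
      (Matrix.fromBlocks B (C.submatrix id (fun _ : Fin 1 => 1))
          (R.submatrix (fun _ : Fin 1 => 0) id)
          (D.submatrix (fun _ : Fin 1 => 0) (fun _ : Fin 1 => 1))).det *
      (Matrix.fromBlocks B (C.submatrix id (fun _ : Fin 1 => 0))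
          (R.submatrix (fun _ : Fin 1 => 1) id)
          (D.submatrix (fun _ : Fin 1 => 1) (fun _ : Fin 1 => 0))).det := by
  haveI : Invertible B := B.invertibleOfIsUnitDet (Ne.isUnit hB)
  have key : ∀ a b : Fin 2,
      (Matrix.fromBlocks B (C.submatrix id (fun _ : Fin 1 => b))
          (R.submatrix (fun _ : Fin 1 => a) id)
          (D.submatrix (fun _ : Fin 1 => a) (fun _ : Fin 1 => b))).det
        = B.det * (D - R * ⅟B * C) a b := by
    intro a b
    rw [Matrix.det_fromBlocks₁₁]
    congr 1
    rw [Matrix.det_fin_one]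
    simp only [Matrix.sub_apply, Matrix.submatrix_apply, id_eq, Matrix.mul_apply]
  rw [Matrix.det_fromBlocks₁₁, Matrix.det_fin_two, key, key, key, key]
  ring
lemma hasDerivAt_iteratedDeriv {f : ℝ → ℝ} (hf : ContDiff ℝ (⊤ : ℕ∞) f) (k : ℕ) (t : ℝ) :
    HasDerivAt (iteratedDeriv k f) (iteratedDeriv (k+1) f t) t := by
  have hd : Differentiable ℝ (iteratedDeriv k f) := by
    apply hf.differentiable_iteratedDeriv
    exact_mod_cast lt_top_iff_ne_top.2 (by simp)
  rw [iteratedDeriv_succ]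
  exact (hd t).hasDerivAt

lemma hasDerivAt_detW {j : ℕ} (w : Fin j → ℝ → ℝ) (hw : ∀ p, ContDiff ℝ (⊤ : ℕ∞) (w p))
    (d : Fin j → ℕ) (t : ℝ) :
    HasDerivAt (fun t => Matrix.det (Matrix.of fun p q : Fin j =>
        iteratedDeriv (d q) (w p) t))
      (∑ c : Fin j, Matrix.det (Matrix.of fun p q : Fin j =>
        iteratedDeriv (if q = c then d q + 1 else d q) (w p) t)) t := by
  have e1 : (fun t => Matrix.det (Matrix.of fun p q : Fin j => iteratedDeriv (d q) (w p) t))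
      = fun t => ∑ σ ∈ (Finset.univ : Finset (Equiv.Perm (Fin j))),
          ((Equiv.Perm.sign σ : ℤ) : ℝ) * ∏ q, iteratedDeriv (d q) (w (σ q)) t := by
    funext t
    rw [Matrix.det_apply]
    exact Finset.sum_congr rfl (fun σ _ => by simp [Units.smul_def, zsmul_eq_mul])
  have e2 : (∑ c : Fin j, Matrix.det (Matrix.of fun p q : Fin j =>
        iteratedDeriv (if q = c then d q + 1 else d q) (w p) t))
      = ∑ σ ∈ (Finset.univ : Finset (Equiv.Perm (Fin j))),
          ((Equiv.Perm.sign σ : ℤ) : ℝ) * ∑ c : Fin j,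
            (∏ q ∈ Finset.univ.erase c, iteratedDeriv (d q) (w (σ q)) t) *
              iteratedDeriv (d c + 1) (w (σ c)) t := by
    have step1 : (∑ c : Fin j, Matrix.det (Matrix.of fun p q : Fin j =>
          iteratedDeriv (if q = c then d q + 1 else d q) (w p) t))
        = ∑ c : Fin j, ∑ σ ∈ (Finset.univ : Finset (Equiv.Perm (Fin j))),
            ((Equiv.Perm.sign σ : ℤ) : ℝ) *
              ∏ q, iteratedDeriv (if q = c then d q + 1 else d q) (w (σ q)) t := by
      refine Finset.sum_congr rfl (fun c _ => ?_)
      rw [Matrix.det_apply]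
      exact Finset.sum_congr rfl (fun σ _ => by simp [Units.smul_def, zsmul_eq_mul])
    rw [step1, Finset.sum_comm]
    refine Finset.sum_congr rfl (fun σ _ => ?_)
    rw [Finset.mul_sum]
    refine Finset.sum_congr rfl (fun c _ => ?_)
    congr 1
    rw [← Finset.mul_prod_erase Finset.univ _ (Finset.mem_univ c)]
    rw [if_pos rfl, mul_comm]
    congr 1
    exact Finset.prod_congr rfl (fun q hq => by rw [if_neg (Finset.ne_of_mem_erase hq)])
  rw [e1, e2]
  apply HasDerivAt.fun_sum
  intro σ _
  apply HasDerivAt.const_mul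
  have hp := HasDerivAt.fun_finsetProd (u := Finset.univ) (x := t)
    (f := fun q t => iteratedDeriv (d q) (w (σ q)) t)
    (f' := fun q => iteratedDeriv (d q + 1) (w (σ q)) t)
    (fun q _ => hasDerivAt_iteratedDeriv (hw (σ q)) (d q) t)
  simpa [smul_eq_mul] using hp
/-- Generalized minor: rows `Z 0, ..., Z (j-2), Z i`, derivative orders `1, ..., j`. -/
noncomputable def Mm (Z : ℕ → ℝ → ℝ) (i j : ℕ) (t : ℝ) : ℝ :=
  Matrix.det (Matrix.of fun p q : Fin j =>
    iteratedDeriv ((q : ℕ) + 1) (Z (if (p : ℕ) + 1 < j then (p : ℕ) else i)) t)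

/-- Generalized minor with last column order bumped: orders `1, ..., j-1, j+1`. -/
noncomputable def Mh (Z : ℕ → ℝ → ℝ) (i j : ℕ) (t : ℝ) : ℝ :=
  Matrix.det (Matrix.of fun p q : Fin j =>
    iteratedDeriv (if (q : ℕ) + 1 < j then (q : ℕ) + 1 else j + 1)
      (Z (if (p : ℕ) + 1 < j then (p : ℕ) else i)) t)

lemma hasDerivAt_Mm (Z : ℕ → ℝ → ℝ) (hZ : ∀ r, ContDiff ℝ (⊤ : ℕ∞) (Z r)) (i j : ℕ)
    (hj : 0 < j) (t : ℝ) : HasDerivAt (Mm Z i j) (Mh Z i j t) t := by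
  · have hD := hasDerivAt_detW (fun p : Fin j => Z (if (p : ℕ) + 1 < j then (p : ℕ) else i))
      (fun p => hZ _) (fun q => (q : ℕ) + 1) t
    have collapse : (∑ c : Fin j, Matrix.det (Matrix.of fun p q : Fin j =>
          iteratedDeriv (if q = c then (q : ℕ) + 1 + 1 else (q : ℕ) + 1)
            (Z (if (p : ℕ) + 1 < j then (p : ℕ) else i)) t)) = Mh Z i j t := by
      rw [Finset.sum_eq_single (Fin.last (j-1) |>.cast (by omega))]
      · congr 1
        ext p q
        simp only [Matrix.of_apply]
        congr 1
        by_cases hq : (q : ℕ) + 1 < j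
        · rw [if_neg, if_pos hq]
          intro h
          have : (q : ℕ) = j - 1 := by
            have := congrArg Fin.val h
            simpa using this
          omega
        · have hqv : (q : ℕ) = j - 1 := by omega
          rw [if_pos, if_neg hq]
          · omega
          · apply Fin.ext
            simpa using hqv
      · intro c _ hc
        -- column c and column c+1 are equal
        have hcv : (c : ℕ) + 1 < j := by
          rcases Nat.lt_or_ge ((c : ℕ) + 1) j with h | h
          · exact h
          · exfalso
            apply hc
            apply Fin.ext
            have : (c : ℕ) = j - 1 := by omega
            simpa using this
        apply Matrix.det_zero_of_column_eq (i := c) (j := ⟨(c : ℕ) + 1, hcv⟩)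
        · intro h
          have := congrArg Fin.val h
          simp at this
        · intro k
          have h1 : (⟨(c : ℕ) + 1, hcv⟩ : Fin j) ≠ c := by
            intro h; have := congrArg Fin.val h; simp at this
          simp [h1]
      · intro h
        exact absurd (Finset.mem_univ _) h
    rw [← collapse]
    exact hD
lemma split_det2 {p : ℕ} (M : Matrix (Fin (p+2)) (Fin (p+2)) ℝ) :
    M.det = (Matrix.fromBlocks
      (Matrix.of fun r c : Fin p => M (Fin.castAdd 2 r) (Fin.castAdd 2 c))
      (Matrix.of fun (r : Fin p) (b : Fin 2) => M (Fin.castAdd 2 r) (Fin.natAdd p b))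
      (Matrix.of fun (a : Fin 2) (c : Fin p) => M (Fin.natAdd p a) (Fin.castAdd 2 c))
      (Matrix.of fun a b : Fin 2 => M (Fin.natAdd p a) (Fin.natAdd p b))).det := by
  rw [← Matrix.det_submatrix_equiv_self finSumFinEquiv M]
  congr 1
  ext (r|a) (c|b) <;> rfl

lemma split_det1 {p : ℕ} (M : Matrix (Fin (p+1)) (Fin (p+1)) ℝ) :
    M.det = (Matrix.fromBlocks
      (Matrix.of fun r c : Fin p => M (Fin.castAdd 1 r) (Fin.castAdd 1 c))
      (Matrix.of fun (r : Fin p) (b : Fin 1) => M (Fin.castAdd 1 r) (Fin.natAdd p b))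
      (Matrix.of fun (a : Fin 1) (c : Fin p) => M (Fin.natAdd p a) (Fin.castAdd 1 c))
      (Matrix.of fun a b : Fin 1 => M (Fin.natAdd p a) (Fin.natAdd p b))).det := by
  rw [← Matrix.det_submatrix_equiv_self finSumFinEquiv M]
  congr 1
  ext (r|a) (c|b) <;> rfl

lemma det_of_congr {k : ℕ} (f g : Fin k → Fin k → ℝ) (h : ∀ pp q, f pp q = g pp q) :
    Matrix.det (Matrix.of f) = Matrix.det (Matrix.of g) := by
  congr 1; ext pp q; exact h pp q

lemma dodgson (Z : ℕ → ℝ → ℝ) (p i : ℕ) (t : ℝ) (hB : Mm Z (p-1) p t ≠ 0) :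
    Mh Z i (p+1) t * Mm Z p (p+1) t - Mm Z i (p+1) t * Mh Z p (p+1) t
      = Mm Z i (p+2) t * Mm Z (p-1) p t := by
  classical
  have entry : ∀ (n1 n2 a1 a2 : ℕ), n1 = n2 → a1 = a2 →
      iteratedDeriv n1 (Z a1) t = iteratedDeriv n2 (Z a2) t := by
    rintro n _ a _ rfl rfl; rfl
  set B : Matrix (Fin p) (Fin p) ℝ :=
    Matrix.of fun r c : Fin p => iteratedDeriv ((c : ℕ)+1) (Z r) t with hBdef
  set C : Matrix (Fin p) (Fin 2) ℝ :=
    Matrix.of fun (r : Fin p) (b : Fin 2) => iteratedDeriv (p+1+(b : ℕ)) (Z r) t with hCdef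
  set R : Matrix (Fin 2) (Fin p) ℝ :=
    Matrix.of fun (a : Fin 2) (c : Fin p) =>
      iteratedDeriv ((c : ℕ)+1) (Z (if (a : ℕ) = 0 then p else i)) t with hRdef
  set D : Matrix (Fin 2) (Fin 2) ℝ :=
    Matrix.of fun a b : Fin 2 =>
      iteratedDeriv (p+1+(b : ℕ)) (Z (if (a : ℕ) = 0 then p else i)) t with hDdef
  have hBd : B.det = Mm Z (p-1) p t := by
    unfold Mm
    refine det_of_congr _ _ (fun r c => ?_)
    have hr := r.isLt
    exact entry _ _ _ _ rfl (by split_ifs <;> omega)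
  have hA : Mm Z i (p+2) t = (Matrix.fromBlocks B C R D).det := by
    unfold Mm
    rw [split_det2 (Matrix.of fun pp q : Fin (p+2) =>
      iteratedDeriv ((q : ℕ)+1) (Z (if (pp : ℕ) + 1 < p+2 then (pp : ℕ) else i)) t)]
    congr 1
    ext x y
    rcases x with r|a <;> rcases y with c|b <;>
      simp only [Matrix.fromBlocks_apply₁₁, Matrix.fromBlocks_apply₁₂,
        Matrix.fromBlocks_apply₂₁, Matrix.fromBlocks_apply₂₂, Matrix.of_apply,
        Fin.coe_castAdd, Fin.coe_natAdd]
    · have hr := r.isLt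
      exact entry _ _ _ _ rfl (by split_ifs <;> omega)
    · have hr := r.isLt
      exact entry _ _ _ _ (by omega) (by split_ifs <;> omega)
    · have ha := a.isLt
      exact entry _ _ _ _ rfl (by split_ifs <;> omega)
    · have ha := a.isLt
      exact entry _ _ _ _ (by omega) (by split_ifs <;> omega)
  have minor : ∀ a b : Fin 2,
      (Matrix.fromBlocks B (C.submatrix id (fun _ : Fin 1 => b))
          (R.submatrix (fun _ : Fin 1 => a) id)
          (D.submatrix (fun _ : Fin 1 => a) (fun _ : Fin 1 => b))).det
        = Matrix.det (Matrix.of fun pp q : Fin (p+1) =>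
            iteratedDeriv (if (b : ℕ) = 0 then (q : ℕ)+1 else
                (if (q : ℕ) + 1 < p+1 then (q : ℕ)+1 else p+2))
              (Z (if (pp : ℕ)+1 < p+1 then (pp : ℕ) else (if (a : ℕ) = 0 then p else i)))
              t) := by
    intro a b
    have ha := a.isLt
    have hb := b.isLt
    rw [split_det1 (Matrix.of fun pp q : Fin (p+1) =>
      iteratedDeriv (if (b : ℕ) = 0 then (q : ℕ)+1 else
          (if (q : ℕ) + 1 < p+1 then (q : ℕ)+1 else p+2))
        (Z (if (pp : ℕ)+1 < p+1 then (pp : ℕ) else (if (a : ℕ) = 0 then p else i))) t)]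
    congr 1
    ext x y
    rcases x with r|aa <;> rcases y with c|bb <;>
      simp only [Matrix.fromBlocks_apply₁₁, Matrix.fromBlocks_apply₁₂,
        Matrix.fromBlocks_apply₂₁, Matrix.fromBlocks_apply₂₂, Matrix.of_apply,
        Matrix.submatrix_apply, id_eq, Fin.coe_castAdd, Fin.coe_natAdd, Fin.val_eq_zero,
        hBdef, hCdef, hRdef, hDdef]
    · have hr := r.isLt
      have hc := c.isLt
      refine entry _ _ _ _ ?_ ?_ <;> · split_ifs <;> omega
    · have hr := r.isLt
      refine entry _ _ _ _ ?_ ?_ <;> · split_ifs <;> omega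
    · have hc := c.isLt
      refine entry _ _ _ _ ?_ ?_ <;> · split_ifs <;> omega
    · refine entry _ _ _ _ ?_ ?_ <;> · split_ifs <;> omega
  have m00 : (Matrix.fromBlocks B (C.submatrix id (fun _ : Fin 1 => 0))
      (R.submatrix (fun _ : Fin 1 => 0) id)
      (D.submatrix (fun _ : Fin 1 => 0) (fun _ : Fin 1 => 0))).det = Mm Z p (p+1) t := by
    rw [minor 0 0]
    unfold Mm
    refine det_of_congr _ _ (fun pp q => ?_)
    exact entry _ _ _ _ (by norm_num) rfl
  have m01 : (Matrix.fromBlocks B (C.submatrix id (fun _ : Fin 1 => 1))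
      (R.submatrix (fun _ : Fin 1 => 0) id)
      (D.submatrix (fun _ : Fin 1 => 0) (fun _ : Fin 1 => 1))).det = Mh Z p (p+1) t := by
    rw [minor 0 1]
    unfold Mh
    refine det_of_congr _ _ (fun pp q => ?_)
    exact entry _ _ _ _ (by norm_num) rfl
  have m10 : (Matrix.fromBlocks B (C.submatrix id (fun _ : Fin 1 => 0))
      (R.submatrix (fun _ : Fin 1 => 1) id)
      (D.submatrix (fun _ : Fin 1 => 1) (fun _ : Fin 1 => 0))).det = Mm Z i (p+1) t := by
    rw [minor 1 0]
    unfold Mm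
    refine det_of_congr _ _ (fun pp q => ?_)
    exact entry _ _ _ _ (by norm_num) (by norm_num)
  have m11 : (Matrix.fromBlocks B (C.submatrix id (fun _ : Fin 1 => 1))
      (R.submatrix (fun _ : Fin 1 => 1) id)
      (D.submatrix (fun _ : Fin 1 => 1) (fun _ : Fin 1 => 1))).det = Mh Z i (p+1) t := by
    rw [minor 1 1]
    unfold Mh
    refine det_of_congr _ _ (fun pp q => ?_)
    exact entry _ _ _ _ (by norm_num) (by norm_num)
  have jb := jacobi_block B (hBd ▸ hB) C R D
  rw [m00, m01, m10, m11, ← hA, hBd] at jb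
  linarith [jb]
/-- `f_{i,j} = M_{i,j} / L_j`. -/
noncomputable def Fq (Z : ℕ → ℝ → ℝ) (i j : ℕ) (t : ℝ) : ℝ :=
  Mm Z i j t / Mm Z (j-1) j t

lemma continuous_Mm (Z : ℕ → ℝ → ℝ) (hZ : ∀ r, ContDiff ℝ (⊤ : ℕ∞) (Z r)) (i j : ℕ) :
    Continuous (Mm Z i j) := by
  rcases Nat.eq_zero_or_pos j with rfl | hj
  · have : Mm Z i 0 = fun _ => 1 := funext (fun t => Matrix.det_isEmpty)
    rw [this]; exact continuous_const
  · exact fun_prop_helper (fun t => (hasDerivAt_Mm Z hZ i j hj t).differentiableAt) |>.continuous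
    where fun_prop_helper {f : ℝ → ℝ} (h : ∀ t, DifferentiableAt ℝ f t) : Differentiable ℝ f := h

lemma hasDerivAt_Fq (Z : ℕ → ℝ → ℝ) (hZ : ∀ r, ContDiff ℝ (⊤ : ℕ∞) (Z r)) (i p : ℕ) (t : ℝ)
    (hden : Mm Z p (p+1) t ≠ 0) (hB : Mm Z (p-1) p t ≠ 0) :
    HasDerivAt (Fq Z i (p+1))
      (Mm Z i (p+2) t * Mm Z (p-1) p t / (Mm Z p (p+1) t)^2) t := by
  have h1 := hasDerivAt_Mm Z hZ i (p+1) (by omega) t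
  have h2 := hasDerivAt_Mm Z hZ p (p+1) (by omega) t
  have hd := h1.div h2 hden
  have : Fq Z i (p+1) = fun t => Mm Z i (p+1) t / Mm Z p (p+1) t := by
    funext x; rfl
  rw [this]
  rw [← dodgson Z p i t hB]
  exact hd

lemma Ioo_subset_interior {I : Set ℝ} (hI : Convex ℝ I) {a b : ℝ} (ha : a ∈ I) (hb : b ∈ I) :
    Set.Ioo (min a b) (max a b) ⊆ interior I := by
  rw [IsOpen.subset_interior_iff isOpen_Ioo]
  exact (Set.Ioo_subset_Icc_self).trans (uIcc_subset_of_mem hI ha hb)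

/-- The calculus lemma: determinant with constant-one first row equals the iterated
integral of the determinant of derivatives. -/
lemma calc_main {I : Set ℝ} (hI : Convex ℝ I) (m : ℕ) (g Dg : Fin (m+2) → ℝ → ℝ)
    (hg0 : ∀ x ∈ I, g 0 x = 1)
    (hgc : ∀ i, ContinuousOn (g i) I)
    (hDc : ∀ i, ContinuousOn (Dg i) I)
    (hgd : ∀ i, ∀ x ∈ interior I, HasDerivAt (g i) (Dg i x) x)
    (t : Fin (m+2) → ℝ) (ht : ∀ q, t q ∈ I) :
    Matrix.det (Matrix.of fun i q : Fin (m+2) => g i (t q))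
      = iterInt (m+1) (fun s =>
          Matrix.det (Matrix.of fun i q : Fin (m+1) => Dg i.succ (s q))) t := by
  classical
  set B : Matrix (Fin (m+2)) (Fin (m+2)) ℝ := Matrix.of fun i q =>
    Fin.cases (motive := fun _ => ℝ) (g i (t 0))
      (fun q' => g i (t q'.succ) - g i (t q'.castSucc)) q with hBdef
  have hAB : Matrix.det (Matrix.of fun i q : Fin (m+2) => g i (t q)) = B.det := by
    apply Matrix.det_eq_of_forall_col_eq_smul_add_pred (fun _ => (1 : ℝ))
    · intro i; rfl
    · intro i j
      simp only [Matrix.of_apply, hBdef, Fin.cases_succ]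
      ring
  rw [hAB]
  have hrow : ∀ q : Fin (m+2), q ≠ 0 → B 0 q = 0 := by
    intro q hq
    rcases Fin.eq_zero_or_eq_succ q with rfl | ⟨q', rfl⟩
    · exact absurd rfl hq
    · simp only [hBdef, Matrix.of_apply, Fin.cases_succ]
      rw [hg0 _ (ht q'.succ), hg0 _ (ht q'.castSucc), sub_self]
  have hexp : B.det = B 0 0 * (B.submatrix Fin.succ (Fin.succAbove 0)).det := by
    rw [Matrix.det_succ_row_zero]
    rw [Finset.sum_eq_single 0]
    · simp
    · intro q _ hq
      rw [hrow q hq, mul_zero, zero_mul]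
    · intro h; exact absurd (Finset.mem_univ _) h
  rw [hexp]
  have hB00 : B 0 0 = 1 := hg0 _ (ht 0)
  rw [hB00, one_mul]
  have hsub : (B.submatrix Fin.succ (Fin.succAbove 0)).det
      = Matrix.det (Matrix.of fun i q : Fin (m+1) =>
          ∫ s in (t q.castSucc)..(t q.succ), Dg i.succ s) := by
    refine Eq.trans ?_ rfl
    congr 1
    ext i q
    simp only [Matrix.submatrix_apply, Matrix.of_apply, Fin.succAbove_zero, hBdef,
      Fin.cases_succ]
    rw [intervalIntegral.integral_eq_sub_of_hasDeriv_right
      ((hgc i.succ).mono (uIcc_subset_of_mem hI (ht q.castSucc) (ht q.succ)))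
      (fun x hx => ((hgd i.succ x
        (Ioo_subset_interior hI (ht q.castSucc) (ht q.succ) hx)).hasDerivWithinAt))
      (((hDc i.succ).mono (uIcc_subset_of_mem hI (ht q.castSucc) (ht q.succ))).intervalIntegrable)]
  rw [hsub]
  exact det_intervalIntegral hI (m+1) (fun i => Dg i.succ) t ht (fun i => hDc i.succ)

/-- The Jacobian equals the iterated integral: if all minors `L_j` (`1 ≤ j ≤ n`) are
nonvanishing on `I`, then `𝔍_n(t_1, ..., t_n) = det[ζ'(t_1), ..., ζ'(t_n)]` (here
`n = N + 1`). -/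
theorem statement11 (N : ℕ) (ζ : Fin (N + 1) → ℝ → ℝ)
    (hζ : ∀ p, ContDiff ℝ (⊤ : ℕ∞) (ζ p)) (I : Set ℝ) (hI : Convex ℝ I)
    (hL : ∀ j, 1 ≤ j → j ≤ N + 1 → ∀ t ∈ I, Lf (N + 1) ζ j t ≠ 0) :
    ∀ t : Fin (N + 1) → ℝ, (∀ i, t i ∈ I) →
      Jit (N + 1) ζ N t =
        Matrix.det (Matrix.of fun p q : Fin (N + 1) => deriv (ζ p) (t q)) := by
  classical
  set Z : ℕ → ℝ → ℝ := fun r => if h : r < N + 1 then ζ ⟨r, h⟩ else (fun _ => 0) with hZdef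
  have hZr : ∀ r, Z r = if h : r < N + 1 then ζ ⟨r, h⟩ else fun _ => 0 := fun r => rfl
  have hZ : ∀ r, ContDiff ℝ (⊤ : ℕ∞) (Z r) := by
    intro r
    rw [hZr]
    split_ifs with h
    · exact hζ _
    · exact contDiff_const
  have hZeq : ∀ (r : ℕ) (h : r < N + 1), Z r = ζ ⟨r, h⟩ := by
    intro r h; rw [hZr, dif_pos h]
  -- bridge between Lf and Mm
  have LfMm : ∀ j, j ≤ N + 1 → ∀ x, Lf (N+1) ζ j x = Mm Z (j-1) j x := by
    intro j hj x
    unfold Lf Mm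
    rw [dif_pos hj]
    refine det_of_congr _ _ (fun p q => ?_)
    have hp := p.isLt
    congr 1
    by_cases h : (p : ℕ) + 1 < j
    · rw [if_pos h, hZeq _ (by omega)]
      exact congrArg ζ (Fin.ext (by simp only [Fin.coe_castLE]))
    · rw [if_neg h, hZeq _ (by omega)]
      exact congrArg ζ (Fin.ext (by simp only [Fin.coe_castLE]; omega))
  -- nonvanishing of the L's
  have hMm0 : ∀ (i : ℕ) (x : ℝ), Mm Z i 0 x = 1 := fun i x => Matrix.det_isEmpty
  have hLne : ∀ j, j ≤ N + 1 → ∀ x ∈ I, Mm Z (j-1) j x ≠ 0 := by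
    intro j hj x hx
    rcases Nat.eq_zero_or_pos j with rfl | hjpos
    · rw [hMm0]; norm_num
    · rw [← LfMm j hj x]; exact hL j hjpos hj x hx
  -- the local derivative function
  set Df : ℕ → ℕ → ℝ → ℝ :=
    fun i j x => Mm Z i (j+1) x * Mm Z (j-2) (j-1) x / (Mm Z (j-1) j x)^2 with hDfdef
  -- continuity facts
  have hFqc : ∀ (i k : ℕ), k + 1 ≤ N + 1 → ContinuousOn (Fq Z i (k+1)) I := by
    intro i k hk
    apply ContinuousOn.div ((continuous_Mm Z hZ i (k+1)).continuousOn)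
      ((continuous_Mm Z hZ ((k+1)-1) (k+1)).continuousOn)
    intro x hx
    exact hLne (k+1) hk x hx
  have hDfc : ∀ (i k : ℕ), k ≤ N + 1 → ContinuousOn (Df i k) I := by
    intro i k hk
    apply ContinuousOn.div
    · exact ((continuous_Mm Z hZ i (k+1)).continuousOn).mul
        ((continuous_Mm Z hZ (k-2) (k-1)).continuousOn)
    · exact ((continuous_Mm Z hZ (k-1) k).continuousOn).pow 2
    · intro x hx
      exact pow_ne_zero 2 (hLne k hk x hx)
  -- main induction
  have key : ∀ m : ℕ, m ≤ N → ∀ t : Fin (m+1) → ℝ, (∀ q, t q ∈ I) →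
      Jit (N+1) ζ m t = Matrix.det (Matrix.of fun i q : Fin (m+1) =>
        Df (N - m + (i : ℕ)) (N - m) (t q)) := by
    intro m
    induction m with
    | zero =>
      intro _ t ht
      have hJ : Jit (N+1) ζ 0 t = Lf (N+1) ζ (N+1-2) (t 0) * Lf (N+1) ζ (N+1) (t 0) /
          (Lf (N+1) ζ (N+1-1) (t 0))^2 := rfl
      rw [hJ]
      have hdet : Matrix.det (Matrix.of fun i q : Fin 1 =>
          Df (N - 0 + (i : ℕ)) (N - 0) (t q)) = Df N N (t 0) := by
        rw [Matrix.det_fin_one]; norm_num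
      rw [hdet]
      have hDfNN : Df N N (t 0) = Mm Z N (N+1) (t 0) * Mm Z (N-2) (N-1) (t 0) /
          (Mm Z (N-1) N (t 0))^2 := rfl
      rw [hDfNN]
      rw [LfMm (N+1-2) (by omega), LfMm (N+1) (by omega), LfMm (N+1-1) (by omega)]
      simp only [show N+1-2-1 = N-2 from by omega, show N+1-1-1 = N-1 from by omega,
        show N+1-2 = N-1 from by omega, show N+1-1 = N from by omega,
        show N-1-1 = N-2 from by omega]
      ring
    | succ m ih =>
      intro hm t ht
      have hmN : m ≤ N := by omega
      set k' : ℕ := N - (m+1) with hk'def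
      have hkk : N - m = k' + 1 := by omega
      have hnm2 : N + 1 - (m + 2) = k' := by omega
      -- unfold Jit
      have hJ : Jit (N+1) ζ (m+1) t = (∏ j : Fin (m + 2),
          Lf (N+1) ζ (N+1 - (m + 2) - 1) (t j) * Lf (N+1) ζ (N+1 - (m + 2) + 1) (t j) /
            (Lf (N+1) ζ (N+1 - (m + 2)) (t j)) ^ 2) *
          iterInt (m + 1) (Jit (N+1) ζ m) t := rfl
      rw [hJ]
      -- the product factor equals ∏ Df k' k'
      have hfac : (∏ j : Fin (m + 2),
          Lf (N+1) ζ (N+1 - (m + 2) - 1) (t j) * Lf (N+1) ζ (N+1 - (m + 2) + 1) (t j) /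
            (Lf (N+1) ζ (N+1 - (m + 2)) (t j)) ^ 2)
          = ∏ j : Fin (m + 2), Df k' k' (t j) := by
        refine Finset.prod_congr rfl (fun j _ => ?_)
        rw [hnm2]
        rw [LfMm (k'-1) (by omega), LfMm (k'+1) (by omega), LfMm k' (by omega)]
        rw [hDfdef]
        have e1 : k' - 1 - 1 = k' - 2 := by omega
        have e2 : k' + 1 - 1 = k' := by omega
        rw [e1, e2]
        ring
      rw [hfac]
      -- nonvanishing of pivots on I
      have hpiv : ∀ x ∈ I, Mm Z k' (k'+1) x ≠ 0 := by
        intro x hx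
        have := hLne (k'+1) (by omega) x hx
        simpa using this
      have hB : ∀ x ∈ I, Mm Z (k'-1) k' x ≠ 0 := fun x hx => by
        have := hLne k' (by omega) x hx; simpa using this
      -- Step B : calculus lemma for g i = Fq Z (k' + i) (k'+1)
      have hg0' : ∀ x ∈ I, (fun i : Fin (m+2) => Fq Z (k' + (i : ℕ)) (k'+1)) 0 x = 1 := by
        intro x hx
        show Fq Z (k' + ((0 : Fin (m+2)) : ℕ)) (k'+1) x = 1
        have e0 : k' + ((0 : Fin (m+2)) : ℕ) = k' := by simp
        rw [e0]
        show Mm Z k' (k'+1) x / Mm Z ((k'+1)-1) (k'+1) x = 1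
        have e1 : k' + 1 - 1 = k' := by omega
        rw [e1, div_self (hpiv x hx)]
      have hcalc : Matrix.det (Matrix.of fun i q : Fin (m+2) =>
            Fq Z (k' + (i : ℕ)) (k'+1) (t q))
          = iterInt (m+1) (fun s => Matrix.det (Matrix.of fun i q : Fin (m+1) =>
              Df (k' + ((i.succ : Fin (m+2)) : ℕ)) (k'+1) (s q))) t :=
        calc_main hI m
          (fun i : Fin (m+2) => Fq Z (k' + (i : ℕ)) (k'+1))
          (fun i : Fin (m+2) => Df (k' + (i : ℕ)) (k'+1))
          hg0'
          (fun i => hFqc _ k' (by omega))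
          (fun i => by
            have := hDfc (k' + (i : ℕ)) (k'+1) (by omega)
            simpa using this)
          (by
            intro i x hx
            have hxI : x ∈ I := interior_subset hx
            exact hasDerivAt_Fq Z hZ (k' + (i : ℕ)) k' x (hpiv x hxI) (hB x hxI))
          t ht
      -- Step A : pull out the column factors
      have stepA : Matrix.det (Matrix.of fun i q : Fin (m+2) =>
          Df (k' + (i : ℕ)) k' (t q))
          = (∏ q : Fin (m+2), Df k' k' (t q)) *
            Matrix.det (Matrix.of fun i q : Fin (m+2) =>
              Fq Z (k' + (i : ℕ)) (k'+1) (t q)) := by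
        rw [← Matrix.det_mul_row (fun q => Df k' k' (t q))]
        refine det_of_congr _ _ (fun i q => ?_)
        have hne := hpiv (t q) (ht q)
        have hC := hB (t q) (ht q)
        show Mm Z (k' + (i : ℕ)) (k'+1) (t q) * Mm Z (k'-2) (k'-1) (t q) /
            (Mm Z (k'-1) k' (t q))^2
          = (Mm Z k' (k'+1) (t q) * Mm Z (k'-2) (k'-1) (t q) / (Mm Z (k'-1) k' (t q))^2) *
            (Mm Z (k' + (i : ℕ)) (k'+1) (t q) / Mm Z ((k'+1)-1) (k'+1) (t q))
        have e2 : k' + 1 - 1 = k' := by omega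
        rw [e2]
        by_cases hc0 : Mm Z (k'-1) k' (t q) = 0
        · exact absurd hc0 hC
        · field_simp
      rw [stepA, hcalc]
      congr 1
      refine iterInt_congr_s11 hI (m+1) _ _ t ht ?_
      intro s hs
      rw [ih hmN s hs]
      refine det_of_congr _ _ (fun i q => ?_)
      rw [hkk]
      exact congrArg (fun z => Df z (k'+1) (s q)) (by simp only [Fin.val_succ]; omega)
  -- conclude
  intro t ht
  rw [key N (le_refl N) t ht]
  refine det_of_congr _ _ (fun i q => ?_)
  have h1 : Df (N - N + (i : ℕ)) (N - N) (t q) = Mm Z (i : ℕ) 1 (t q) := by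
    simp only [Nat.sub_self]
    show Mm Z (0 + (i : ℕ)) 1 (t q) * Mm Z 0 0 (t q) / (Mm Z 0 0 (t q))^2
      = Mm Z (i : ℕ) 1 (t q)
    simp [hMm0]
  rw [h1]
  have h2 : Mm Z (i : ℕ) 1 (t q) = iteratedDeriv 1 (Z i) (t q) := by
    unfold Mm
    rw [Matrix.det_fin_one]
    norm_num
  rw [h2, iteratedDeriv_one, hZeq _ i.isLt]
end

section
/- Under the hypotheses that c·2^{−k_j} ≤ |L_j(t)| ≤ C·2^{−k_j} on I for 1 ≤ j ≤ n (with L_0 = L_{−1} ≡ 1, k_0 = k_{−1} = 0), the iterated integrals 𝔍_m defined recursively by 𝔍_1 = L_{n−2}L_n/L_{n−1}² and 𝔍_m(t_1,...,t_m) = (∏_{j=1}^m L_{n−m−1}(t_j)L_{n−m+1}(t_j)/L_{n−m}(t_j)²)·∫_{t_1}^{t_2}⋯∫_{t_{m−1}}^{t_m} 𝔍_{m−1} satisfy |𝔍_m(t_1,...,t_m)| ≈_m 2^{(m+1)k_{n−m} − m·k_{n−m−1} − k_n} · |v(t_1, ..., t_m)| for all 1 ≤ m ≤ n, where v is the Vandermonde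 determinant. -/
open MeasureTheory

namespace StAux

lemma continuous_consP {m : ℕ} :
    Continuous (fun p : ℝ × (Fin m → ℝ) => (Fin.cons p.1 p.2 : Fin (m+1) → ℝ)) := by
  apply continuous_pi
  intro i
  refine Fin.cases ?_ ?_ i
  · simpa using continuous_fst
  · intro j
    simpa using (by exact (continuous_apply j).comp continuous_snd : Continuous fun a : ℝ × (Fin m → ℝ) => a.2 j)

theorem iterInt_cont (m : ℕ) :
    ∀ (X : Type) (_ : TopologicalSpace X) (F : X → (Fin m → ℝ) → ℝ),
    Continuous (fun p : X × (Fin m → ℝ) => F p.1 p.2) →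
    Continuous fun p : X × (Fin (m+1) → ℝ) => iterInt m (F p.1) p.2 := by
  induction m with
  | zero =>
      intro X iX F hF
      show Continuous fun p : X × (Fin 1 → ℝ) => F p.1 ![]
      exact hF.comp (continuous_fst.prodMk continuous_const)
  | succ m ih =>
      intro X iX F hF
      show Continuous fun p : X × (Fin (m+2) → ℝ) =>
        ∫ s in (p.2 0)..(p.2 1), iterInt m (fun u => F p.1 (Fin.cons s u)) (fun i => p.2 i.succ)
      set F' : (X × ℝ) → (Fin m → ℝ) → ℝ := fun q u => F q.1 (Fin.cons q.2 u) with hF'def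
      have hF' : Continuous (fun p : (X × ℝ) × (Fin m → ℝ) => F' p.1 p.2) := by
        have : Continuous (fun p : (X × ℝ) × (Fin m → ℝ) =>
            ((p.1.1, (Fin.cons p.1.2 p.2 : Fin (m+1) → ℝ)) : X × (Fin (m+1) → ℝ))) := by
          refine Continuous.prodMk (continuous_fst.fst) ?_
          exact continuous_consP.comp (Continuous.prodMk continuous_fst.snd continuous_snd)
        exact hF.comp this
      have H := ih (X × ℝ) inferInstance F' hF'
      -- the parametrized integrand
      set f : (X × (Fin (m+2) → ℝ)) → ℝ → ℝ :=
        fun p s => iterInt m (F' (p.1, s)) (fun i => p.2 i.succ) with hfdef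
      have hf : Continuous (Function.uncurry f) := by
        have : Continuous (fun q : (X × (Fin (m+2) → ℝ)) × ℝ =>
            (((q.1.1, q.2), fun i => q.1.2 i.succ) : (X × ℝ) × (Fin (m+1) → ℝ))) := by
          refine Continuous.prodMk (Continuous.prodMk continuous_fst.fst continuous_snd) ?_
          exact continuous_pi fun i => (continuous_apply i.succ).comp continuous_fst.snd
        exact H.comp this
      have hint : ∀ (p : X × (Fin (m+2) → ℝ)) (a b : ℝ),
          IntervalIntegrable (f p) volume a b := by
        intro p a b
        exact (hf.comp (Continuous.prodMk continuous_const continuous_id)).intervalIntegrable a b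
      have key : ∀ p : X × (Fin (m+2) → ℝ),
          (∫ s in (p.2 0)..(p.2 1), f p s) =
            (∫ s in (0:ℝ)..(p.2 1), f p s) - ∫ s in (0:ℝ)..(p.2 0), f p s := by
        intro p
        rw [intervalIntegral.integral_interval_sub_left (hint p 0 (p.2 1)) (hint p 0 (p.2 0))]
      have c1 : Continuous fun p : X × (Fin (m+2) → ℝ) => ∫ s in (0:ℝ)..(p.2 1), f p s :=
        intervalIntegral.continuous_parametric_intervalIntegral_of_continuous hf
          ((continuous_apply (1 : Fin (m+2))).comp continuous_snd)
      have c0 : Continuous fun p : X × (Fin (m+2) → ℝ) => ∫ s in (0:ℝ)..(p.2 0), f p s :=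
        intervalIntegral.continuous_parametric_intervalIntegral_of_continuous hf
          ((continuous_apply (0 : Fin (m+2))).comp continuous_snd)
      have : (fun p : X × (Fin (m+2) → ℝ) => ∫ s in (p.2 0)..(p.2 1), f p s) =
          fun p => (∫ s in (0:ℝ)..(p.2 1), f p s) - ∫ s in (0:ℝ)..(p.2 0), f p s := by
        funext p; exact key p
      rw [show (fun p : X × (Fin (m+2) → ℝ) =>
        ∫ s in (p.2 0)..(p.2 1), iterInt m (fun u => F p.1 (Fin.cons s u)) (fun i => p.2 i.succ))
          = fun p => ∫ s in (p.2 0)..(p.2 1), f p s from rfl, this]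
      exact c1.sub c0

theorem iterInt_continuous {m : ℕ} {F : (Fin m → ℝ) → ℝ} (hF : Continuous F) :
    Continuous (iterInt m F) := by
  have h := iterInt_cont m Unit inferInstance (fun _ => F) (hF.comp continuous_snd)
  exact h.comp ((continuous_const (y := ())).prodMk continuous_id)

lemma iterInt_zero (F : (Fin 0 → ℝ) → ℝ) (t : Fin 1 → ℝ) : iterInt 0 F t = F ![] := rfl

lemma iterInt_succ (m : ℕ) (F : (Fin (m+1) → ℝ) → ℝ) (t : Fin (m+2) → ℝ) :
    iterInt (m+1) F t
      = ∫ s in (t 0)..(t 1), iterInt m (fun u => F (Fin.cons s u)) (fun i => t i.succ) := rfl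

theorem iterInt_congr {S : Set ℝ} (hS : S.OrdConnected) :
    ∀ (m : ℕ) (F F' : (Fin m → ℝ) → ℝ),
    (∀ u : Fin m → ℝ, (∀ i, u i ∈ S) → F u = F' u) →
    ∀ t : Fin (m+1) → ℝ, (∀ i, t i ∈ S) → iterInt m F t = iterInt m F' t := by
  intro m
  induction m with
  | zero =>
      intro F F' h t ht
      exact h ![] (fun i => i.elim0)
  | succ m ih =>
      intro F F' h t ht
      show (∫ s in (t 0)..(t 1), iterInt m (fun u => F (Fin.cons s u)) (fun i => t i.succ))
        = ∫ s in (t 0)..(t 1), iterInt m (fun u => F' (Fin.cons s u)) (fun i => t i.succ)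
      apply intervalIntegral.integral_congr
      intro s hs
      have hsS : s ∈ S := hS.uIcc_subset (ht 0) (ht 1) hs
      refine ih _ _ ?_ _ (fun i => ht i.succ)
      intro u hu
      refine h _ ?_
      intro i
      refine Fin.cases ?_ ?_ i
      · simpa using hsS
      · intro j; simpa using hu j

theorem iterInt_const_mul : ∀ (m : ℕ) (c : ℝ) (F : (Fin m → ℝ) → ℝ) (t : Fin (m+1) → ℝ),
    iterInt m (fun u => c * F u) t = c * iterInt m F t := by
  intro m
  induction m with
  | zero => intro c F t; rfl
  | succ m ih =>
      intro c F t
      show (∫ s in (t 0)..(t 1), iterInt m (fun u => c * F (Fin.cons s u)) (fun i => t i.succ))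
        = c * ∫ s in (t 0)..(t 1), iterInt m (fun u => F (Fin.cons s u)) (fun i => t i.succ)
      rw [← intervalIntegral.integral_const_mul]
      congr 1
      funext s
      exact ih c _ _

/-- iterated integral of a finite sum of products of one-variable continuous functions -/
theorem iterInt_sum_prod {ι : Type} (S : Finset ι) :
    ∀ (m : ℕ) (a : ι → ℝ) (f : ι → Fin m → ℝ → ℝ),
    (∀ σ j, Continuous (f σ j)) →
    ∀ t : Fin (m+1) → ℝ,
    iterInt m (fun u => ∑ σ ∈ S, a σ * ∏ j, f σ j (u j)) t
      = ∑ σ ∈ S, a σ * ∏ j : Fin m, ∫ s in (t j.castSucc)..(t j.succ), f σ j s := by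
  intro m
  induction m with
  | zero =>
      intro a f hf t
      show (∑ σ ∈ S, a σ * ∏ j : Fin 0, f σ j (![] j)) = _
      simp
  | succ m ih =>
      intro a f hf t
      rw [iterInt_succ]
      have step1 : ∀ s : ℝ,
          (iterInt m (fun u : Fin m → ℝ => ∑ σ ∈ S, a σ * ∏ j : Fin (m+1), f σ j ((Fin.cons s u : Fin (m+1) → ℝ) j))
            (fun i => t i.succ))
          = ∑ σ ∈ S, (a σ * f σ 0 s) *
              ∏ j : Fin m, ∫ x in (t j.castSucc.succ)..(t j.succ.succ), f σ j.succ x := by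
        intro s
        have e1 : (fun u : Fin m → ℝ =>
              ∑ σ ∈ S, a σ * ∏ j : Fin (m+1), f σ j ((Fin.cons s u : Fin (m+1) → ℝ) j))
            = fun u => ∑ σ ∈ S, (a σ * f σ 0 s) * ∏ j : Fin m, f σ j.succ (u j) := by
          funext u
          refine Finset.sum_congr rfl (fun σ _ => ?_)
          rw [Fin.prod_univ_succ]
          simp [mul_assoc]
        rw [e1, ih (fun σ => a σ * f σ 0 s) (fun σ j => f σ j.succ) (fun σ j => hf σ j.succ)]
      refine Eq.trans (intervalIntegral.integral_congr
        (g := fun s => ∑ σ ∈ S, (a σ * f σ 0 s) *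
          ∏ j : Fin m, ∫ x in (t j.castSucc.succ)..(t j.succ.succ), f σ j.succ x)
        (fun s _ => step1 s)) ?_
      rw [intervalIntegral.integral_finset_sum]
      · refine Finset.sum_congr rfl (fun σ _ => ?_)
        have : (∫ s in (t 0)..(t 1), (a σ * f σ 0 s) *
              ∏ j : Fin m, ∫ x in (t j.castSucc.succ)..(t j.succ.succ), f σ j.succ x)
            = (∫ s in (t 0)..(t 1), f σ 0 s) * (a σ *
              ∏ j : Fin m, ∫ x in (t j.castSucc.succ)..(t j.succ.succ), f σ j.succ x) := by
          rw [← intervalIntegral.integral_mul_const]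
          congr 1; funext s; ring
        rw [this, Fin.prod_univ_succ]
        have hP : (∏ j : Fin m, ∫ x in (t (j.succ).castSucc)..(t (j.succ).succ), f σ j.succ x)
            = ∏ j : Fin m, ∫ x in (t j.castSucc.succ)..(t j.succ.succ), f σ j.succ x := by
          refine Finset.prod_congr rfl (fun j _ => ?_)
          rw [Fin.succ_castSucc]
        rw [hP]
        have h0 : (0 : Fin (m+1)).castSucc = 0 := rfl
        have h1 : (0 : Fin (m+1)).succ = 1 := rfl
        rw [h0, h1]
        ring
      · intro σ _
        apply ContinuousOn.intervalIntegrable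
        apply Continuous.continuousOn
        exact (continuous_const.mul (hf σ 0)).mul continuous_const

theorem vmd_eq_det (m : ℕ) (u : Fin m → ℝ) : vmd m u = (Matrix.vandermonde u).det :=
  (Matrix.det_vandermonde u).symm

theorem vmd_sum (m : ℕ) (u : Fin m → ℝ) :
    vmd m u = ∑ σ : Equiv.Perm (Fin m),
      ((Equiv.Perm.sign σ : ℤ) : ℝ) * ∏ j : Fin m, u j ^ ((σ j : ℕ)) := by
  rw [vmd_eq_det, ← Matrix.det_transpose, Matrix.det_apply']
  refine Finset.sum_congr rfl (fun σ _ => ?_)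
  congr 1

theorem vmd_perm (m : ℕ) (u : Fin m → ℝ) (σ : Equiv.Perm (Fin m)) :
    vmd m (u ∘ σ) = ((Equiv.Perm.sign σ : ℤ) : ℝ) * vmd m u := by
  rw [vmd_eq_det, vmd_eq_det]
  exact Matrix.det_permute σ (Matrix.vandermonde u)

theorem vmd_abs_perm (m : ℕ) (u : Fin m → ℝ) (σ : Equiv.Perm (Fin m)) :
    |vmd m (u ∘ σ)| = |vmd m u| := by
  rw [vmd_perm, abs_mul]
  rcases Int.units_eq_one_or (Equiv.Perm.sign σ) with h | h <;> simp [h]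

/-- the matrix of increments -/
noncomputable def Dmat (m : ℕ) (t : Fin (m+1) → ℝ) : Matrix (Fin m) (Fin m) ℝ :=
  Matrix.of fun i e => t i.succ ^ ((e : ℕ) + 1) - t i.castSucc ^ ((e : ℕ) + 1)

theorem det_Dmat (m : ℕ) (t : Fin (m+1) → ℝ) : (Dmat m t).det = vmd (m+1) t := by
  classical
  set W : Matrix (Fin (m+1)) (Fin (m+1)) ℝ := Matrix.of fun p q =>
    Fin.cases (t 0 ^ (q : ℕ)) (fun i => t i.succ ^ (q : ℕ) - t i.castSucc ^ (q : ℕ)) p with hW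
  have h1 : (Matrix.vandermonde t).det = W.det := by
    apply Matrix.det_eq_of_forall_row_eq_smul_add_pred (fun _ => (1 : ℝ))
    · intro j; simp [hW, Matrix.vandermonde]
    · intro i j
      simp [hW, Matrix.vandermonde]
  have h2 : W.det = (Dmat m t).det := by
    rw [Matrix.det_succ_column_zero]
    rw [Fin.sum_univ_succ]
    have hz : ∀ i : Fin m, ((-1 : ℝ)) ^ ((i.succ : Fin (m+1)) : ℕ) * W i.succ 0 *
        (W.submatrix i.succ.succAbove Fin.succ).det = 0 := by
      intro i
      have : W i.succ 0 = t i.succ ^ ((0 : Fin (m+1)) : ℕ) - t i.castSucc ^ ((0 : Fin (m+1)) : ℕ) := rfl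
      simp [this]
    rw [Finset.sum_eq_zero (fun i _ => hz i), add_zero]
    have h0 : W 0 0 = 1 := by simp [hW]
    rw [h0, Fin.succAbove_zero]
    have : W.submatrix Fin.succ Fin.succ = Dmat m t := by
      ext p q
      simp [hW, Dmat, Fin.val_succ]
    rw [this]
    simp
  rw [vmd_eq_det, h1, h2]

theorem iterInt_vmd (m : ℕ) (t : Fin (m+1) → ℝ) :
    iterInt m (vmd m) t = (∏ j : Fin m, ((j : ℕ) + 1 : ℝ))⁻¹ * vmd (m+1) t := by
  classical
  have h1 : (vmd m) = fun u : Fin m → ℝ => ∑ σ : Equiv.Perm (Fin m),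
      ((Equiv.Perm.sign σ : ℤ) : ℝ) * ∏ j : Fin m, (fun x : ℝ => x ^ ((σ j : ℕ))) (u j) :=
    funext (vmd_sum m)
  rw [h1, iterInt_sum_prod Finset.univ m _ _ (fun σ j => continuous_pow _) t]
  have hstep : ∀ σ : Equiv.Perm (Fin m),
      (∏ j : Fin m, ∫ x in (t j.castSucc)..(t j.succ), x ^ ((σ j : ℕ)))
        = (∏ j : Fin m, ((j : ℕ) + 1 : ℝ))⁻¹ * ∏ j : Fin m, Dmat m t j (σ j) := by
    intro σ
    have e1 : ∀ j : Fin m, (∫ x in (t j.castSucc)..(t j.succ), x ^ ((σ j : ℕ)))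
        = Dmat m t j (σ j) * (((σ j : ℕ) : ℝ) + 1)⁻¹ := by
      intro j
      rw [integral_pow, div_eq_mul_inv]
      rfl
    rw [Finset.prod_congr rfl (fun j _ => e1 j), Finset.prod_mul_distrib]
    have e2 : (∏ j : Fin m, (((σ j : ℕ) : ℝ) + 1)⁻¹) = ∏ j : Fin m, (((j : ℕ) : ℝ) + 1)⁻¹ :=
      Equiv.prod_comp σ (fun j => (((j : ℕ) : ℝ) + 1)⁻¹)
    rw [e2, Finset.prod_inv_distrib]
    exact mul_comm _ _
  rw [Finset.sum_congr rfl (fun σ _ => by rw [hstep σ])]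
  have e3 : ∀ σ : Equiv.Perm (Fin m),
      ((Equiv.Perm.sign σ : ℤ) : ℝ) * ((∏ j : Fin m, ((j : ℕ) + 1 : ℝ))⁻¹ *
        ∏ j : Fin m, Dmat m t j (σ j))
      = (∏ j : Fin m, ((j : ℕ) + 1 : ℝ))⁻¹ *
        (((Equiv.Perm.sign σ : ℤ) : ℝ) * ∏ j : Fin m, (Dmat m t).transpose (σ j) j) := by
    intro σ
    have h : (∏ j : Fin m, Dmat m t j (σ j)) = ∏ j : Fin m, (Dmat m t).transpose (σ j) j := rfl
    rw [← h]; ring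
  rw [Finset.sum_congr rfl (fun σ _ => e3 σ), ← Finset.mul_sum]
  rw [← Matrix.det_apply', Matrix.det_transpose, det_Dmat]

theorem iterInt_cont1 {m : ℕ} (F : ℝ → (Fin m → ℝ) → ℝ)
    (hF : Continuous (fun p : ℝ × (Fin m → ℝ) => F p.1 p.2)) (t : Fin (m+1) → ℝ) :
    Continuous fun s : ℝ => iterInt m (F s) t := by
  have h := iterInt_cont m ℝ inferInstance F hF
  exact h.comp (continuous_id.prodMk continuous_const)

theorem iterInt_cont2 {m : ℕ} (F : ℝ → ℝ → (Fin m → ℝ) → ℝ)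
    (hF : Continuous (fun p : (ℝ × ℝ) × (Fin m → ℝ) => F p.1.1 p.1.2 p.2)) (t : Fin (m+1) → ℝ) :
    Continuous fun p : ℝ × ℝ => iterInt m (F p.1 p.2) t := by
  have h := iterInt_cont m (ℝ × ℝ) inferInstance (fun q => F q.1 q.2) hF
  exact h.comp (continuous_id.prodMk continuous_const)

theorem iterInt_neg (m : ℕ) (F : (Fin m → ℝ) → ℝ) (t : Fin (m+1) → ℝ) :
    iterInt m (fun u => -F u) t = -iterInt m F t := by
  have h := iterInt_const_mul m (-1) F t
  simpa using h

/-- monotone sandwich through iterated integrals -/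
theorem iterInt_sandwich : ∀ (m : ℕ) (g V : (Fin m → ℝ) → ℝ), Continuous g → Continuous V →
    ∀ (A B : ℝ) (t : Fin (m+1) → ℝ), Monotone t →
    (∀ u : Fin m → ℝ, (∀ j : Fin m, u j ∈ Set.Icc (t j.castSucc) (t j.succ)) →
      0 ≤ V u ∧ A * V u ≤ g u ∧ g u ≤ B * V u) →
    0 ≤ iterInt m V t ∧ A * iterInt m V t ≤ iterInt m g t ∧ iterInt m g t ≤ B * iterInt m V t := by
  intro m
  induction m with
  | zero =>
      intro g V hg hV A B t ht h
      exact h ![] (fun j => j.elim0)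
  | succ m ih =>
      intro g V hg hV A B t ht h
      have t01 : t 0 ≤ t 1 := ht (by norm_num [Fin.le_def])
      set r : Fin (m+1) → ℝ := fun i => t i.succ with hr
      have hrmono : Monotone r := fun i j hij => ht (Fin.strictMono_succ.monotone hij)
      set Φg : ℝ → ℝ := fun s => iterInt m (fun u => g (Fin.cons s u)) r with hΦg
      set ΦV : ℝ → ℝ := fun s => iterInt m (fun u => V (Fin.cons s u)) r with hΦV
      have hcg : Continuous Φg := iterInt_cont1 _ (hg.comp continuous_consP) r
      have hcV : Continuous ΦV := iterInt_cont1 _ (hV.comp continuous_consP) r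
      have key : ∀ s ∈ Set.Icc (t 0) (t 1),
          0 ≤ ΦV s ∧ A * ΦV s ≤ Φg s ∧ Φg s ≤ B * ΦV s := by
        intro s hs
        refine ih _ _ (hg.comp (continuous_consP.comp (continuous_const.prodMk continuous_id)))
          (hV.comp (continuous_consP.comp (continuous_const.prodMk continuous_id))) A B r hrmono ?_
        intro u hu
        refine h (Fin.cons s u) ?_
        intro j
        refine Fin.cases ?_ ?_ j
        · simpa using hs
        · intro i
          rw [← Fin.succ_castSucc]
          simpa using hu i
      have hVnn : 0 ≤ ∫ s in (t 0)..(t 1), ΦV s :=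
        intervalIntegral.integral_nonneg t01 (fun s hs => (key s hs).1)
      have hlow : A * ∫ s in (t 0)..(t 1), ΦV s ≤ ∫ s in (t 0)..(t 1), Φg s := by
        rw [← intervalIntegral.integral_const_mul]
        apply intervalIntegral.integral_mono_on t01
          ((continuous_const.mul hcV).intervalIntegrable _ _) (hcg.intervalIntegrable _ _)
        intro s hs; exact (key s hs).2.1
      have hhigh : (∫ s in (t 0)..(t 1), Φg s) ≤ B * ∫ s in (t 0)..(t 1), ΦV s := by
        rw [← intervalIntegral.integral_const_mul]
        apply intervalIntegral.integral_mono_on t01 (hcg.intervalIntegrable _ _)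
          ((continuous_const.mul hcV).intervalIntegrable _ _)
        intro s hs; exact (key s hs).2.2
      exact ⟨hVnn, hlow, hhigh⟩

/-- double interval integral of a continuous antisymmetric function over a square vanishes -/
theorem double_antisym_zero (g : ℝ → ℝ → ℝ) (hg : Continuous (Function.uncurry g))
    (hanti : ∀ s u, g u s = - g s u) (a b : ℝ) :
    (∫ s in a..b, ∫ u in a..b, g s u) = 0 := by
  have main : ∀ a b : ℝ, a ≤ b → (∫ s in a..b, ∫ u in a..b, g s u) = 0 := by
    intro a b hab
    have hInt : Integrable (Function.uncurry g)
        ((volume.restrict (Set.Ioc a b)).prod (volume.restrict (Set.Ioc a b))) := by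
      rw [Measure.prod_restrict]
      exact (hg.continuousOn.integrableOn_compact (isCompact_Icc.prod isCompact_Icc)).mono_set
        (Set.prod_mono Set.Ioc_subset_Icc_self Set.Ioc_subset_Icc_self)
    have e1 : (∫ s in a..b, ∫ u in a..b, g s u)
        = ∫ s in Set.Ioc a b, ∫ u in Set.Ioc a b, g s u := by
      rw [intervalIntegral.integral_of_le hab]
      apply setIntegral_congr_fun measurableSet_Ioc
      intro s _
      dsimp only
      rw [intervalIntegral.integral_of_le hab]
    have e2 : (∫ s in Set.Ioc a b, ∫ u in Set.Ioc a b, g s u)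
        = ∫ u in Set.Ioc a b, ∫ s in Set.Ioc a b, g s u := by
      exact MeasureTheory.integral_integral_swap hInt
    have e3 : (∫ u in Set.Ioc a b, ∫ s in Set.Ioc a b, g s u)
        = - ∫ u in Set.Ioc a b, ∫ s in Set.Ioc a b, g u s := by
      rw [← integral_neg]
      apply setIntegral_congr_fun measurableSet_Ioc
      intro u _
      dsimp only
      rw [← integral_neg]
      apply setIntegral_congr_fun measurableSet_Ioc
      intro s _
      dsimp only
      exact hanti u s
    have : (∫ s in a..b, ∫ u in a..b, g s u) = - ∫ s in a..b, ∫ u in a..b, g s u := by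
      nth_rewrite 1 [e1, e2, e3]
      rw [e1]
    linarith
  rcases le_total a b with hab | hba
  · exact main a b hab
  · have h1 : ∀ s : ℝ, (∫ u in a..b, g s u) = - ∫ u in b..a, g s u :=
      fun s => intervalIntegral.integral_symm (f := g s) (μ := volume) b a
    calc (∫ s in a..b, ∫ u in a..b, g s u)
        = - ∫ s in b..a, ∫ u in a..b, g s u :=
          intervalIntegral.integral_symm (f := fun s => ∫ u in a..b, g s u) (μ := volume) b a
      _ = - ∫ s in b..a, -∫ u in b..a, g s u := by
            congr 1; apply intervalIntegral.integral_congr; intro s _; exact h1 s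
      _ = ∫ s in b..a, ∫ u in b..a, g s u := by
            rw [intervalIntegral.integral_neg, neg_neg]
      _ = 0 := main b a hba

/-- `F` is antisymmetric under adjacent transpositions. -/
def AdjAnti (m : ℕ) (F : (Fin m → ℝ) → ℝ) : Prop :=
  ∀ (t : Fin m → ℝ) (a b : Fin m), (a : ℕ) + 1 = (b : ℕ) → F (t ∘ Equiv.swap a b) = - F t

lemma swap_succ {m : ℕ} (a b x : Fin m) :
    Equiv.swap a.succ b.succ x.succ = (Equiv.swap a b x).succ :=
  (Fin.succ_injective m).swap_apply a b x

lemma adjAnti_cons {m : ℕ} {F : (Fin (m+1) → ℝ) → ℝ} (hF : AdjAnti (m+1) F) (s : ℝ) :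
    AdjAnti m (fun u => F (Fin.cons s u)) := by
  intro t a b hab
  have key : (Fin.cons s (t ∘ Equiv.swap a b) : Fin (m+1) → ℝ)
      = (Fin.cons s t : Fin (m+1) → ℝ) ∘ Equiv.swap a.succ b.succ := by
    funext x
    refine Fin.cases ?_ ?_ x
    · have h0 : Equiv.swap a.succ b.succ 0 = 0 :=
        Equiv.swap_apply_of_ne_of_ne (Fin.succ_ne_zero a).symm (Fin.succ_ne_zero b).symm
      simp [h0]
    · intro i
      have h1 : Equiv.swap a.succ b.succ i.succ = (Equiv.swap a b i).succ := swap_succ a b i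
      simp [h1]
  show F (Fin.cons s (t ∘ Equiv.swap a b)) = - F (Fin.cons s t)
  rw [key]
  exact hF (Fin.cons s t) a.succ b.succ (by simp [Fin.val_succ, hab])

lemma cons_cons_swap {m : ℕ} (s u : ℝ) (w : Fin m → ℝ) :
    ((Fin.cons s (Fin.cons u w) : Fin (m+2) → ℝ) ∘ Equiv.swap 0 1)
      = (Fin.cons u (Fin.cons s w) : Fin (m+2) → ℝ) := by
  funext x
  refine Fin.cases ?_ (fun i => ?_) x
  · simp [Equiv.swap_apply_left]
  · refine Fin.cases ?_ (fun i' => ?_) i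
    · have : Equiv.swap (0 : Fin (m+2)) 1 ((0:Fin (m+1)).succ) = 0 := by
        rw [show ((0:Fin (m+1)).succ = (1 : Fin (m+2))) from rfl, Equiv.swap_apply_right]
      simp [this]
    · have hne0 : (i'.succ.succ : Fin (m+2)) ≠ 0 := Fin.succ_ne_zero _
      have hne1 : (i'.succ.succ : Fin (m+2)) ≠ 1 := by
        intro h
        have := congrArg Fin.val h
        simp [Fin.val_succ] at this
      have : Equiv.swap (0 : Fin (m+2)) 1 i'.succ.succ = i'.succ.succ :=
        Equiv.swap_apply_of_ne_of_ne hne0 hne1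
      simp [this]

theorem iterInt_adjAnti : ∀ (m : ℕ) (F : (Fin m → ℝ) → ℝ), Continuous F → AdjAnti m F →
    AdjAnti (m+1) (iterInt m F) := by
  intro m
  induction m with
  | zero =>
      intro F _ _ t a b hab
      have ha := a.isLt; have hb := b.isLt
      omega
  | succ m ih =>
      rcases m with _ | k
      · -- m = 0 : `iterInt 1`
        intro F hFc hF t a b hab
        have ha := a.isLt; have hb := b.isLt
        have ha0 : a = 0 := Fin.ext (by simp only [Fin.val_zero]; omega)
        have hb1 : b = 1 := Fin.ext (by simp only [Fin.val_one]; omega)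
        subst ha0; subst hb1
        have L : iterInt 1 F (t ∘ Equiv.swap 0 1)
            = ∫ s in (t 1)..(t 0), F (Fin.cons s ![]) := by
          rw [iterInt_succ]
          have h0 : (t ∘ Equiv.swap (0 : Fin 2) 1) 0 = t 1 := by
            simp [Equiv.swap_apply_left]
          have h1 : (t ∘ Equiv.swap (0 : Fin 2) 1) 1 = t 0 := by
            simp [Equiv.swap_apply_right]
          rw [h0, h1]
          rfl
        have R : iterInt 1 F t = ∫ s in (t 0)..(t 1), F (Fin.cons s ![]) := by
          rw [iterInt_succ]; rfl
        rw [L, R]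
        exact intervalIntegral.integral_symm (t 0) (t 1)
      · -- m = k+1 : `iterInt (k+2)`
        intro F hFc hF t a b hab
        set w : Fin (k+1) → ℝ := fun i => t i.succ.succ with hw
        set Ψ : ℝ → ℝ → ℝ :=
          fun s u => iterInt k (fun v => F (Fin.cons s (Fin.cons u v))) w with hΨ
        have c2 : Continuous (fun p : (ℝ × ℝ) × (Fin k → ℝ) =>
            (Fin.cons p.1.1 (Fin.cons p.1.2 p.2) : Fin (k+2) → ℝ)) :=
          continuous_consP.comp (continuous_fst.fst.prodMk
            (continuous_consP.comp (continuous_fst.snd.prodMk continuous_snd)))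
        have ΨC : Continuous (fun p : ℝ × ℝ => Ψ p.1 p.2) :=
          iterInt_cont2 (fun s u v => F (Fin.cons s (Fin.cons u v))) (hFc.comp c2) w
        have ΨCu : Continuous (Function.uncurry Ψ) := ΨC
        have Ψanti : ∀ s u, Ψ u s = - Ψ s u := by
          intro s u
          have hptw : (fun v : Fin k → ℝ => F (Fin.cons u (Fin.cons s v)))
              = fun v => - F (Fin.cons s (Fin.cons u v)) := by
            funext v
            rw [← cons_cons_swap s u v]
            exact hF _ 0 1 (by simp)
          show iterInt k (fun v => F (Fin.cons u (Fin.cons s v))) w = _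
          rw [hptw, iterInt_neg]
        -- unfolding of the second-level integral
        have unf : ∀ (s x : ℝ), iterInt (k+1) (fun u => F (Fin.cons s u)) (Fin.cons x w)
            = ∫ u in x..(w 0), Ψ s u := by
          intro s x
          rw [iterInt_succ]
          have e0 : (Fin.cons x w : Fin (k+2) → ℝ) 0 = x := rfl
          have e1 : (Fin.cons x w : Fin (k+2) → ℝ) 1 = w 0 := rfl
          have etail : (fun i : Fin (k+1) => (Fin.cons x w : Fin (k+2) → ℝ) i.succ) = w := by
            funext i; simp
          rw [e0, e1, etail]
        have htail' : (fun i : Fin (k+2) => t i.succ) = Fin.cons (t 1) w := by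
          funext i
          refine Fin.cases ?_ (fun i' => ?_) i
          · rfl
          · simp [hw]
        have hΦc : Continuous (fun s => iterInt (k+1) (fun u => F (Fin.cons s u))
            (Fin.cons (t 1) w)) :=
          iterInt_cont1 _ (hFc.comp continuous_consP) _
        have hΨsInt : ∀ (s : ℝ) (x y : ℝ), IntervalIntegrable (Ψ s) volume x y := by
          intro s x y
          exact ((ΨC.comp (continuous_const.prodMk continuous_id)).intervalIntegrable x y)
        -- case split on the position of the swap
        rcases Nat.lt_or_ge (a : ℕ) 1 with hc | hc
        · -- a = 0, b = 1
          have ha0 : a = 0 := Fin.ext (by simp only [Fin.val_zero]; omega)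
          have hb1 : b = 1 := Fin.ext (by simp only [Fin.val_one]; omega)
          subst ha0; subst hb1
          simp only [Fin.val_zero, Fin.val_one] at hab
          rw [iterInt_succ, iterInt_succ]
          have h0 : (t ∘ Equiv.swap (0 : Fin (k+3)) 1) 0 = t 1 := by
            simp [Equiv.swap_apply_left]
          have h1 : (t ∘ Equiv.swap (0 : Fin (k+3)) 1) 1 = t 0 := by
            simp [Equiv.swap_apply_right]
          have htailτ : (fun i : Fin (k+2) => (t ∘ Equiv.swap (0 : Fin (k+3)) 1) i.succ)
              = Fin.cons (t 0) w := by
            funext i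
            refine Fin.cases ?_ (fun i' => ?_) i
            · show t (Equiv.swap (0 : Fin (k+3)) 1 (1 : Fin (k+3))) = _
              rw [Equiv.swap_apply_right]
              rfl
            · have hne0 : (i'.succ.succ : Fin (k+3)) ≠ 0 := Fin.succ_ne_zero _
              have hne1 : (i'.succ.succ : Fin (k+3)) ≠ 1 := by
                intro h
                have := congrArg Fin.val h
                simp [Fin.val_succ] at this
              show t (Equiv.swap (0 : Fin (k+3)) 1 i'.succ.succ) = _
              rw [Equiv.swap_apply_of_ne_of_ne hne0 hne1]
              simp [hw]
          rw [h0, h1, htailτ, htail']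
          have EL : ∀ s, iterInt (k+1) (fun u => F (Fin.cons s u)) (Fin.cons (t 0) w)
              = (∫ u in (t 0)..(t 1), Ψ s u) + ∫ u in (t 1)..(w 0), Ψ s u := by
            intro s
            rw [unf s (t 0)]
            exact (intervalIntegral.integral_add_adjacent_intervals
              (hΨsInt s _ _) (hΨsInt s _ _)).symm
          have ER : ∀ s, iterInt (k+1) (fun u => F (Fin.cons s u)) (Fin.cons (t 1) w)
              = ∫ u in (t 1)..(w 0), Ψ s u := fun s => unf s (t 1)
          rw [intervalIntegral.integral_congr (g := fun s =>
              (∫ u in (t 0)..(t 1), Ψ s u) + ∫ u in (t 1)..(w 0), Ψ s u) (fun s _ => EL s),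
            intervalIntegral.integral_congr (g := fun s =>
              ∫ u in (t 1)..(w 0), Ψ s u) (fun s _ => ER s)]
          have ca : Continuous fun s => ∫ u in (t 0)..(t 1), Ψ s u :=
            intervalIntegral.continuous_parametric_intervalIntegral_of_continuous' ΨCu _ _
          have cb : Continuous fun s => ∫ u in (t 1)..(w 0), Ψ s u :=
            intervalIntegral.continuous_parametric_intervalIntegral_of_continuous' ΨCu _ _
          rw [intervalIntegral.integral_symm (t 0) (t 1)]
          rw [intervalIntegral.integral_add (ca.intervalIntegrable _ _)
            (cb.intervalIntegrable _ _)]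
          rw [double_antisym_zero Ψ ΨCu Ψanti (t 0) (t 1)]
          ring
        · rcases Nat.lt_or_ge (a : ℕ) 2 with hc2 | hc2
          · -- a = 1, b = 2
            have ha1 : a = 1 := Fin.ext (by simp only [Fin.val_one]; omega)
            subst ha1
            simp only [Fin.val_one] at hab
            rw [iterInt_succ, iterInt_succ]
            have h0 : (t ∘ Equiv.swap (1 : Fin (k+3)) b) 0 = t 0 := by
              have hne0a : (0 : Fin (k+3)) ≠ 1 := by
                apply Fin.ne_of_val_ne; simp
              have hne0b : (0 : Fin (k+3)) ≠ b := by
                apply Fin.ne_of_val_ne; simp only [Fin.val_zero]; omega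
              simp [Equiv.swap_apply_of_ne_of_ne hne0a hne0b]
            have h1 : (t ∘ Equiv.swap (1 : Fin (k+3)) b) 1 = t b := by
              simp [Equiv.swap_apply_left]
            have hb2 : t b = w 0 := by
              have : b = ((0 : Fin (k+1)).succ.succ : Fin (k+3)) := by
                apply Fin.ext; simp [Fin.val_succ]; rw [Nat.mod_eq_of_lt] <;> omega
              rw [this]
            have htailτ : (fun i : Fin (k+2) => (t ∘ Equiv.swap (1 : Fin (k+3)) b) i.succ)
                = (fun i : Fin (k+2) => t i.succ) ∘ Equiv.swap (0 : Fin (k+2)) 1 := by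
              funext i
              refine Fin.cases ?_ (fun i' => ?_) i
              · show t (Equiv.swap (1 : Fin (k+3)) b (1 : Fin (k+3))) = _
                rw [Equiv.swap_apply_left]
                have : ((Equiv.swap (0 : Fin (k+2)) 1) 0).succ = b := by
                  rw [Equiv.swap_apply_left]
                  apply Fin.ext; simp [Fin.val_succ]; rw [Nat.mod_eq_of_lt] <;> omega
                rw [← this]
                rfl
              · refine Fin.cases ?_ (fun i'' => ?_) i'
                · show t (Equiv.swap (1 : Fin (k+3)) b ((0:Fin (k+1)).succ.succ)) = _
                  have e1 : ((0:Fin (k+1)).succ.succ : Fin (k+3)) = b := by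
                    apply Fin.ext; simp [Fin.val_succ]; rw [Nat.mod_eq_of_lt] <;> omega
                  rw [e1, Equiv.swap_apply_right]
                  have : ((Equiv.swap (0 : Fin (k+2)) 1) ((0:Fin (k+1)).succ)).succ
                      = (1 : Fin (k+3)) := by
                    rw [show ((0:Fin (k+1)).succ = (1 : Fin (k+2))) from rfl,
                      Equiv.swap_apply_right]
                    rfl
                  rw [← this]
                  rfl
                · have hne1 : (i''.succ.succ.succ : Fin (k+3)) ≠ 1 := by
                    intro h; have := congrArg Fin.val h; simp [Fin.val_succ] at this
                  have hneb : (i''.succ.succ.succ : Fin (k+3)) ≠ b := by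
                    intro h; have := congrArg Fin.val h; simp [Fin.val_succ] at this; omega
                  show t (Equiv.swap (1 : Fin (k+3)) b i''.succ.succ.succ) = _
                  rw [Equiv.swap_apply_of_ne_of_ne hne1 hneb]
                  have hne0' : (i''.succ.succ : Fin (k+2)) ≠ 0 := Fin.succ_ne_zero _
                  have hne1' : (i''.succ.succ : Fin (k+2)) ≠ 1 := by
                    intro h; have := congrArg Fin.val h; simp [Fin.val_succ] at this
                  show _ = t ((Equiv.swap (0 : Fin (k+2)) 1 i''.succ.succ).succ)
                  rw [Equiv.swap_apply_of_ne_of_ne hne0' hne1']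
            rw [h0, h1, htailτ]
            have hswap : ∀ s : ℝ, iterInt (k+1) (fun u => F (Fin.cons s u))
                ((fun i : Fin (k+2) => t i.succ) ∘ Equiv.swap (0 : Fin (k+2)) 1)
                = - iterInt (k+1) (fun u => F (Fin.cons s u)) (fun i : Fin (k+2) => t i.succ) := by
              intro s
              exact ih (fun u => F (Fin.cons s u)) (hFc.comp
                (continuous_consP.comp (continuous_const.prodMk continuous_id)))
                (adjAnti_cons hF s) (fun i => t i.succ) 0 1 (by simp)
            rw [intervalIntegral.integral_congr (g := fun s =>
              - iterInt (k+1) (fun u => F (Fin.cons s u)) (fun i : Fin (k+2) => t i.succ))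
              (fun s _ => hswap s)]
            rw [intervalIntegral.integral_neg]
            have hΦc' : Continuous (fun s => iterInt (k+1) (fun u => F (Fin.cons s u))
                (fun i : Fin (k+2) => t i.succ)) :=
              iterInt_cont1 _ (hFc.comp continuous_consP) _
            have t1eq : (fun i : Fin (k+2) => t i.succ) 0 = t 1 := rfl
            have hsplit : (∫ s in (t 0)..(t b), iterInt (k+1) (fun u => F (Fin.cons s u))
                  (fun i : Fin (k+2) => t i.succ))
                = (∫ s in (t 0)..(t 1), iterInt (k+1) (fun u => F (Fin.cons s u))
                  (fun i : Fin (k+2) => t i.succ))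
                  + ∫ s in (t 1)..(t b), iterInt (k+1) (fun u => F (Fin.cons s u))
                  (fun i : Fin (k+2) => t i.succ) :=
              (intervalIntegral.integral_add_adjacent_intervals
                (hΦc'.intervalIntegrable _ _) (hΦc'.intervalIntegrable _ _)).symm
            rw [hsplit]
            have hzero : (∫ s in (t 1)..(t b), iterInt (k+1) (fun u => F (Fin.cons s u))
                (fun i : Fin (k+2) => t i.succ)) = 0 := by
              have e : ∀ s, iterInt (k+1) (fun u => F (Fin.cons s u))
                  (fun i : Fin (k+2) => t i.succ) = ∫ u in (t 1)..(t b), Ψ s u := by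
                intro s
                rw [htail', unf s (t 1), hb2]
              rw [intervalIntegral.integral_congr
                (g := fun s => ∫ u in (t 1)..(t b), Ψ s u) (fun s _ => e s)]
              exact double_antisym_zero Ψ ΨCu Ψanti (t 1) (t b)
            rw [hzero]
            ring
          · -- a ≥ 2
            set a' : Fin (k+2) := ⟨(a : ℕ) - 1, by omega⟩ with ha'
            set b' : Fin (k+2) := ⟨(b : ℕ) - 1, by have := b.isLt; omega⟩ with hb'
            have haa : a = a'.succ := by apply Fin.ext; simp [Fin.val_succ, ha']; omega
            have hbb : b = b'.succ := by
              apply Fin.ext; simp [Fin.val_succ, hb']; omega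
            rw [iterInt_succ, iterInt_succ]
            have h0 : (t ∘ Equiv.swap a b) 0 = t 0 := by
              have hne0a : (0 : Fin (k+3)) ≠ a := by
                apply Fin.ne_of_val_ne; simp only [Fin.val_zero]; omega
              have hne0b : (0 : Fin (k+3)) ≠ b := by
                apply Fin.ne_of_val_ne; simp only [Fin.val_zero]; omega
              simp [Equiv.swap_apply_of_ne_of_ne hne0a hne0b]
            have h1 : (t ∘ Equiv.swap a b) 1 = t 1 := by
              have hne1a : (1 : Fin (k+3)) ≠ a := by
                apply Fin.ne_of_val_ne; simp only [Fin.val_one]; omega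
              have hne1b : (1 : Fin (k+3)) ≠ b := by
                apply Fin.ne_of_val_ne; simp only [Fin.val_one]; omega
              simp [Equiv.swap_apply_of_ne_of_ne hne1a hne1b]
            have htailτ : (fun i : Fin (k+2) => (t ∘ Equiv.swap a b) i.succ)
                = (fun i : Fin (k+2) => t i.succ) ∘ Equiv.swap a' b' := by
              funext i
              show t (Equiv.swap a b i.succ) = t ((Equiv.swap a' b' i).succ)
              rw [haa, hbb, swap_succ]
            rw [h0, h1, htailτ]
            have hswap : ∀ s : ℝ, iterInt (k+1) (fun u => F (Fin.cons s u))
                ((fun i : Fin (k+2) => t i.succ) ∘ Equiv.swap a' b')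
                = - iterInt (k+1) (fun u => F (Fin.cons s u))
                    (fun i : Fin (k+2) => t i.succ) := by
              intro s
              refine ih (fun u => F (Fin.cons s u)) (hFc.comp
                (continuous_consP.comp (continuous_const.prodMk continuous_id)))
                (adjAnti_cons hF s) (fun i => t i.succ) a' b' ?_
              simp [ha', hb']
              omega
            rw [intervalIntegral.integral_congr (g := fun s =>
              - iterInt (k+1) (fun u => F (Fin.cons s u)) (fun i : Fin (k+2) => t i.succ))
              (fun s _ => hswap s)]
            rw [intervalIntegral.integral_neg]

theorem adjAnti_perm : ∀ (m : ℕ) (G : (Fin m → ℝ) → ℝ), AdjAnti m G →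
    ∀ (σ : Equiv.Perm (Fin m)) (t : Fin m → ℝ),
    G (t ∘ σ) = ((Equiv.Perm.sign σ : ℤ) : ℝ) * G t := by
  intro m
  match m with
  | 0 =>
      intro G _ σ t
      have hσ : σ = 1 := Subsingleton.elim σ 1
      subst hσ
      have : t ∘ (1 : Equiv.Perm (Fin 0)) = t := rfl
      rw [this]
      simp
  | (m'+1) =>
      intro G hG σ t
      have hmem : σ ∈ Submonoid.closure
          (Set.range fun i : Fin m' => Equiv.swap i.castSucc i.succ) := by
        rw [Equiv.Perm.mclosure_swap_castSucc_succ]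
        trivial
      induction hmem using Submonoid.closure_induction generalizing t with
      | mem x hx =>
          obtain ⟨i, rfl⟩ := hx
          have hsign : Equiv.Perm.sign (Equiv.swap i.castSucc i.succ) = -1 :=
            Equiv.Perm.sign_swap (Fin.castSucc_lt_succ : i.castSucc < i.succ).ne
          rw [hsign]
          have := hG t i.castSucc i.succ (by simp)
          rw [this]
          push_cast
          ring
      | one =>
          have : t ∘ (1 : Equiv.Perm (Fin (m'+1))) = t := rfl
          rw [this]
          simp
      | mul x y hx hy ihx ihy =>
          have hcomp : t ∘ (x * y) = (t ∘ x) ∘ y := rfl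
          rw [hcomp, ihy (t ∘ x), ihx t]
          rw [map_mul]
          push_cast
          ring

/-- the single-point factor `ρ_a = L_{a-1} L_{a+1} / L_a ^ 2` -/
noncomputable def rhoF (n : ℕ) (ζ : Fin n → ℝ → ℝ) (a : ℕ) (x : ℝ) : ℝ :=
  Lf n ζ (a - 1) x * Lf n ζ (a + 1) x / (Lf n ζ a x) ^ 2

/-- clamping to `[lo, hi]` -/
noncomputable def clampF (lo hi x : ℝ) : ℝ := max lo (min hi x)

lemma clampF_continuous (lo hi : ℝ) : Continuous (clampF lo hi) :=
  continuous_const.max (continuous_const.min continuous_id)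

lemma clampF_mem (lo hi : ℝ) (h : lo ≤ hi) (x : ℝ) : clampF lo hi x ∈ Set.Icc lo hi := by
  constructor
  · exact le_max_left _ _
  · exact max_le h (min_le_left _ _)

lemma clampF_eq (lo hi x : ℝ) (h : x ∈ Set.Icc lo hi) : clampF lo hi x = x := by
  rcases h with ⟨h1, h2⟩
  unfold clampF
  rw [min_eq_right h2, max_eq_right h1]

/-- the globally continuous surrogate of `Jit` -/
noncomputable def GJ (n : ℕ) (ζ : Fin n → ℝ → ℝ) (lo hi : ℝ) :
    (M : ℕ) → (Fin (M + 1) → ℝ) → ℝ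
  | 0, t => rhoF n ζ (n - 1) (clampF lo hi (t 0))
  | M + 1, t =>
      (∏ j : Fin (M + 2), rhoF n ζ (n - (M + 2)) (clampF lo hi (t j))) *
      iterInt (M + 1) (GJ n ζ lo hi M) t

lemma Jit_zero (N : ℕ) (ζ : Fin (N+1) → ℝ → ℝ) (t : Fin 1 → ℝ) :
    Jit (N+1) ζ 0 t = rhoF (N+1) ζ N (t 0) := rfl

lemma Jit_succ (N : ℕ) (ζ : Fin (N+1) → ℝ → ℝ) (M : ℕ) (t : Fin (M+2) → ℝ) :
    Jit (N+1) ζ (M+1) t = (∏ j : Fin (M+2), rhoF (N+1) ζ (N+1 - (M+2)) (t j)) *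
      iterInt (M+1) (Jit (N+1) ζ M) t := rfl

lemma GJ_zero (N : ℕ) (ζ : Fin (N+1) → ℝ → ℝ) (lo hi : ℝ) (t : Fin 1 → ℝ) :
    GJ (N+1) ζ lo hi 0 t = rhoF (N+1) ζ N (clampF lo hi (t 0)) := rfl

lemma GJ_succ (N : ℕ) (ζ : Fin (N+1) → ℝ → ℝ) (lo hi : ℝ) (M : ℕ) (t : Fin (M+2) → ℝ) :
    GJ (N+1) ζ lo hi (M+1) t
      = (∏ j : Fin (M+2), rhoF (N+1) ζ (N+1 - (M+2)) (clampF lo hi (t j))) *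
        iterInt (M+1) (GJ (N+1) ζ lo hi M) t := rfl

theorem GJ_eq_Jit (N : ℕ) (ζ : Fin (N+1) → ℝ → ℝ) (lo hi : ℝ) :
    ∀ (M : ℕ) (t : Fin (M+1) → ℝ), (∀ i, t i ∈ Set.Icc lo hi) →
    GJ (N+1) ζ lo hi M t = Jit (N+1) ζ M t := by
  intro M
  induction M with
  | zero =>
      intro t ht
      rw [GJ_zero, Jit_zero, clampF_eq lo hi _ (ht 0)]
  | succ M ih =>
      intro t ht
      rw [GJ_succ, Jit_succ]
      congr 1
      · refine Finset.prod_congr rfl (fun j _ => ?_)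
        rw [clampF_eq lo hi _ (ht j)]
      · exact iterInt_congr Set.ordConnected_Icc (M+1) _ _ ih t ht

theorem GJ_continuous (N : ℕ) (ζ : Fin (N+1) → ℝ → ℝ) (lo hi : ℝ) (hlh : lo ≤ hi)
    (hcontL : ∀ j, j ≤ N+1 → Continuous (Lf (N+1) ζ j))
    (hnz : ∀ j, j ≤ N+1 → ∀ x ∈ Set.Icc lo hi, Lf (N+1) ζ j x ≠ 0) :
    ∀ (M : ℕ), M ≤ N → Continuous (GJ (N+1) ζ lo hi M) := by
  have hrho : ∀ a : ℕ, a + 1 ≤ N + 1 →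
      Continuous (fun x => rhoF (N+1) ζ a (clampF lo hi x)) := by
    intro a ha
    unfold rhoF
    apply Continuous.div
    · exact (((hcontL (a-1) (by omega)).comp (clampF_continuous lo hi)).mul
        ((hcontL (a+1) (by omega)).comp (clampF_continuous lo hi)))
    · exact ((hcontL a (by omega)).comp (clampF_continuous lo hi)).pow 2
    · intro x
      exact pow_ne_zero 2 (hnz a (by omega) _ (clampF_mem lo hi hlh x))
  intro M
  induction M with
  | zero =>
      intro _
      show Continuous fun t : Fin 1 → ℝ => rhoF (N+1) ζ N (clampF lo hi (t 0))
      exact (hrho N (by omega)).comp (continuous_apply 0)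
  | succ M ih =>
      intro hM
      show Continuous fun t : Fin (M+2) → ℝ =>
        (∏ j : Fin (M+2), rhoF (N+1) ζ (N+1 - (M+2)) (clampF lo hi (t j))) *
          iterInt (M+1) (GJ (N+1) ζ lo hi M) t
      apply Continuous.mul
      · apply continuous_finset_prod
        intro j _
        have haidx : (N+1 - (M+2)) + 1 ≤ N + 1 := by omega
        exact (hrho _ haidx).comp (continuous_apply j)
      · exact iterInt_continuous (ih (by omega))

theorem GJ_adjAnti (N : ℕ) (ζ : Fin (N+1) → ℝ → ℝ) (lo hi : ℝ) (hlh : lo ≤ hi)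
    (hcontL : ∀ j, j ≤ N+1 → Continuous (Lf (N+1) ζ j))
    (hnz : ∀ j, j ≤ N+1 → ∀ x ∈ Set.Icc lo hi, Lf (N+1) ζ j x ≠ 0) :
    ∀ (M : ℕ), M ≤ N → AdjAnti (M+1) (GJ (N+1) ζ lo hi M) := by
  intro M
  induction M with
  | zero =>
      intro _ t a b hab
      have ha := a.isLt; have hb := b.isLt
      omega
  | succ M ih =>
      intro hM t a b hab
      rw [GJ_succ, GJ_succ]
      have hprod : (∏ j : Fin (M+2), rhoF (N+1) ζ (N+1 - (M+2))
            (clampF lo hi ((t ∘ Equiv.swap a b) j)))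
          = ∏ j : Fin (M+2), rhoF (N+1) ζ (N+1 - (M+2)) (clampF lo hi (t j)) :=
        Equiv.prod_comp (Equiv.swap a b) (fun j => rhoF (N+1) ζ (N+1 - (M+2)) (clampF lo hi (t j)))
      rw [hprod]
      have hanti := iterInt_adjAnti (M+1) (GJ (N+1) ζ lo hi M)
        (GJ_continuous N ζ lo hi hlh hcontL hnz M (by omega)) (ih (by omega)) t a b hab
      rw [hanti]
      ring

theorem sign_const {f : ℝ → ℝ} (hf : Continuous f) {I : Set ℝ} (hI : Convex ℝ I)
    (hne : ∀ t ∈ I, f t ≠ 0) :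
    ∃ e : ℝ, (e = 1 ∨ e = -1) ∧ ∀ t ∈ I, e * f t = |f t| := by
  rcases Set.eq_empty_or_nonempty I with rfl | ⟨t0, ht0⟩
  · exact ⟨1, Or.inl rfl, by simp⟩
  have key : ∀ t ∈ I, 0 < f t0 * f t := by
    intro t ht
    by_contra hcon
    push_neg at hcon
    have h0m : (0 : ℝ) ∈ Set.uIcc (f t0) (f t) := by
      rcases mul_nonpos_iff.mp hcon with ⟨h1, h2⟩ | ⟨h1, h2⟩
      · exact Set.mem_uIcc.mpr (Or.inr ⟨h2, h1⟩)
      · exact Set.mem_uIcc.mpr (Or.inl ⟨h1, h2⟩)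
    obtain ⟨x, hx, hfx⟩ := intermediate_value_uIcc (hf.continuousOn) h0m
    exact hne x (hI.ordConnected.uIcc_subset ht0 ht hx) hfx
  rcases lt_or_gt_of_ne (hne t0 ht0) with hneg | hpos
  · refine ⟨-1, Or.inr rfl, ?_⟩
    intro t ht
    have : f t < 0 := by
      rcases mul_pos_iff.mp (key t ht) with ⟨h1, _⟩ | ⟨_, h2⟩
      · linarith
      · exact h2
    rw [abs_of_neg this]; ring
  · refine ⟨1, Or.inl rfl, ?_⟩
    intro t ht
    have : 0 < f t := by
      rcases mul_pos_iff.mp (key t ht) with ⟨_, h2⟩ | ⟨h1, _⟩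
      · exact h2
      · linarith
    rw [abs_of_pos this, one_mul]

theorem Lf_continuous (N : ℕ) (ζ : Fin (N+1) → ℝ → ℝ) (hζ : ∀ p, ContDiff ℝ (⊤ : ℕ∞) (ζ p)) :
    ∀ j, j ≤ N+1 → Continuous (Lf (N+1) ζ j) := by
  intro j hj
  unfold Lf
  simp only [dif_pos hj]
  refine Continuous.matrix_det (continuous_matrix ?_)
  intro p q
  show Continuous fun a => iteratedDeriv ((q : ℕ) + 1) (ζ (Fin.castLE hj p)) a
  exact (hζ _).continuous_iteratedDeriv _ (by exact_mod_cast le_top)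

theorem Lf_zero_eq_one (n : ℕ) (ζ : Fin n → ℝ → ℝ) (t : ℝ) : Lf n ζ 0 t = 1 := by
  simp [Lf]

theorem vmd_nonneg {m : ℕ} {t : Fin m → ℝ} (ht : Monotone t) : 0 ≤ vmd m t := by
  refine Finset.prod_nonneg (fun p _ => Finset.prod_nonneg (fun q hq => ?_))
  have : p < q := Finset.mem_Ioi.mp hq
  exact sub_nonneg.mpr (ht this.le)

theorem vmd_one (t : Fin 1 → ℝ) : vmd 1 t = 1 := by
  simp [vmd]

theorem vmd_continuous (m : ℕ) : Continuous (vmd m) := by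
  unfold vmd
  refine continuous_finset_prod _ (fun p _ => continuous_finset_prod _ (fun q _ => ?_))
  exact (continuous_apply q).sub (continuous_apply p)

end StAux

open StAux in
/-- Size of the iterated integrals: under `|L_j| ≈ 2^{-k_j}` (with `k_0 = k_{-1} = 0`),
`|𝔍_m(t)| ≈_m 2^{(m+1)k_{n-m} - m k_{n-m-1} - k_n} |v(t_1, ..., t_m)|` for `1 ≤ m ≤ n`.
Here `n = N + 1` and `𝔍_{M+1} = Jit (N+1) ζ M` for `M ≤ N`. -/
theorem statement12 (N : ℕ) (ζ : Fin (N + 1) → ℝ → ℝ)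
    (hζ : ∀ p, ContDiff ℝ (⊤ : ℕ∞) (ζ p)) (I : Set ℝ) (hI : Convex ℝ I)
    (k : ℕ → ℤ) (hk0 : k 0 = 0) (c C : ℝ) (hc : 0 < c) (hcC : c ≤ C)
    (hL : ∀ j, 1 ≤ j → j ≤ N + 1 → ∀ t ∈ I,
      c * (2 : ℝ) ^ (-(k j)) ≤ |Lf (N + 1) ζ j t| ∧
        |Lf (N + 1) ζ j t| ≤ C * (2 : ℝ) ^ (-(k j))) :
    ∀ M ≤ N, ∃ c' C' : ℝ, 0 < c' ∧ c' ≤ C' ∧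
      ∀ t : Fin (M + 1) → ℝ, (∀ i, t i ∈ I) →
        c' * (2 : ℝ) ^ (((M : ℤ) + 2) * k (N - M) - ((M : ℤ) + 1) * k (N - M - 1)
              - k (N + 1)) * |vmd (M + 1) t| ≤ |Jit (N + 1) ζ M t| ∧
          |Jit (N + 1) ζ M t| ≤
            C' * (2 : ℝ) ^ (((M : ℤ) + 2) * k (N - M) - ((M : ℤ) + 1) * k (N - M - 1)
              - k (N + 1)) * |vmd (M + 1) t| := by
  have hc1pos : (0:ℝ) < min c 1 := lt_min hc one_pos
  have hC1pos : (0:ℝ) < max C 1 := lt_of_lt_of_le one_pos (le_max_right _ _)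
  have hc1le1 : min c 1 ≤ 1 := min_le_right _ _
  have h1leC1 : (1:ℝ) ≤ max C 1 := le_max_right _ _
  have hLc := Lf_continuous N ζ hζ
  have hL1 : ∀ j, j ≤ N+1 → ∀ x ∈ I,
      min c 1 * (2:ℝ)^(-(k j)) ≤ |Lf (N+1) ζ j x| ∧
        |Lf (N+1) ζ j x| ≤ max C 1 * (2:ℝ)^(-(k j)) := by
    intro j hj x hx
    rcases Nat.eq_zero_or_pos j with rfl | hjpos
    · rw [Lf_zero_eq_one, hk0]
      constructor
      · simpa using hc1le1
      · simpa using h1leC1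
    · obtain ⟨hlow, hup⟩ := hL j hjpos hj x hx
      have hp : (0:ℝ) < (2:ℝ)^(-(k j)) := by positivity
      constructor
      · refine le_trans ?_ hlow
        nlinarith [min_le_left c 1]
      · refine le_trans hup ?_
        nlinarith [le_max_left C 1]
  have hLpos : ∀ j, j ≤ N+1 → ∀ x ∈ I, 0 < |Lf (N+1) ζ j x| := by
    intro j hj x hx
    refine lt_of_lt_of_le ?_ (hL1 j hj x hx).1
    positivity
  have hLne : ∀ j, j ≤ N+1 → ∀ x ∈ I, Lf (N+1) ζ j x ≠ 0 :=
    fun j hj x hx => abs_pos.mp (hLpos j hj x hx)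
  have hsgn : ∀ j, j ≤ N+1 → ∃ e : ℝ, (e = 1 ∨ e = -1) ∧
      ∀ x ∈ I, e * Lf (N+1) ζ j x = |Lf (N+1) ζ j x| :=
    fun j hj => sign_const (hLc j hj) hI (hLne j hj)
  have hcρpos : (0:ℝ) < min c 1 ^ 2 / max C 1 ^ 2 := by positivity
  have hcρCρ : min c 1 ^ 2 / max C 1 ^ 2 ≤ max C 1 ^ 2 / min c 1 ^ 2 := by
    rw [div_le_div_iff₀ (by positivity) (by positivity)]
    have h1 : min c 1 ≤ max C 1 := le_trans hc1le1 h1leC1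
    have h2 : min c 1 ^ 2 ≤ max C 1 ^ 2 := pow_le_pow_left₀ hc1pos.le h1 2
    exact mul_le_mul h2 h2 (by positivity) (by positivity)
  -- two-sided bounds for the factors ρ_a
  have hrho : ∀ a : ℕ, a + 1 ≤ N + 1 → ∃ e : ℝ, (e = 1 ∨ e = -1) ∧
      ∀ x ∈ I,
        (min c 1 ^ 2 / max C 1 ^ 2) * (2:ℝ)^(2*(k a) - k (a-1) - k (a+1))
          ≤ e * rhoF (N+1) ζ a x ∧
        e * rhoF (N+1) ζ a x
          ≤ (max C 1 ^ 2 / min c 1 ^ 2) * (2:ℝ)^(2*(k a) - k (a-1) - k (a+1)) := by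
    intro a ha
    obtain ⟨e1, he1, hs1⟩ := hsgn (a-1) (by omega)
    obtain ⟨e2, he2, hs2⟩ := hsgn (a+1) (by omega)
    refine ⟨e1 * e2, ?_, ?_⟩
    · rcases he1 with rfl|rfl <;> rcases he2 with rfl|rfl <;> norm_num
    intro x hx
    have habs : (e1*e2) * rhoF (N+1) ζ a x
        = |Lf (N+1) ζ (a-1) x| * |Lf (N+1) ζ (a+1) x| / |Lf (N+1) ζ a x|^2 := by
      rw [← hs1 x hx, ← hs2 x hx, sq_abs]
      unfold rhoF
      ring
    obtain ⟨l1, u1⟩ := hL1 (a-1) (by omega) x hx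
    obtain ⟨l2, u2⟩ := hL1 (a+1) (by omega) x hx
    obtain ⟨l3, u3⟩ := hL1 a (by omega) x hx
    have h3pos := hLpos a (by omega) x hx
    have hpw : ∀ p q r : ℤ, (2:ℝ)^p * (2:ℝ)^q / ((2:ℝ)^r)^2 = (2:ℝ)^(p + q - 2*r) := by
      intro p q r
      rw [← zpow_add₀ (two_ne_zero), sq, ← zpow_add₀ (two_ne_zero),
        ← zpow_sub₀ (two_ne_zero)]
      congr 1
      ring
    have hkey : (min c 1 ^ 2 / max C 1 ^ 2) * (2:ℝ)^(2*(k a) - k (a-1) - k (a+1))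
        = (min c 1 * (2:ℝ)^(-(k (a-1)))) * (min c 1 * (2:ℝ)^(-(k (a+1))))
          / (max C 1 * (2:ℝ)^(-(k a)))^2 := by
      have h := hpw (-(k (a-1))) (-(k (a+1))) (-(k a))
      have he' : -(k (a-1)) + -(k (a+1)) - 2 * -(k a) = 2*(k a) - k (a-1) - k (a+1) := by ring
      rw [he'] at h
      rw [← h]
      field_simp
    have hkey' : (max C 1 ^ 2 / min c 1 ^ 2) * (2:ℝ)^(2*(k a) - k (a-1) - k (a+1))
        = (max C 1 * (2:ℝ)^(-(k (a-1)))) * (max C 1 * (2:ℝ)^(-(k (a+1))))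
          / (min c 1 * (2:ℝ)^(-(k a)))^2 := by
      have h := hpw (-(k (a-1))) (-(k (a+1))) (-(k a))
      have he' : -(k (a-1)) + -(k (a+1)) - 2 * -(k a) = 2*(k a) - k (a-1) - k (a+1) := by ring
      rw [he'] at h
      rw [← h]
      field_simp
    constructor
    · rw [habs, hkey]
      refine div_le_div₀ (by positivity) ?_ (by positivity) ?_
      · exact mul_le_mul l1 l2 (by positivity) (abs_nonneg _)
      · exact pow_le_pow_left₀ (abs_nonneg _) u3 2
    · rw [habs, hkey']
      refine div_le_div₀ (by positivity) ?_ (by positivity) ?_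
      · exact mul_le_mul u1 u2 (abs_nonneg _) (by positivity)
      · exact pow_le_pow_left₀ (by positivity) l3 2
  -- permutation invariance of |Jit|
  have hJperm : ∀ (M : ℕ), M ≤ N → ∀ (t : Fin (M+1) → ℝ), (∀ i, t i ∈ I) →
      ∀ σ : Equiv.Perm (Fin (M+1)), |Jit (N+1) ζ M (t ∘ σ)| = |Jit (N+1) ζ M t| := by
    intro M hM t ht σ
    obtain ⟨i0, -, hmin⟩ := Finset.exists_min_image Finset.univ t ⟨0, Finset.mem_univ 0⟩
    obtain ⟨i1, -, hmax⟩ := Finset.exists_max_image Finset.univ t ⟨0, Finset.mem_univ 0⟩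
    have hlh : t i0 ≤ t i1 := hmin i1 (Finset.mem_univ i1)
    have hbox : ∀ i, t i ∈ Set.Icc (t i0) (t i1) :=
      fun i => ⟨hmin i (Finset.mem_univ i), hmax i (Finset.mem_univ i)⟩
    have hboxσ : ∀ i, (t ∘ σ) i ∈ Set.Icc (t i0) (t i1) := fun i => hbox (σ i)
    have hIccI : Set.Icc (t i0) (t i1) ⊆ I := hI.ordConnected.out (ht i0) (ht i1)
    have hnz' : ∀ j, j ≤ N+1 → ∀ x ∈ Set.Icc (t i0) (t i1), Lf (N+1) ζ j x ≠ 0 :=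
      fun j hj x hx => hLne j hj x (hIccI hx)
    rw [← GJ_eq_Jit N ζ (t i0) (t i1) M (t∘σ) hboxσ, ← GJ_eq_Jit N ζ (t i0) (t i1) M t hbox]
    rw [adjAnti_perm (M+1) (GJ (N+1) ζ (t i0) (t i1) M)
      (GJ_adjAnti N ζ (t i0) (t i1) hlh hLc hnz' M hM) σ t]
    rw [abs_mul]
    rcases Int.units_eq_one_or (Equiv.Perm.sign σ) with h|h <;> simp [h]
  -- the main sandwich on monotone tuples
  have main : ∀ M : ℕ, M ≤ N → ∃ c' C' e : ℝ, 0 < c' ∧ c' ≤ C' ∧ (e = 1 ∨ e = -1) ∧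
      ∀ t : Fin (M+1) → ℝ, Monotone t → (∀ i, t i ∈ I) →
        c' * (2:ℝ)^(((M : ℤ) + 2) * k (N - M) - ((M : ℤ) + 1) * k (N - M - 1) - k (N + 1))
            * vmd (M+1) t ≤ e * Jit (N+1) ζ M t ∧
        e * Jit (N+1) ζ M t ≤
          C' * (2:ℝ)^(((M : ℤ) + 2) * k (N - M) - ((M : ℤ) + 1) * k (N - M - 1) - k (N + 1))
            * vmd (M+1) t := by
    intro M
    induction M with
    | zero =>
        intro _
        obtain ⟨e, he, hb⟩ := hrho N (by omega)
        refine ⟨min c 1 ^ 2 / max C 1 ^ 2, max C 1 ^ 2 / min c 1 ^ 2, e, hcρpos, hcρCρ, he, ?_⟩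
        intro t _ hti
        have h0 := hb (t 0) (hti 0)
        rw [Jit_zero, vmd_one, mul_one, mul_one]
        have hidx : (((0:ℕ) : ℤ) + 2) * k (N - 0) - (((0:ℕ) : ℤ) + 1) * k (N - 0 - 1) - k (N + 1)
            = 2*(k N) - k (N-1) - k (N+1) := by
          rw [Nat.sub_zero]
          push_cast
          ring
        rw [hidx]
        exact h0
    | succ M ih =>
        intro hM1
        obtain ⟨c', C', e, hc', hcC', he, hP⟩ := ih (by omega)
        obtain ⟨eρ, heρ, hbρ⟩ := hrho (N+1-(M+2)) (by omega)
        have haMpos : (0:ℝ) < (∏ j : Fin (M+1), ((j : ℕ) + 1 : ℝ))⁻¹ := by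
          rw [inv_pos]
          exact Finset.prod_pos (fun j _ => by positivity)
        have heρpow : eρ^(M+2) = 1 ∨ eρ^(M+2) = -1 := by
          rcases heρ with rfl|rfl
          · left; exact one_pow _
          · rcases Nat.even_or_odd (M+2) with hpar|hpar
            · left; exact hpar.neg_one_pow
            · right; exact hpar.neg_one_pow
        refine ⟨c' * (∏ j : Fin (M+1), ((j : ℕ) + 1 : ℝ))⁻¹ * (min c 1 ^ 2 / max C 1 ^ 2)^(M+2),
                C' * (∏ j : Fin (M+1), ((j : ℕ) + 1 : ℝ))⁻¹ * (max C 1 ^ 2 / min c 1 ^ 2)^(M+2),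
                e * eρ^(M+2), by positivity, ?_, ?_, ?_⟩
        · have h1 : (min c 1 ^ 2 / max C 1 ^ 2)^(M+2) ≤ (max C 1 ^ 2 / min c 1 ^ 2)^(M+2) :=
            pow_le_pow_left₀ hcρpos.le hcρCρ _
          have h2 : (0:ℝ) ≤ (∏ j : Fin (M+1), ((j : ℕ) + 1 : ℝ))⁻¹ := haMpos.le
          calc c' * (∏ j : Fin (M+1), ((j : ℕ) + 1 : ℝ))⁻¹ * (min c 1 ^ 2 / max C 1 ^ 2)^(M+2)
              ≤ C' * (∏ j : Fin (M+1), ((j : ℕ) + 1 : ℝ))⁻¹ * (min c 1 ^ 2 / max C 1 ^ 2)^(M+2) :=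
                mul_le_mul_of_nonneg_right (mul_le_mul_of_nonneg_right hcC' h2) (by positivity)
            _ ≤ C' * (∏ j : Fin (M+1), ((j : ℕ) + 1 : ℝ))⁻¹ * (max C 1 ^ 2 / min c 1 ^ 2)^(M+2) :=
                mul_le_mul_of_nonneg_left h1
                  (mul_nonneg (le_trans hc'.le hcC') h2)
        · rcases he with rfl|rfl <;> rcases heρpow with h|h <;> rw [h] <;> norm_num
        · intro t hmono hti
          have hlh : t 0 ≤ t (Fin.last (M+1)) := hmono (Fin.zero_le _)
          have hbox : ∀ i, t i ∈ Set.Icc (t 0) (t (Fin.last (M+1))) :=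
            fun i => ⟨hmono (Fin.zero_le i), hmono (Fin.le_last i)⟩
          have hIccI : Set.Icc (t 0) (t (Fin.last (M+1))) ⊆ I :=
            hI.ordConnected.out (hti 0) (hti _)
          have hnz' : ∀ j, j ≤ N+1 → ∀ x ∈ Set.Icc (t 0) (t (Fin.last (M+1))),
              Lf (N+1) ζ j x ≠ 0 := fun j hj x hx => hLne j hj x (hIccI hx)
          have hGc : Continuous (GJ (N+1) ζ (t 0) (t (Fin.last (M+1))) M) :=
            GJ_continuous N ζ _ _ hlh hLc hnz' M (by omega)
          have hGeq : ∀ u : Fin (M+1) → ℝ, (∀ i, u i ∈ Set.Icc (t 0) (t (Fin.last (M+1)))) →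
              GJ (N+1) ζ (t 0) (t (Fin.last (M+1))) M u = Jit (N+1) ζ M u :=
            GJ_eq_Jit N ζ _ _ M
          have hhyp : ∀ u : Fin (M+1) → ℝ,
              (∀ j : Fin (M+1), u j ∈ Set.Icc (t j.castSucc) (t j.succ)) →
              0 ≤ vmd (M+1) u ∧
              (c' * (2:ℝ)^(((M : ℤ) + 2) * k (N - M) - ((M : ℤ) + 1) * k (N - M - 1) - k (N + 1)))
                  * vmd (M+1) u ≤ e * GJ (N+1) ζ (t 0) (t (Fin.last (M+1))) M u ∧
              e * GJ (N+1) ζ (t 0) (t (Fin.last (M+1))) M u ≤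
                (C' * (2:ℝ)^(((M : ℤ) + 2) * k (N - M) - ((M : ℤ) + 1) * k (N - M - 1) - k (N + 1)))
                  * vmd (M+1) u := by
            intro u hu
            have humono : Monotone u := by
              rw [Fin.monotone_iff_le_succ]
              intro i
              calc u i.castSucc ≤ t i.castSucc.succ := (hu i.castSucc).2
                _ = t i.succ.castSucc := by rw [Fin.succ_castSucc]
                _ ≤ u i.succ := (hu i.succ).1
            have hubox : ∀ i, u i ∈ Set.Icc (t 0) (t (Fin.last (M+1))) := by
              intro i
              obtain ⟨h1, h2⟩ := hu i
              exact ⟨le_trans (hmono (Fin.zero_le _)) h1, le_trans h2 (hmono (Fin.le_last _))⟩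
            have huI : ∀ i, u i ∈ I := fun i => hIccI (hubox i)
            obtain ⟨hPl, hPu⟩ := hP u humono huI
            refine ⟨vmd_nonneg humono, ?_, ?_⟩
            · show _ ≤ e * GJ (N+1) ζ (t 0) (t (Fin.last (M+1))) M u
              rw [hGeq u hubox]
              exact hPl
            · show e * GJ (N+1) ζ (t 0) (t (Fin.last (M+1))) M u ≤ _
              rw [hGeq u hubox]
              exact hPu
          obtain ⟨hVnn, hSl, hSu⟩ := iterInt_sandwich (M+1)
            (fun u => e * GJ (N+1) ζ (t 0) (t (Fin.last (M+1))) M u) (vmd (M+1))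
            (continuous_const.mul hGc) (vmd_continuous (M+1))
            (c' * (2:ℝ)^(((M : ℤ) + 2) * k (N - M) - ((M : ℤ) + 1) * k (N - M - 1) - k (N + 1)))
            (C' * (2:ℝ)^(((M : ℤ) + 2) * k (N - M) - ((M : ℤ) + 1) * k (N - M - 1) - k (N + 1)))
            t hmono hhyp
          rw [iterInt_const_mul] at hSl hSu
          have hIc : iterInt (M+1) (GJ (N+1) ζ (t 0) (t (Fin.last (M+1))) M) t
              = iterInt (M+1) (Jit (N+1) ζ M) t :=
            iterInt_congr Set.ordConnected_Icc (M+1) _ _ hGeq t hbox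
          rw [hIc] at hSl hSu
          rw [iterInt_vmd] at hSl hSu hVnn
          -- bounds on the product of ρ factors
          have hρb := fun j : Fin (M+2) => hbρ (t j) (hti j)
          have hX2pos : (0:ℝ) < (2:ℝ)^(2*(k (N+1-(M+2)))
              - k ((N+1-(M+2))-1) - k ((N+1-(M+2))+1)) := by positivity
          have hfacpos : (0:ℝ) < (min c 1 ^ 2 / max C 1 ^ 2) *
              (2:ℝ)^(2*(k (N+1-(M+2))) - k ((N+1-(M+2))-1) - k ((N+1-(M+2))+1)) := by positivity
          have hconst : ∀ y : ℝ, y^(M+2) = ∏ _j : Fin (M+2), y := by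
            intro y
            rw [Finset.prod_const, Finset.card_univ, Fintype.card_fin]
          have hlowρ : ((min c 1 ^ 2 / max C 1 ^ 2) *
              (2:ℝ)^(2*(k (N+1-(M+2))) - k ((N+1-(M+2))-1) - k ((N+1-(M+2))+1)))^(M+2)
              ≤ ∏ j : Fin (M+2), (eρ * rhoF (N+1) ζ (N+1-(M+2)) (t j)) := by
            rw [hconst]
            exact Finset.prod_le_prod (fun j _ => hfacpos.le) (fun j _ => (hρb j).1)
          have hupρ : (∏ j : Fin (M+2), (eρ * rhoF (N+1) ζ (N+1-(M+2)) (t j)))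
              ≤ ((max C 1 ^ 2 / min c 1 ^ 2) *
              (2:ℝ)^(2*(k (N+1-(M+2))) - k ((N+1-(M+2))-1) - k ((N+1-(M+2))+1)))^(M+2) := by
            rw [hconst]
            exact Finset.prod_le_prod (fun j _ => le_trans hfacpos.le (hρb j).1)
              (fun j _ => (hρb j).2)
          have hprodsplit : (∏ j : Fin (M+2), (eρ * rhoF (N+1) ζ (N+1-(M+2)) (t j)))
              = eρ^(M+2) * ∏ j : Fin (M+2), rhoF (N+1) ζ (N+1-(M+2)) (t j) := by
            rw [Finset.prod_mul_distrib, Finset.prod_const, Finset.card_univ, Fintype.card_fin]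
          rw [hprodsplit] at hlowρ hupρ
          have hJ : Jit (N+1) ζ (M+1) t
              = (∏ j : Fin (M+2), rhoF (N+1) ζ (N+1-(M+2)) (t j))
                * iterInt (M+1) (Jit (N+1) ζ M) t := Jit_succ N ζ M t
          -- exponent bookkeeping
          have hEeq : (((M+1:ℕ) : ℤ) + 2) * k (N-(M+1)) - (((M+1:ℕ) : ℤ) + 1) * k (N-(M+1)-1)
                - k (N+1)
              = (((M:ℕ) : ℤ) + 2) * k (N-M) - (((M:ℕ) : ℤ) + 1) * k (N-M-1) - k (N+1)
                + ((M:ℤ)+2)*(2*(k (N+1-(M+2))) - k ((N+1-(M+2))-1) - k ((N+1-(M+2))+1)) := by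
            rw [show N-(M+1)-1 = (N+1-(M+2))-1 by omega, show N-(M+1) = N+1-(M+2) by omega,
              show N-M-1 = N+1-(M+2) by omega, show N-M = (N+1-(M+2))+1 by omega]
            push_cast
            ring
          have hpow : ((2:ℝ)^(2*(k (N+1-(M+2))) - k ((N+1-(M+2))-1) - k ((N+1-(M+2))+1)))^(M+2) * (2:ℝ)^((((M:ℕ) : ℤ) + 2) * k (N-M) - (((M:ℕ) : ℤ) + 1) * k (N-M-1) - k (N+1)) = (2:ℝ)^((((M+1:ℕ) : ℤ) + 2) * k (N-(M+1)) - (((M+1:ℕ) : ℤ) + 1) * k (N-(M+1)-1) - k (N+1)) := by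
            rw [hEeq, zpow_add₀ (two_ne_zero : (2:ℝ) ≠ 0)]
            rw [← zpow_natCast ((2:ℝ)^(2*(k (N+1-(M+2))) - k ((N+1-(M+2))-1) - k ((N+1-(M+2))+1))) (M+2), ← zpow_mul]
            rw [← zpow_add₀ (two_ne_zero : (2:ℝ) ≠ 0), ← zpow_add₀ (two_ne_zero : (2:ℝ) ≠ 0)]
            congr 1
            push_cast
            ring
          have hC'nn : (0:ℝ) ≤ C' := le_trans hc'.le hcC'
          constructor
          · calc c' * (∏ j : Fin (M+1), ((j : ℕ) + 1 : ℝ))⁻¹ * (min c 1 ^ 2 / max C 1 ^ 2)^(M+2)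
                  * (2:ℝ)^((((M+1:ℕ) : ℤ) + 2) * k (N-(M+1)) - (((M+1:ℕ) : ℤ) + 1) * k (N-(M+1)-1) - k (N+1)) * vmd (M+2) t
                = ((min c 1 ^ 2 / max C 1 ^ 2) * (2:ℝ)^(2*(k (N+1-(M+2))) - k ((N+1-(M+2))-1) - k ((N+1-(M+2))+1)))^(M+2) *
                    (c' * (2:ℝ)^((((M:ℕ) : ℤ) + 2) * k (N-M) - (((M:ℕ) : ℤ) + 1) * k (N-M-1) - k (N+1)) *
                      ((∏ j : Fin (M+1), ((j : ℕ) + 1 : ℝ))⁻¹ * vmd (M+2) t)) := by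
                  rw [← hpow]
                  ring
              _ ≤ (eρ^(M+2) * ∏ j : Fin (M+2), rhoF (N+1) ζ (N+1-(M+2)) (t j)) *
                    (c' * (2:ℝ)^((((M:ℕ) : ℤ) + 2) * k (N-M) - (((M:ℕ) : ℤ) + 1) * k (N-M-1) - k (N+1)) *
                      ((∏ j : Fin (M+1), ((j : ℕ) + 1 : ℝ))⁻¹ * vmd (M+2) t)) :=
                  mul_le_mul_of_nonneg_right hlowρ (mul_nonneg (by positivity) hVnn)
              _ ≤ (eρ^(M+2) * ∏ j : Fin (M+2), rhoF (N+1) ζ (N+1-(M+2)) (t j)) *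
                    (e * iterInt (M+1) (Jit (N+1) ζ M) t) :=
                  mul_le_mul_of_nonneg_left hSl (le_trans (by positivity) hlowρ)
              _ = (e * eρ^(M+2)) * Jit (N+1) ζ (M+1) t := by
                  rw [hJ]
                  ring
          · calc (e * eρ^(M+2)) * Jit (N+1) ζ (M+1) t
                = (eρ^(M+2) * ∏ j : Fin (M+2), rhoF (N+1) ζ (N+1-(M+2)) (t j)) *
                    (e * iterInt (M+1) (Jit (N+1) ζ M) t) := by
                  rw [hJ]
                  ring
              _ ≤ (eρ^(M+2) * ∏ j : Fin (M+2), rhoF (N+1) ζ (N+1-(M+2)) (t j)) *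
                    (C' * (2:ℝ)^((((M:ℕ) : ℤ) + 2) * k (N-M) - (((M:ℕ) : ℤ) + 1) * k (N-M-1) - k (N+1)) *
                      ((∏ j : Fin (M+1), ((j : ℕ) + 1 : ℝ))⁻¹ * vmd (M+2) t)) :=
                  mul_le_mul_of_nonneg_left hSu (le_trans (by positivity) hlowρ)
              _ ≤ ((max C 1 ^ 2 / min c 1 ^ 2) * (2:ℝ)^(2*(k (N+1-(M+2))) - k ((N+1-(M+2))-1) - k ((N+1-(M+2))+1)))^(M+2) *
                    (C' * (2:ℝ)^((((M:ℕ) : ℤ) + 2) * k (N-M) - (((M:ℕ) : ℤ) + 1) * k (N-M-1) - k (N+1)) *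
                      ((∏ j : Fin (M+1), ((j : ℕ) + 1 : ℝ))⁻¹ * vmd (M+2) t)) :=
                  mul_le_mul_of_nonneg_right hupρ
                    (mul_nonneg (mul_nonneg hC'nn (by positivity))
                      (mul_nonneg haMpos.le (vmd_nonneg hmono)))
              _ = C' * (∏ j : Fin (M+1), ((j : ℕ) + 1 : ℝ))⁻¹ * (max C 1 ^ 2 / min c 1 ^ 2)^(M+2)
                  * (2:ℝ)^((((M+1:ℕ) : ℤ) + 2) * k (N-(M+1)) - (((M+1:ℕ) : ℤ) + 1) * k (N-(M+1)-1) - k (N+1)) * vmd (M+2) t := by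
                  rw [← hpow]
                  ring
  intro M hM
  obtain ⟨c', C', e, hc', hcC', he, hP⟩ := main M hM
  refine ⟨c', C', hc', hcC', ?_⟩
  intro t hti
  have hms : Monotone (t ∘ Tuple.sort t) := Tuple.monotone_sort t
  have htsI : ∀ i, (t ∘ Tuple.sort t) i ∈ I := fun i => hti _
  obtain ⟨hl, hu⟩ := hP (t ∘ Tuple.sort t) hms htsI
  have hvnn : 0 ≤ vmd (M+1) (t ∘ Tuple.sort t) := vmd_nonneg hms
  have hEJnn : 0 ≤ e * Jit (N+1) ζ M (t ∘ Tuple.sort t) :=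
    le_trans (mul_nonneg (by positivity) hvnn) hl
  have habsJ : |Jit (N+1) ζ M (t ∘ Tuple.sort t)| = e * Jit (N+1) ζ M (t ∘ Tuple.sort t) := by
    rcases he with rfl|rfl
    · rw [one_mul] at hEJnn ⊢
      exact abs_of_nonneg hEJnn
    · have hle : Jit (N+1) ζ M (t ∘ Tuple.sort t) ≤ 0 := by linarith
      rw [abs_of_nonpos hle]
      ring
  have hJp := hJperm M hM t hti (Tuple.sort t)
  have hvp := vmd_abs_perm (M+1) t (Tuple.sort t)
  constructor
  · calc c' * (2:ℝ)^(((M : ℤ) + 2) * k (N - M) - ((M : ℤ) + 1) * k (N - M - 1) - k (N + 1)) * |vmd (M+1) t|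
        = c' * (2:ℝ)^(((M : ℤ) + 2) * k (N - M) - ((M : ℤ) + 1) * k (N - M - 1) - k (N + 1)) * vmd (M+1) (t ∘ Tuple.sort t) := by
          rw [← hvp, abs_of_nonneg hvnn]
      _ ≤ e * Jit (N+1) ζ M (t ∘ Tuple.sort t) := hl
      _ = |Jit (N+1) ζ M (t ∘ Tuple.sort t)| := habsJ.symm
      _ = |Jit (N+1) ζ M t| := hJp
  · calc |Jit (N+1) ζ M t| = |Jit (N+1) ζ M (t ∘ Tuple.sort t)| := hJp.symm
      _ = e * Jit (N+1) ζ M (t ∘ Tuple.sort t) := habsJ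
      _ ≤ C' * (2:ℝ)^(((M : ℤ) + 2) * k (N - M) - ((M : ℤ) + 1) * k (N - M - 1) - k (N + 1)) * vmd (M+1) (t ∘ Tuple.sort t) := hu
      _ = C' * (2:ℝ)^(((M : ℤ) + 2) * k (N - M) - ((M : ℤ) + 1) * k (N - M - 1) - k (N + 1)) * |vmd (M+1) t| := by
          rw [← hvp, abs_of_nonneg hvnn]
end

section
/- Let ζ ∈ C^n(I; ℝ^n) with all minors L_j (1 ≤ j ≤ n) nonvanishing on the interval I, and define f_{i,0} = ζ_i and f_{i,j} = f'_{i,j−1}/f'_{j,j−1} for 1 ≤ j ≤ i−1. Then for all valid i, j, f'_{i,j} = (L_{ζ_1⋯ζ_{j−1}} · L_{ζ_1⋯ζ_j ζ_i}) / (L_{ζ_1⋯ζ_j})², where L_{ζ_{i_1}⋯ζ_{i_l}}(t) denotes the determinant of the l×l matrix whose (p,q) entry is ζ_{i_p}^{(q)}(t), and L of the empty list is 1. -/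
/-- Generalized minor: for a choice of rows `ρ : Fin l → Fin n`,
`Lg n l ζ ρ t` is the determinant of the `l × l` matrix whose `(p, q)` entry is
`ζ_{ρ(p)}^{(q+1)}(t)` (the empty determinant being `1`). -/
noncomputable def Lg (n l : ℕ) (ζ : Fin n → ℝ → ℝ) (ρ : Fin l → Fin n) (t : ℝ) : ℝ :=
  Matrix.det (Matrix.of fun p q : Fin l => iteratedDeriv ((q : ℕ) + 1) (ζ (ρ p)) t)

/-- The iterated quotients `f_{i,j}` (1-based index `i`): `f_{i,0} = ζ_i` and
`f_{i,j} = f'_{i,j-1} / f'_{j,j-1}`. `ff n ζ j i = f_{i,j}`. -/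
noncomputable def ff (n : ℕ) (ζ : Fin n → ℝ → ℝ) : ℕ → ℕ → ℝ → ℝ
  | 0, i => fun t => if h : i - 1 < n then ζ ⟨i - 1, h⟩ t else 0
  | j + 1, i => fun t => deriv (ff n ζ j i) t / deriv (ff n ζ j (j + 1)) t

set_option linter.unusedSectionVars false
set_option linter.unusedVariables false


open Matrix Finset

namespace DJaux

variable {R : Type*} [CommRing R]

/-- column version of the cofactor expansion of a single-entry column. -/
theorem det_updateColumn_single {k : ℕ} (A : Matrix (Fin (k+1)) (Fin (k+1)) R) (i j : Fin (k+1)) :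
    det (A.updateCol j (Pi.single i 1)) =
      (-1) ^ ((i : ℕ) + (j : ℕ)) * det (A.submatrix i.succAbove j.succAbove) := by
  have h : A.updateCol j (Pi.single i 1) = (Aᵀ.updateRow j (Pi.single i 1))ᵀ := by
    rw [updateRow_transpose, transpose_transpose]
  rw [h, det_transpose, ← adjugate_apply, adjugate_fin_succ_eq_det_submatrix]
  rw [← det_transpose (Aᵀ.submatrix j.succAbove i.succAbove), transpose_submatrix,
    transpose_transpose, add_comm]

theorem updateColumn_comm {ι : Type*} [Fintype ι] [DecidableEq ι]
    (A : Matrix ι ι R) {p q : ι} (hpq : p ≠ q) (u v : ι → R) :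
    (A.updateCol p u).updateCol q v = (A.updateCol q v).updateCol p u := by
  ext a b
  simp only [updateCol_apply]
  rcases eq_or_ne b q with rfl | hbq
  · rw [if_pos rfl, if_neg (Ne.symm hpq), if_pos rfl]
  · rw [if_neg hbq, if_neg hbq]

section DJ

variable {m : ℕ}

private def pp (m : ℕ) : Fin (m + 2) := Fin.castSucc (Fin.last m)
private def qq (m : ℕ) : Fin (m + 2) := Fin.last (m + 1)

private lemma pp_ne_qq : pp m ≠ qq m := by
  simp [pp, qq, Fin.ext_iff]

private def NN (A : Matrix (Fin (m+2)) (Fin (m+2)) R) : Matrix (Fin (m+2)) (Fin (m+2)) R :=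
  ((1 : Matrix (Fin (m+2)) (Fin (m+2)) R).updateCol (pp m)
      (fun i => adjugate A i (pp m))).updateCol (qq m) (fun i => adjugate A i (qq m))

private lemma mul_NN (A : Matrix (Fin (m+2)) (Fin (m+2)) R) :
    A * NN A = (A.updateCol (pp m) (A.det • (Pi.single (pp m) 1 : Fin (m+2) → R))).updateCol (qq m)
      (A.det • (Pi.single (qq m) 1 : Fin (m+2) → R)) := by
  ext a b
  rcases eq_or_ne b (qq m) with rfl | hbq
  · have : (A * NN A) a (qq m) = (A * adjugate A) a (qq m) := by
      simp [Matrix.mul_apply, NN, updateCol_apply]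
    rw [this, mul_adjugate]
    simp [Pi.single_apply, Matrix.one_apply, updateCol_apply, eq_comm]
  · rcases eq_or_ne b (pp m) with rfl | hbp
    · have : (A * NN A) a (pp m) = (A * adjugate A) a (pp m) := by
        simp [Matrix.mul_apply, NN, updateCol_apply, pp_ne_qq]
      rw [this, mul_adjugate]
      simp [Pi.single_apply, Matrix.one_apply, updateCol_apply, pp_ne_qq, eq_comm]
    · have : (A * NN A) a b = ∑ l, A a l * (1 : Matrix (Fin (m+2)) (Fin (m+2)) R) l b := by
        simp only [Matrix.mul_apply, NN, updateCol_apply, if_neg hbq, if_neg hbp]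
      rw [this]
      simp [Matrix.one_apply, updateCol_apply, if_neg hbq, if_neg hbp, mul_comm]

private lemma det_update_single_single (A : Matrix (Fin (m+2)) (Fin (m+2)) R) :
    det ((A.updateCol (pp m) (Pi.single (pp m) 1)).updateCol (qq m)
        (Pi.single (qq m) 1)) =
      det (A.submatrix (Fin.castSucc ∘ Fin.castSucc) (Fin.castSucc ∘ Fin.castSucc)) := by
  rw [det_updateColumn_single _ (qq m) (qq m)]
  have e1 : Even ((qq m : ℕ) + (qq m : ℕ)) := ⟨_, rfl⟩
  rw [e1.neg_one_pow, one_mul]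
  have h2 : (A.updateCol (pp m) (Pi.single (pp m) 1)).submatrix
      (qq m).succAbove (qq m).succAbove =
      (A.submatrix (qq m).succAbove (qq m).succAbove).updateCol (Fin.last m)
        (Pi.single (Fin.last m) 1) := by
    ext a b
    have hq : (qq m).succAbove = Fin.castSucc := Fin.succAbove_last
    simp only [submatrix_apply, updateCol_apply, hq, Pi.single_apply]
    have hb : (Fin.castSucc b = pp m) ↔ (b = Fin.last m) := by
      rw [pp, Fin.castSucc_inj]
    have ha : (Fin.castSucc a = pp m) ↔ (a = Fin.last m) := by
      rw [pp, Fin.castSucc_inj]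
    simp [hb, ha]
  rw [h2, det_updateColumn_single _ (Fin.last m) (Fin.last m)]
  have e2 : Even ((Fin.last m : ℕ) + (Fin.last m : ℕ)) := ⟨_, rfl⟩
  have hq : (qq m).succAbove = Fin.castSucc := Fin.succAbove_last
  rw [e2.neg_one_pow, one_mul, submatrix_submatrix, hq, Fin.succAbove_last]

private lemma det_mul_NN (A : Matrix (Fin (m+2)) (Fin (m+2)) R) :
    det (A * NN A) = A.det * (A.det *
      det (A.submatrix (Fin.castSucc ∘ Fin.castSucc) (Fin.castSucc ∘ Fin.castSucc))) := by
  rw [mul_NN, det_updateCol_smul, updateColumn_comm _ pp_ne_qq,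
    det_updateCol_smul, updateColumn_comm _ (Ne.symm pp_ne_qq),
    det_update_single_single]

private lemma NN_apply_pp (A : Matrix (Fin (m+2)) (Fin (m+2)) R) (i : Fin (m+2)) :
    NN A i (pp m) = adjugate A i (pp m) := by
  rw [NN, updateCol_ne pp_ne_qq, updateCol_self]

private lemma NN_apply_qq (A : Matrix (Fin (m+2)) (Fin (m+2)) R) (i : Fin (m+2)) :
    NN A i (qq m) = adjugate A i (qq m) := by
  rw [NN, updateCol_self]

private lemma det_NN (A : Matrix (Fin (m+2)) (Fin (m+2)) R) :
    det (NN A) = adjugate A (pp m) (pp m) * adjugate A (qq m) (qq m) -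
      adjugate A (pp m) (qq m) * adjugate A (qq m) (pp m) := by
  have hcast : ∀ c : Fin m, (Fin.castAdd 2 c ≠ pp m) ∧ (Fin.castAdd 2 c ≠ qq m) := by
    intro c
    constructor <;> · intro h; rw [Fin.ext_iff] at h; simp [pp, qq] at h; omega
  have hdet : det (NN A) =
      det ((NN A).submatrix (finSumFinEquiv (m := m) (n := 2))
        (finSumFinEquiv (m := m) (n := 2))) :=
    (det_submatrix_equiv_self _ _).symm
  have hblock : (NN A).submatrix (finSumFinEquiv (m := m) (n := 2))
      (finSumFinEquiv (m := m) (n := 2)) = Matrix.fromBlocks 1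
      (Matrix.of fun r c => NN A (finSumFinEquiv (Sum.inl r)) (finSumFinEquiv (Sum.inr c))) 0
      (Matrix.of fun r c => NN A (finSumFinEquiv (Sum.inr r)) (finSumFinEquiv (Sum.inr c))) := by
    ext a b
    rcases a with r | r <;> rcases b with c | c <;>
      simp only [submatrix_apply, fromBlocks_apply₁₁, fromBlocks_apply₁₂,
        fromBlocks_apply₂₁, fromBlocks_apply₂₂, Matrix.of_apply, finSumFinEquiv_apply_left,
        finSumFinEquiv_apply_right]
    · rw [NN, updateCol_ne (hcast c).2, updateCol_ne (hcast c).1]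
      rw [Matrix.one_apply, Matrix.one_apply]
      simp [Fin.ext_iff]
    · rw [NN, updateCol_ne (hcast c).2, updateCol_ne (hcast c).1]
      rw [Matrix.one_apply_ne, Matrix.zero_apply]
      intro h; rw [Fin.ext_iff] at h; simp at h; omega
  have hinr0 : finSumFinEquiv (Sum.inr (0 : Fin 2)) = pp m := by
    rw [finSumFinEquiv_apply_right, Fin.ext_iff]; simp [pp]
  have hinr1 : finSumFinEquiv (Sum.inr (1 : Fin 2)) = qq m := by
    rw [finSumFinEquiv_apply_right, Fin.ext_iff]; simp [qq]
  rw [hdet, hblock, det_fromBlocks_zero₂₁, det_one, one_mul, det_fin_two]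
  simp only [Matrix.of_apply, hinr0, hinr1, NN_apply_pp, NN_apply_qq]

private lemma dj_domain {S : Type*} [CommRing S] [IsDomain S]
    (A : Matrix (Fin (m+2)) (Fin (m+2)) S) (hA : A.det ≠ 0) :
    A.det * det (A.submatrix (Fin.castSucc ∘ Fin.castSucc) (Fin.castSucc ∘ Fin.castSucc)) =
      det (A.submatrix (pp m).succAbove (pp m).succAbove) *
        det (A.submatrix (qq m).succAbove (qq m).succAbove) -
      det (A.submatrix (pp m).succAbove (qq m).succAbove) *
        det (A.submatrix (qq m).succAbove (pp m).succAbove) := by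
  have h1 := det_mul_NN A
  rw [det_mul, det_NN] at h1
  have h2 := (mul_left_cancel₀ hA h1).symm
  have hpv : ((pp m : ℕ)) = m := rfl
  have hqv : ((qq m : ℕ)) = m + 1 := rfl
  rw [adjugate_fin_succ_eq_det_submatrix, adjugate_fin_succ_eq_det_submatrix,
    adjugate_fin_succ_eq_det_submatrix, adjugate_fin_succ_eq_det_submatrix,
    hpv, hqv] at h2
  have s1 : ((-1 : S)) ^ (m + m) = 1 := Even.neg_one_pow ⟨_, rfl⟩
  have s2 : ((-1 : S)) ^ (m + 1 + (m + 1)) = 1 := Even.neg_one_pow ⟨_, rfl⟩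
  have s3 : ((-1 : S)) ^ (m + 1 + m) = -1 := Odd.neg_one_pow ⟨m, by ring⟩
  have s4 : ((-1 : S)) ^ (m + (m + 1)) = -1 := Odd.neg_one_pow ⟨m, by ring⟩
  rw [s1, s2, s3, s4] at h2
  linear_combination h2

theorem desnanot_jacobi (A : Matrix (Fin (m+2)) (Fin (m+2)) R) :
    A.det * det (A.submatrix (Fin.castSucc ∘ Fin.castSucc) (Fin.castSucc ∘ Fin.castSucc)) =
      det (A.submatrix (pp m).succAbove (pp m).succAbove) *
        det (A.submatrix (qq m).succAbove (qq m).succAbove) -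
      det (A.submatrix (pp m).succAbove (qq m).succAbove) *
        det (A.submatrix (qq m).succAbove (pp m).succAbove) := by
  let f : MvPolynomial (Fin (m+2) × Fin (m+2)) ℤ →+* R :=
    MvPolynomial.eval₂Hom (Int.castRingHom R) (fun p => A p.1 p.2)
  have hX : (Matrix.mvPolynomialX (Fin (m+2)) (Fin (m+2)) ℤ).map f = A := by
    have := Matrix.mvPolynomialX_map_eval₂ (R := ℤ) (Int.castRingHom R) A
    simpa [f, MvPolynomial.coe_eval₂Hom] using this
  have h := dj_domain (Matrix.mvPolynomialX (Fin (m+2)) (Fin (m+2)) ℤ)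
    (Matrix.det_mvPolynomialX_ne_zero _ ℤ)
  have h2 := congrArg f h
  simp only [_root_.map_mul, _root_.map_sub, RingHom.map_det, RingHom.mapMatrix_apply, ← Matrix.submatrix_map, hX] at h2
  exact h2

end DJ

end DJaux


open Matrix Finset

theorem hasDerivAt_det_aux {l : ℕ} (M : ℝ → Matrix (Fin l) (Fin l) ℝ)
    (M' : Matrix (Fin l) (Fin l) ℝ) (t : ℝ)
    (h : ∀ p q, HasDerivAt (fun s => M s p q) (M' p q) t) :
    HasDerivAt (fun s => (M s).det)
      (∑ q, ((M t).updateCol q (fun p => M' p q)).det) t := by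
  have key : ∀ σ : Equiv.Perm (Fin l),
      HasDerivAt (fun s => ∏ i, M s (σ i) i)
        (∑ i, (∏ j ∈ univ.erase i, M t (σ j) j) * M' (σ i) i) t := by
    intro σ
    have := HasDerivAt.fun_finsetProd (u := univ) (f := fun i s => M s (σ i) i)
      (f' := fun i => M' (σ i) i) (x := t) (fun i _ => h (σ i) i)
    simpa [smul_eq_mul] using this
  have H : HasDerivAt (fun s => ∑ σ : Equiv.Perm (Fin l),
        (Equiv.Perm.sign σ : ℝ) * ∏ i, M s (σ i) i)
      (∑ σ : Equiv.Perm (Fin l), (Equiv.Perm.sign σ : ℝ) *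
        ∑ i, (∏ j ∈ univ.erase i, M t (σ j) j) * M' (σ i) i) t :=
    HasDerivAt.fun_sum fun σ _ => (key σ).const_mul _
  have hfun : (fun s => (M s).det) = fun s => ∑ σ : Equiv.Perm (Fin l),
      (Equiv.Perm.sign σ : ℝ) * ∏ i, M s (σ i) i := funext fun s => Matrix.det_apply' _
  rw [hfun]
  convert H using 1
  have hup : ∀ q : Fin l, ((M t).updateCol q fun p => M' p q).det =
      ∑ σ : Equiv.Perm (Fin l), (Equiv.Perm.sign σ : ℝ) *
        (M' (σ q) q * ∏ j ∈ univ.erase q, M t (σ j) j) := by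
    intro q
    rw [Matrix.det_apply']
    refine Finset.sum_congr rfl fun σ _ => ?_
    congr 1
    rw [← Finset.mul_prod_erase _ _ (Finset.mem_univ q)]
    congr 1
    · simp [Matrix.updateCol_apply]
    · refine Finset.prod_congr rfl fun j hj => ?_
      simp [Matrix.updateCol_apply, (Finset.mem_erase.mp hj).1]
  simp only [hup]
  rw [Finset.sum_comm]
  refine Finset.sum_congr rfl fun σ _ => ?_
  rw [Finset.mul_sum]
  refine Finset.sum_congr rfl fun i _ => ?_
  ring

noncomputable def Lbump (n l : ℕ) (ζ : Fin n → ℝ → ℝ) (ρ : Fin l → Fin n) (t : ℝ) : ℝ :=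
  Matrix.det (Matrix.of fun p q : Fin l =>
    iteratedDeriv (if (q : ℕ) = l - 1 then l + 1 else (q : ℕ) + 1) (ζ (ρ p)) t)

theorem hasDerivAt_Lg (n : ℕ) (ζ : Fin n → ℝ → ℝ) (hζ : ∀ p, ContDiff ℝ (⊤ : ℕ∞) (ζ p))
    (l : ℕ) (ρ : Fin (l+1) → Fin n) (t : ℝ) :
    HasDerivAt (Lg n (l+1) ζ ρ) (Lbump n (l+1) ζ ρ t) t := by
  have hentry : ∀ (k : ℕ) (p : Fin n),
      HasDerivAt (iteratedDeriv k (ζ p)) (iteratedDeriv (k+1) (ζ p) t) t := by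
    intro k p
    have hd : Differentiable ℝ (iteratedDeriv k (ζ p)) :=
      (hζ p).differentiable_iteratedDeriv k (by exact_mod_cast ENat.coe_lt_top k)
    have := (hd t).hasDerivAt
    rwa [← iteratedDeriv_succ] at this
  have h := hasDerivAt_det_aux
    (fun s => Matrix.of fun p q : Fin (l+1) => iteratedDeriv ((q:ℕ)+1) (ζ (ρ p)) s)
    (Matrix.of fun p q : Fin (l+1) => iteratedDeriv ((q:ℕ)+2) (ζ (ρ p)) t) t
    (fun p q => hentry ((q:ℕ)+1) (ρ p))
  have hsum : (∑ q : Fin (l+1),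
      ((Matrix.of fun p q : Fin (l+1) => iteratedDeriv ((q:ℕ)+1) (ζ (ρ p)) t).updateCol q
        (fun p => (Matrix.of fun p q : Fin (l+1) => iteratedDeriv ((q:ℕ)+2) (ζ (ρ p)) t) p q)).det)
      = Lbump n (l+1) ζ ρ t := by
    rw [Finset.sum_eq_single (Fin.last l)]
    · congr 1
      ext p q
      rcases eq_or_ne q (Fin.last l) with rfl | hq
      · simp [Matrix.updateCol_apply]
      · have : (q : ℕ) ≠ l := fun hc => hq (Fin.ext hc)
        simp [Matrix.updateCol_apply, hq, this]
    · intro q _ hq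
      have hql : (q : ℕ) < l := by
        rcases Fin.lt_or_eq_of_le (Fin.le_last q) with h' | h'
        · exact h'
        · exact absurd h' hq
      refine Matrix.det_zero_of_column_eq (i := q) (j := ⟨(q:ℕ)+1, by omega⟩) ?_ ?_
      · intro hc; rw [Fin.ext_iff] at hc; simp at hc
      · intro k
        have h1 : (⟨(q:ℕ)+1, by omega⟩ : Fin (l+1)) ≠ q := by
          intro hc; rw [Fin.ext_iff] at hc; simp at hc
        simp [Matrix.updateCol_apply, h1]
    · intro hq; exact absurd (Finset.mem_univ _) hq
  rw [← hsum]
  exact h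


section FinHelpers

lemma snoc_apply' {α : Sort*} {k : ℕ} (f : Fin k → α) (x : α) (p : Fin (k+1)) :
    Fin.snoc (α := fun _ => α) f x p = if h : (p : ℕ) < k then f ⟨p, h⟩ else x := by
  induction p using Fin.lastCases with
  | last => rw [Fin.snoc_last, dif_neg (by simp)]
  | cast p =>
      have hp : ((Fin.castSucc p : Fin (k+1)) : ℕ) < k := by simp
      rw [Fin.snoc_castSucc, dif_pos hp]
      congr 1

lemma pp_succAbove_val {m : ℕ} (x : Fin (m+1)) :
    (((DJaux.pp m).succAbove x) : ℕ) = if (x : ℕ) < m then (x : ℕ) else (x : ℕ) + 1 := by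
  rcases lt_or_ge (x : ℕ) m with h | h
  · have hlt : Fin.castSucc x < DJaux.pp m := by
      rw [Fin.lt_def]; simpa [DJaux.pp]
    rw [Fin.succAbove_of_castSucc_lt _ _ hlt, if_pos h, Fin.coe_castSucc]
  · have hle : DJaux.pp m ≤ Fin.castSucc x := by
      rw [Fin.le_def]; simpa [DJaux.pp]
    rw [Fin.succAbove_of_le_castSucc _ _ hle, if_neg (not_lt.mpr h), Fin.val_succ]

lemma qq_succAbove_val {m : ℕ} (x : Fin (m+1)) :
    (((DJaux.qq m).succAbove x) : ℕ) = (x : ℕ) := by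
  have : (DJaux.qq m).succAbove = Fin.castSucc := Fin.succAbove_last
  rw [this, Fin.coe_castSucc]

lemma snoc_castLE_eq {n m : ℕ} (h1 : m ≤ n) (h2 : m + 1 ≤ n) (x : Fin n) (hx : (x : ℕ) = m) :
    Fin.snoc (Fin.castLE h1) x = Fin.castLE h2 := by
  funext p
  rw [snoc_apply']
  split_ifs with h
  · exact Fin.ext (by simp)
  · exact Fin.ext (by simp [hx]; omega)

end FinHelpers

theorem statement18B (n : ℕ) (ζ : Fin n → ℝ → ℝ) (hζ : ∀ p, ContDiff ℝ (⊤ : ℕ∞) (ζ p))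
    (I : Set ℝ) (hIopen : IsOpen I)
    (hL : ∀ (j : ℕ) (hj : j ≤ n), 1 ≤ j → ∀ t ∈ I, Lg n j ζ (Fin.castLE hj) t ≠ 0)
    (j' i : ℕ) (hij : j' + 1 < i) (hin : i ≤ n) (hjn : j' + 1 ≤ n)
    (hA : ∀ t ∈ I, ff n ζ (j' + 1) i t =
      Lg n (j'+1) ζ (Fin.snoc (Fin.castLE (show j' ≤ n by have := 0; omega)) (⟨i - 1, by have := 0; omega⟩ : Fin n)) t /
        Lg n (j'+1) ζ (Fin.castLE hjn) t) :
    ∀ t ∈ I, deriv (ff n ζ (j' + 1) i) t =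
      Lg n j' ζ (Fin.castLE (show j' ≤ n by have := 0; omega)) t *
          Lg n (j' + 2) ζ (Fin.snoc (Fin.castLE hjn) (⟨i - 1, by have := 0; omega⟩ : Fin n)) t /
        (Lg n (j' + 1) ζ (Fin.castLE hjn) t) ^ 2 := by
  intro t ht
  set σ : Fin (j'+1) → Fin n :=
    Fin.snoc (Fin.castLE (show j' ≤ n by have := 0; omega)) (⟨i - 1, by have := 0; omega⟩ : Fin n) with hσdef
  set ρ : Fin (j'+1) → Fin n := Fin.castLE hjn with hρdef
  set τ : Fin (j'+2) → Fin n :=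
    Fin.snoc (Fin.castLE hjn) (⟨i - 1, by have := 0; omega⟩ : Fin n) with hτdef
  have hσval : ∀ x : Fin (j'+1), ((σ x) : ℕ) = if (x : ℕ) < j' then (x : ℕ) else i - 1 := by
    intro x; rw [hσdef, snoc_apply']; split_ifs with h <;> simp
  have hτval : ∀ x : Fin (j'+2), ((τ x) : ℕ) = if (x : ℕ) < j' + 1 then (x : ℕ) else i - 1 := by
    intro x; rw [hτdef, snoc_apply']; split_ifs with h <;> simp
  have hev : ff n ζ (j' + 1) i =ᶠ[nhds t]
      (fun s => Lg n (j'+1) ζ σ s / Lg n (j'+1) ζ ρ s) :=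
    Filter.eventuallyEq_of_mem (hIopen.mem_nhds ht) hA
  rw [hev.deriv_eq]
  have hρt : Lg n (j'+1) ζ ρ t ≠ 0 := hL (j'+1) hjn (by omega) t ht
  rw [((hasDerivAt_Lg n ζ hζ j' σ t).fun_div (hasDerivAt_Lg n ζ hζ j' ρ t) hρt).deriv]
  -- the big (j'+2) × (j'+2) matrix
  set A : Matrix (Fin (j'+2)) (Fin (j'+2)) ℝ :=
    Matrix.of (fun p q : Fin (j'+2) => iteratedDeriv ((q : ℕ) + 1) (ζ (τ p)) t) with hAdef
  have hdetA : A.det = Lg n (j'+2) ζ τ t := rfl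
  have h_inner : (A.submatrix (Fin.castSucc ∘ Fin.castSucc) (Fin.castSucc ∘ Fin.castSucc)).det
      = Lg n j' ζ (Fin.castLE (show j' ≤ n by have := 0; omega)) t := by
    refine congrArg Matrix.det ?_
    ext p q
    simp only [hAdef, Matrix.submatrix_apply, Matrix.of_apply, Function.comp_apply]
    have hrow : τ (Fin.castSucc (Fin.castSucc p)) = Fin.castLE (show j' ≤ n by have := 0; omega) p := by
      rw [Fin.ext_iff, hτval]
      simp only [Fin.coe_castSucc, Fin.coe_castLE]
      rw [if_pos (by have := p.isLt; omega)]
    rw [hrow]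
    simp
  have h_qq : (A.submatrix (DJaux.qq j').succAbove (DJaux.qq j').succAbove).det
      = Lg n (j'+1) ζ ρ t := by
    refine congrArg Matrix.det ?_
    ext p q
    simp only [hAdef, Matrix.submatrix_apply, Matrix.of_apply]
    have hrow : τ ((DJaux.qq j').succAbove p) = ρ p := by
      rw [Fin.ext_iff, hτval, qq_succAbove_val]
      rw [if_pos p.isLt]
      simp [hρdef]
    rw [hrow]
    congr 2
    exact qq_succAbove_val q
  have h_pp : (A.submatrix (DJaux.pp j').succAbove (DJaux.pp j').succAbove).det
      = Lbump n (j'+1) ζ σ t := by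
    refine congrArg Matrix.det ?_
    ext p q
    simp only [hAdef, Matrix.submatrix_apply, Matrix.of_apply]
    have hrow : τ ((DJaux.pp j').succAbove p) = σ p := by
      rw [Fin.ext_iff, hτval, pp_succAbove_val, hσval]
      have := p.isLt
      split_ifs <;> omega
    rw [hrow]
    congr 2
    rw [pp_succAbove_val]
    have := q.isLt
    split_ifs <;> omega
  have h_pq : (A.submatrix (DJaux.pp j').succAbove (DJaux.qq j').succAbove).det
      = Lg n (j'+1) ζ σ t := by
    refine congrArg Matrix.det ?_
    ext p q
    simp only [hAdef, Matrix.submatrix_apply, Matrix.of_apply]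
    have hrow : τ ((DJaux.pp j').succAbove p) = σ p := by
      rw [Fin.ext_iff, hτval, pp_succAbove_val, hσval]
      have := p.isLt
      split_ifs <;> omega
    rw [hrow]
    congr 2
    exact qq_succAbove_val q
  have h_qp : (A.submatrix (DJaux.qq j').succAbove (DJaux.pp j').succAbove).det
      = Lbump n (j'+1) ζ ρ t := by
    refine congrArg Matrix.det ?_
    ext p q
    simp only [hAdef, Matrix.submatrix_apply, Matrix.of_apply]
    have hrow : τ ((DJaux.qq j').succAbove p) = ρ p := by
      rw [Fin.ext_iff, hτval, qq_succAbove_val]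
      rw [if_pos p.isLt]
      simp [hρdef]
    rw [hrow]
    congr 2
    rw [pp_succAbove_val]
    have := q.isLt
    split_ifs <;> omega
  have hdj := DJaux.desnanot_jacobi A
  rw [hdetA, h_inner, h_qq, h_pp, h_pq, h_qp] at hdj
  have hnum : Lbump n (j'+1) ζ σ t * Lg n (j'+1) ζ ρ t -
      Lg n (j'+1) ζ σ t * Lbump n (j'+1) ζ ρ t =
      Lg n j' ζ (Fin.castLE (show j' ≤ n by have := 0; omega)) t * Lg n (j'+2) ζ τ t := by
    rw [← hdj]; ring
  rw [hnum]

private lemma div_key {a b c d : ℝ} (ha : a ≠ 0) (hc : c ≠ 0) (hd : d ≠ 0) :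
    a * b / c ^ 2 / (a * d / c ^ 2) = b / d := by
  field_simp

theorem statement18A (n : ℕ) (ζ : Fin n → ℝ → ℝ) (hζ : ∀ p, ContDiff ℝ (⊤ : ℕ∞) (ζ p))
    (I : Set ℝ) (hIopen : IsOpen I)
    (hL : ∀ (j : ℕ) (hj : j ≤ n), 1 ≤ j → ∀ t ∈ I, Lg n j ζ (Fin.castLE hj) t ≠ 0) :
    ∀ (j' i : ℕ) (hij : j' + 1 < i) (hin : i ≤ n), ∀ t ∈ I,
      ff n ζ (j' + 1) i t =
        Lg n (j'+1) ζ (Fin.snoc (Fin.castLE (show j' ≤ n by have := 0; omega))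
            (⟨i - 1, by have := 0; omega⟩ : Fin n)) t /
          Lg n (j'+1) ζ (Fin.castLE (show j' + 1 ≤ n by have := 0; omega)) t := by
  intro j'
  induction j' with
  | zero =>
      intro i hij hin t ht
      have h0i : ff n ζ 0 i = ζ ⟨i - 1, by have := 0; omega⟩ := funext fun s => dif_pos (by omega)
      have h01 : ff n ζ 0 1 = ζ ⟨0, by have := 0; omega⟩ := by
        refine funext fun s => ?_
        show (if h : 1 - 1 < n then ζ ⟨1 - 1, h⟩ s else 0) = _
        rw [dif_pos (by omega)]
      show deriv (ff n ζ 0 i) t / deriv (ff n ζ 0 1) t = _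
      rw [h0i, h01]
      have hLg1 : ∀ (ρ1 : Fin 1 → Fin n) (s : ℝ), Lg n 1 ζ ρ1 s = deriv (ζ (ρ1 0)) s := by
        intro ρ1 s
        have h := Matrix.det_fin_one
          (Matrix.of fun p q : Fin 1 => iteratedDeriv ((q : ℕ) + 1) (ζ (ρ1 p)) s)
        rw [Lg, h]
        norm_num [iteratedDeriv_one]
      rw [hLg1, hLg1]
      have e1 : (Fin.snoc (Fin.castLE (show 0 ≤ n by have := 0; omega))
          (⟨i - 1, by have := 0; omega⟩ : Fin n) : Fin 1 → Fin n) 0 = ⟨i - 1, by have := 0; omega⟩ := by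
        rw [snoc_apply']
        simp
      rw [e1]
      rfl
  | succ m IH =>
      intro i hij hin t ht
      have hBnum := statement18B n ζ hζ I hIopen hL m i (by omega) hin (by omega)
        (IH i (by omega) hin)
      have hBden := statement18B n ζ hζ I hIopen hL m (m+2) (by omega) (by omega) (by omega)
        (IH (m+2) (by omega) (by omega))
      show deriv (ff n ζ (m+1) i) t / deriv (ff n ζ (m+1) (m+1+1)) t = _
      rw [hBnum t ht, hBden t ht]
      have e1 : (Fin.snoc (Fin.castLE (show m+1 ≤ n by have := 0; omega))
          (⟨(m+2) - 1, by have := 0; omega⟩ : Fin n) : Fin (m+2) → Fin n) =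
          Fin.castLE (show m+2 ≤ n by have := 0; omega) :=
        snoc_castLE_eq _ _ _ (by simp)
      rw [e1]
      have hLz : ∀ (j : ℕ) (hj : j ≤ n), Lg n j ζ (Fin.castLE hj) t ≠ 0 := by
        intro j hj
        rcases Nat.eq_zero_or_pos j with rfl | hpos
        · have h0 : Lg n 0 ζ (Fin.castLE hj) t = 1 := Matrix.det_fin_zero
          rw [h0]; norm_num
        · exact hL j hj hpos t ht
      rw [div_key (hLz m (by omega)) (hLz (m+1) (by omega)) (hLz (m+2) (by omega))]

/-- The inductive identity: if all minors `L_j` (`1 ≤ j ≤ n`) are nonvanishing on the open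
interval `I`, then for `1 ≤ j < i ≤ n` (here `j = j' + 1`),
`f'_{i,j} = L_{ζ_1 ⋯ ζ_{j-1}} · L_{ζ_1 ⋯ ζ_j ζ_i} / (L_{ζ_1 ⋯ ζ_j})²` on `I`. -/
theorem statement18 (n : ℕ) (ζ : Fin n → ℝ → ℝ) (hζ : ∀ p, ContDiff ℝ (⊤ : ℕ∞) (ζ p))
    (I : Set ℝ) (hIopen : IsOpen I) (hIconv : Convex ℝ I)
    (hL : ∀ (j : ℕ) (hj : j ≤ n), 1 ≤ j → ∀ t ∈ I, Lg n j ζ (Fin.castLE hj) t ≠ 0) :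
    ∀ (j' i : ℕ) (hij : j' + 1 < i) (hin : i ≤ n) (hjn : j' + 1 ≤ n), ∀ t ∈ I,
      deriv (ff n ζ (j' + 1) i) t =
        Lg n j' ζ (Fin.castLE (by omega : j' ≤ n)) t *
            Lg n (j' + 2) ζ
              (Fin.snoc (Fin.castLE hjn) (⟨i - 1, by omega⟩ : Fin n)) t /
          (Lg n (j' + 1) ζ (Fin.castLE hjn) t) ^ 2 := by
  intro j' i hij hin hjn t ht
  exact statement18B n ζ hζ I hIopen hL j' i hij hin hjn
    (statement18A n ζ hζ I hIopen hL j' i hij hin) t ht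
end
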